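/- arXiv:2010.02721 — 7 statements merged into one kernel-verified Lean document; each statement's English description precedes it below -/
import Mathlib

section
/- Let n ≥ 1 and let 0 ≤ ε ≤ 1/2. Set λ = 1 + log₂(1-ε). Then for every nonnegative function f on {0,1}^n that is not identically zero, log ‖T_ε f‖_∞ ≤ E_{T∼λ} log ‖E(f|T)‖_∞, i.e. log of the maximum of T_ε f is at most Σ_{T⊆[n]} λ^{|T|}(1-λ)^{n-|T|} · log ‖E(f|T)‖_∞. -/
/-- Hamming distance between two points of the boolean cube `{0,1}^n`. -/
def hamDist {n : ℕ} (x y : Fin n → Bool) : ℕ :=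
  (Finset.univ.filter fun i => x i ≠ y i).card

/-- The noise operator `T_ε` on functions on the boolean cube:
`(T_ε f)(x) = Σ_y ε^{|y-x|} (1-ε)^{n-|y-x|} f(y)`. -/
noncomputable def noiseOp {n : ℕ} (ε : ℝ) (f : (Fin n → Bool) → ℝ) : (Fin n → Bool) → ℝ :=
  fun x => ∑ y : Fin n → Bool, ε ^ hamDist x y * (1 - ε) ^ (n - hamDist x y) * f y

/-- The `ℓ_∞` norm on the boolean cube: `‖f‖_∞ = max_x |f(x)|`. -/
noncomputable def supNorm {n : ℕ} (f : (Fin n → Bool) → ℝ) : ℝ :=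
  Finset.univ.sup' Finset.univ_nonempty fun x => |f x|

/-- Conditional expectation of `f` given the coordinates in `T`. -/
noncomputable def condExp {n : ℕ} (f : (Fin n → Bool) → ℝ) (T : Finset (Fin n)) :
    (Fin n → Bool) → ℝ :=
  fun x =>
    (∑ y ∈ Finset.univ.filter (fun y : Fin n → Bool => ∀ i ∈ T, y i = x i), f y) /
      ((Finset.univ.filter (fun y : Fin n → Bool => ∀ i ∈ T, y i = x i)).card : ℝ)

namespace NoiseAux

open Finset

variable {n : ℕ}

/-- flip coordinate `i`. -/
def flip (i : Fin n) (x : Fin n → Bool) : Fin n → Bool := Function.update x i (!x i)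

lemma flip_same (i : Fin n) (x) : flip i x i = !x i := Function.update_self _ _ _

lemma flip_other {i j : Fin n} (h : j ≠ i) (x) : flip i x j = x j := Function.update_of_ne h _ _

lemma flip_flip (i : Fin n) (x) : flip i (flip i x) = x := by
  funext j
  by_cases h : j = i
  · subst h; rw [flip_same, flip_same, Bool.not_not]
  · rw [flip_other h, flip_other h]

lemma flip_inj (i : Fin n) : Function.Injective (flip i) := by
  intro a b h
  have := congrArg (flip i) h
  rwa [flip_flip, flip_flip] at this

/-- the subcube through `x` with free coordinates `S`. -/
def cube (S : Finset (Fin n)) (x : Fin n → Bool) : Finset (Fin n → Bool) :=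
  Finset.univ.filter fun y => ∀ i, i ∉ S → y i = x i

lemma mem_cube {S : Finset (Fin n)} {x y : Fin n → Bool} :
    y ∈ cube S x ↔ ∀ i, i ∉ S → y i = x i := by simp [cube]

lemma self_mem_cube (S : Finset (Fin n)) (x) : x ∈ cube S x := by simp [cube]

noncomputable def cubeSup (S : Finset (Fin n)) (h : (Fin n → Bool) → ℝ) (x : Fin n → Bool) : ℝ :=
  (cube S x).sup' ⟨x, self_mem_cube S x⟩ h

lemma le_cubeSup (S : Finset (Fin n)) (h : (Fin n → Bool) → ℝ) {x y} (hy : y ∈ cube S x) :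
    h y ≤ cubeSup S h x := Finset.le_sup' h hy

lemma cubeSup_nonneg {S : Finset (Fin n)} {h : (Fin n → Bool) → ℝ} (hh : ∀ y, 0 ≤ h y)
    (x : Fin n → Bool) : 0 ≤ cubeSup S h x :=
  le_trans (hh x) (le_cubeSup S h (self_mem_cube S x))

lemma cubeSup_le_of_subset {S S' : Finset (Fin n)} {x z : Fin n → Bool}
    (h : (Fin n → Bool) → ℝ) (hsub : cube S z ⊆ cube S' x) :
    cubeSup S h z ≤ cubeSup S' h x :=
  Finset.sup'_le _ _ fun y hy => le_cubeSup S' h (hsub hy)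

lemma cube_empty (x : Fin n → Bool) : cube (∅ : Finset (Fin n)) x = {x} := by
  ext y
  simp only [mem_cube, Finset.mem_singleton]
  constructor
  · intro h; funext j; exact h j (Finset.notMem_empty j)
  · rintro rfl j _; rfl

lemma cube_univ (x : Fin n → Bool) : cube (Finset.univ : Finset (Fin n)) x = Finset.univ := by
  ext y; simp [cube]

lemma cube_insert {i : Fin n} {S : Finset (Fin n)} (x : Fin n → Bool) :
    cube (insert i S) x = cube S x ∪ cube S (flip i x) := by
  ext y
  simp only [mem_cube, Finset.mem_union]
  constructor
  · intro h
    by_cases hy : y i = x i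
    · left; intro j hj
      by_cases hj' : j = i
      · subst hj'; exact hy
      · exact h j (by simp [hj, hj'])
    · right; intro j hj
      by_cases hj' : j = i
      · subst hj'; rw [flip_same]
        cases hx : x j <;> cases hyy : y j <;> simp_all
      · rw [flip_other hj']; exact h j (by simp [hj, hj'])
  · rintro (h | h) j hj
    · exact h j fun hjS => hj (Finset.mem_insert_of_mem hjS)
    · have hji : j ≠ i := fun e => hj (e ▸ Finset.mem_insert_self i S)
      rw [← flip_other hji x]
      exact h j fun hjS => hj (Finset.mem_insert_of_mem hjS)

lemma cube_disjoint {i : Fin n} {S : Finset (Fin n)} (hi : i ∉ S) (x : Fin n → Bool) :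
    Disjoint (cube S x) (cube S (flip i x)) := by
  rw [Finset.disjoint_left]
  intro y h1 h2
  have e1 := mem_cube.mp h1 i hi
  have e2 := mem_cube.mp h2 i hi
  rw [flip_same, e1] at e2
  simp at e2

/-- partial noise operator over the coordinates in `S`. -/
noncomputable def NS (ε : ℝ) (S : Finset (Fin n)) (f : (Fin n → Bool) → ℝ)
    (x : Fin n → Bool) : ℝ :=
  ∑ y ∈ cube S x, (∏ i ∈ S, if y i = x i then 1 - ε else ε) * f y

lemma NS_empty (ε : ℝ) (f : (Fin n → Bool) → ℝ) (x) : NS ε ∅ f x = f x := by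
  rw [NS, cube_empty, Finset.sum_singleton, Finset.prod_empty, one_mul]

lemma NS_nonneg {ε : ℝ} (hε0 : 0 ≤ ε) (hε1 : ε ≤ 1) (S : Finset (Fin n))
    {f : (Fin n → Bool) → ℝ} (hf : ∀ x, 0 ≤ f x) (x) : 0 ≤ NS ε S f x := by
  refine Finset.sum_nonneg fun y _ => mul_nonneg (Finset.prod_nonneg fun i _ => ?_) (hf y)
  split <;> linarith

lemma NS_insert {ε : ℝ} {i : Fin n} {S : Finset (Fin n)} (hi : i ∉ S)
    (f : (Fin n → Bool) → ℝ) (x) :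
    NS ε (insert i S) f x = (1 - ε) * NS ε S f x + ε * NS ε S f (flip i x) := by
  rw [NS, cube_insert, Finset.sum_union (cube_disjoint hi x)]
  congr 1
  · rw [NS, Finset.mul_sum]
    refine Finset.sum_congr rfl fun y hy => ?_
    rw [Finset.prod_insert hi, if_pos (mem_cube.mp hy i hi)]
    ring
  · rw [NS, Finset.mul_sum]
    refine Finset.sum_congr rfl fun y hy => ?_
    have hyi : y i = !x i := by rw [mem_cube.mp hy i hi, flip_same]
    rw [Finset.prod_insert hi, if_neg (by rw [hyi]; cases x i <;> simp)]
    have : ∀ j ∈ S, (if y j = x j then 1 - ε else ε) = (if y j = flip i x j then 1 - ε else ε) := by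
      intro j hj
      rw [flip_other (fun e => hi (by rw [← e]; exact hj)) x]
    rw [Finset.prod_congr rfl this]
    ring

lemma NS_flip {ε : ℝ} {i : Fin n} {S : Finset (Fin n)} (hi : i ∉ S)
    (f : (Fin n → Bool) → ℝ) (x) :
    NS ε S f (flip i x) = NS ε S (fun z => f (flip i z)) x := by
  rw [NS, NS]
  refine Finset.sum_nbij' (flip i) (flip i) ?_ ?_ ?_ ?_ ?_
  · intro y hy
    rw [mem_cube] at hy ⊢
    intro j hj
    by_cases hj' : j = i
    · subst hj'
      rw [flip_same, hy j hj, flip_same, Bool.not_not]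
    · rw [flip_other hj', hy j hj, flip_other hj']
  · intro z hz
    rw [mem_cube] at hz ⊢
    intro j hj
    by_cases hj' : j = i
    · subst hj'
      rw [flip_same, hz j hj, flip_same]
    · rw [flip_other hj', hz j hj, flip_other hj']
  · intro y _; exact flip_flip i y
  · intro z _; exact flip_flip i z
  · intro y hy
    rw [flip_flip]
    congr 1
    refine Finset.prod_congr rfl fun j hj => ?_
    have hji : j ≠ i := fun e => hi (e ▸ hj)
    rw [flip_other hji, flip_other hji]

lemma NS_univ (ε : ℝ) (f : (Fin n → Bool) → ℝ) (x) :
    NS ε (Finset.univ : Finset (Fin n)) f x = noiseOp ε f x := by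
  rw [NS, cube_univ, noiseOp]
  refine Finset.sum_congr rfl fun y _ => ?_
  congr 1
  rw [← Finset.prod_filter_mul_prod_filter_not Finset.univ (fun i => y i = x i)]
  have hd : (Finset.univ.filter fun i => ¬ (y i = x i)).card = hamDist x y := by
    unfold hamDist
    congr 1
    apply Finset.filter_congr
    intro i _
    simp [eq_comm, Ne]
  have hc : (Finset.univ.filter fun i => y i = x i).card = n - hamDist x y := by
    have h1 := Finset.card_filter_add_card_filter_not (s := (Finset.univ : Finset (Fin n)))
      (p := fun i => y i = x i)
    rw [Finset.card_univ, Fintype.card_fin] at h1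
    omega
  rw [Finset.prod_congr rfl (fun i hi => if_pos (Finset.mem_filter.mp hi).2),
    Finset.prod_congr rfl (fun i hi => if_neg (Finset.mem_filter.mp hi).2),
    Finset.prod_const, Finset.prod_const, hd, hc]
  ring

/-- the set of points matching `x` on `T`. -/
def matchSet (T : Finset (Fin n)) (x : Fin n → Bool) : Finset (Fin n → Bool) :=
  Finset.univ.filter fun y : Fin n → Bool => ∀ i ∈ T, y i = x i

lemma condExp_eq (f : (Fin n → Bool) → ℝ) (T : Finset (Fin n)) (x) :
    condExp f T x = (∑ y ∈ matchSet T x, f y) / ((matchSet T x).card : ℝ) := rfl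

lemma self_mem_matchSet (T : Finset (Fin n)) (x) : x ∈ matchSet T x := by
  simp [matchSet]

lemma condExp_nonneg {f : (Fin n → Bool) → ℝ} (hf : ∀ x, 0 ≤ f x) (T : Finset (Fin n)) (x) :
    0 ≤ condExp f T x := by
  rw [condExp_eq]
  exact div_nonneg (Finset.sum_nonneg fun y _ => hf y) (Nat.cast_nonneg _)

lemma condExp_univ (f : (Fin n → Bool) → ℝ) (x) :
    condExp f (Finset.univ : Finset (Fin n)) x = f x := by
  rw [condExp_eq]
  have : matchSet (Finset.univ : Finset (Fin n)) x = {x} := by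
    ext y
    simp only [matchSet, Finset.mem_filter, Finset.mem_univ, true_and, Finset.mem_singleton]
    constructor
    · intro h; funext j; exact h j trivial
    · rintro rfl j _; rfl
  rw [this, Finset.sum_singleton, Finset.card_singleton]
  norm_num

lemma condExp_pos {f : (Fin n → Bool) → ℝ} (hf : ∀ x, 0 ≤ f x) {x₁} (h1 : 0 < f x₁)
    (T : Finset (Fin n)) : 0 < condExp f T x₁ := by
  rw [condExp_eq]
  refine div_pos (lt_of_lt_of_le h1 ?_) ?_
  · exact Finset.single_le_sum (f := f) (fun y _ => hf y) (self_mem_matchSet T x₁)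
  · exact_mod_cast Finset.card_pos.mpr ⟨x₁, self_mem_matchSet T x₁⟩

lemma supNorm_pos {h : (Fin n → Bool) → ℝ} {x₁ : Fin n → Bool} (h1 : 0 < h x₁) :
    0 < supNorm h :=
  lt_of_lt_of_le (lt_of_lt_of_le h1 (le_abs_self _))
    (Finset.le_sup' (fun x => |h x|) (Finset.mem_univ x₁))

/-- averaging over coordinate `i` turns conditioning on `insert i V` into conditioning on `V`. -/
lemma condExp_avg {i : Fin n} {V : Finset (Fin n)} (hiV : i ∉ V) (f : (Fin n → Bool) → ℝ) (x) :
    condExp (fun z => (f z + f (flip i z)) / 2) (insert i V) x = condExp f V x := by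
  rw [condExp_eq, condExp_eq]
  set D := matchSet (insert i V) x with hD
  have hmemD : ∀ y, y ∈ D ↔ (y i = x i ∧ ∀ j ∈ V, y j = x j) := by
    intro y
    simp only [hD, matchSet, Finset.mem_filter, Finset.mem_univ, true_and,
      Finset.forall_mem_insert]
  have hmemflip : ∀ y, flip i y ∈ D ↔ ((!y i) = x i ∧ ∀ j ∈ V, y j = x j) := by
    intro y
    rw [hmemD, flip_same]
    constructor
    · rintro ⟨h1, h2⟩
      exact ⟨h1, fun j hj => by rw [← h2 j hj, flip_other (fun e => hiV (by rw [← e]; exact hj))]⟩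
    · rintro ⟨h1, h2⟩
      exact ⟨h1, fun j hj => by rw [flip_other (fun e => hiV (by rw [← e]; exact hj)), h2 j hj]⟩
  have hE : matchSet V x = D ∪ D.image (flip i) := by
    ext y
    simp only [Finset.mem_union, Finset.mem_image, matchSet, Finset.mem_filter, Finset.mem_univ,
      true_and]
    constructor
    · intro h
      by_cases hy : y i = x i
      · exact Or.inl ((hmemD y).mpr ⟨hy, h⟩)
      · refine Or.inr ⟨flip i y, ?_, flip_flip i y⟩
        refine (hmemflip y).mpr ⟨?_, h⟩
        cases hx : x i <;> cases hyy : y i <;> simp_all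
    · rintro (h | ⟨z, hz, rfl⟩)
      · exact fun j hj => ((hmemD y).mp h).2 j hj
      · intro j hj
        have hji : j ≠ i := fun e => hiV (by rw [← e]; exact hj)
        rw [flip_other hji]
        exact ((hmemD z).mp hz).2 j hj
  have hdisj : Disjoint D (D.image (flip i)) := by
    rw [Finset.disjoint_left]
    rintro y h1 h2
    obtain ⟨z, hz, rfl⟩ := Finset.mem_image.mp h2
    have e1 := ((hmemD z).mp hz).1
    have e2 := ((hmemflip z).mp h1).1
    rw [e1] at e2
    simp at e2
  have hcardim : (D.image (flip i)).card = D.card :=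
    Finset.card_image_of_injective D (flip_inj i)
  have hsum : ∑ y ∈ D, f (flip i y) = ∑ y ∈ D.image (flip i), f y :=
    (Finset.sum_image fun a _ b _ h => flip_inj i h).symm
  have hDpos : (0:ℝ) < D.card := by
    exact_mod_cast Finset.card_pos.mpr ⟨x, (hmemD x).mpr ⟨rfl, fun j _ => rfl⟩⟩
  have hsplit : ∑ y ∈ D, (f y + f (flip i y)) / 2 = (∑ y ∈ D, f y + ∑ y ∈ D, f (flip i y)) / 2 := by
    rw [← Finset.sum_add_distrib, Finset.sum_div]
  have hcard2 : (((D ∪ D.image (flip i)).card : ℕ) : ℝ) = 2 * D.card := by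
    rw [Finset.card_union_of_disjoint hdisj, hcardim]
    push_cast; ring
  rw [hE, Finset.sum_union hdisj, ← hsum, hcard2, hsplit]
  have hD0 : (D.card : ℝ) ≠ 0 := ne_of_gt hDpos
  field_simp

lemma step_aux {l ε : ℝ} (hl0 : 0 ≤ l) (hl1 : l ≤ 1) (hε : 1 - ε = 2 ^ (l - 1 : ℝ))
    {a b : ℝ} (hb0 : 0 ≤ b) (hba : b ≤ a) :
    (1 - ε) * a + ε * b ≤ a ^ (l : ℝ) * ((a + b) / 2) ^ (1 - l : ℝ) := by
  have ha0 : 0 ≤ a := hb0.trans hba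
  rcases eq_or_lt_of_le ha0 with h | ha
  · -- a = 0 hence b = 0
    have hb : b = 0 := le_antisymm (hba.trans h.symm.le) hb0
    rw [← h, hb]
    have : (1 - ε) * 0 + ε * 0 = 0 := by ring
    rw [this]
    exact mul_nonneg (Real.rpow_nonneg le_rfl l) (Real.rpow_nonneg (by norm_num) _)
  · set t := b / a with ht
    have ht0 : 0 ≤ t := div_nonneg hb0 ha0
    have ht1 : t ≤ 1 := div_le_one_of_le₀ hba ha0
    have hab : a * t = b := by rw [ht, mul_div_assoc']; exact mul_div_cancel_left₀ b (ne_of_gt ha)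
    have hc := Real.concaveOn_rpow (p := 1 - l) (by linarith) (by linarith)
    have hconc := hc.2 (show (1:ℝ)/2 ∈ Set.Ici (0:ℝ) by norm_num)
      (show (1:ℝ) ∈ Set.Ici (0:ℝ) by norm_num)
      (show (0:ℝ) ≤ 1 - t by linarith) ht0 (show (1 - t) + t = 1 by ring)
    have h12 : ((1:ℝ)/2) ^ (1 - l : ℝ) = 1 - ε := by
      rw [hε, one_div, Real.inv_rpow (by norm_num : (0:ℝ) ≤ 2), ← Real.rpow_neg (by norm_num),
        neg_sub]
    have h1 : ((1:ℝ)) ^ (1 - l : ℝ) = 1 := Real.one_rpow _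
    simp only [smul_eq_mul] at hconc
    rw [h12, h1] at hconc
    have harg : (1 - t) * ((1:ℝ)/2) + t * 1 = (1 + t) / 2 := by ring
    rw [harg] at hconc
    -- hconc : (1 - t) * (1 - ε) + t * 1 ≤ ((1 + t) / 2) ^ (1 - l)
    have e2 : a ^ (l : ℝ) * ((a + b) / 2) ^ (1 - l : ℝ) = a * ((1 + t) / 2) ^ (1 - l : ℝ) := by
      have hsplit : (a + b) / 2 = a * ((1 + t) / 2) := by
        rw [← hab]; ring
      rw [hsplit, Real.mul_rpow ha0 (by positivity), ← mul_assoc, ← Real.rpow_add ha]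
      norm_num
    rw [e2]
    have e3 : a * ((1 - t) * (1 - ε) + t * 1) = (1 - ε) * a + ε * b := by
      linear_combination ε * hab
    rw [← e3]
    exact mul_le_mul_of_nonneg_left hconc ha0

lemma onecoord {l ε : ℝ} (hl0 : 0 ≤ l) (hl1 : l ≤ 1) (hε : 1 - ε = 2 ^ (l - 1 : ℝ))
    {a b : ℝ} (ha0 : 0 ≤ a) (hb0 : 0 ≤ b) :
    (1 - ε) * a + ε * b ≤ (max a b) ^ (l : ℝ) * ((a + b) / 2) ^ (1 - l : ℝ) := by
  have hhalf : (1:ℝ)/2 ≤ 1 - ε := by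
    rw [hε]
    have : ((1:ℝ)/2) = 2 ^ (-1 : ℝ) := by
      rw [Real.rpow_neg_one]; norm_num
    rw [this]
    exact Real.rpow_le_rpow_left_iff (x := 2) (by norm_num) |>.mpr (by linarith)
  rcases le_total b a with h | h
  · rw [max_eq_left h]
    exact step_aux hl0 hl1 hε hb0 h
  · rw [max_eq_right h]
    have hswap : (1 - ε) * a + ε * b ≤ (1 - ε) * b + ε * a := by nlinarith
    refine hswap.trans ?_
    have := step_aux hl0 hl1 hε (a := b) (b := a) ha0 h
    rwa [add_comm b a] at this

lemma cubeSup_empty (h : (Fin n → Bool) → ℝ) (x) :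
    cubeSup (∅ : Finset (Fin n)) h x = h x := by
  apply le_antisymm
  · refine Finset.sup'_le _ _ fun y hy => ?_
    rw [cube_empty, Finset.mem_singleton] at hy
    rw [hy]
  · exact le_cubeSup _ _ (self_mem_cube _ x)

lemma cubeSup_univ {h : (Fin n → Bool) → ℝ} (hh : ∀ y, 0 ≤ h y) (x) :
    cubeSup (Finset.univ : Finset (Fin n)) h x = supNorm h := by
  apply le_antisymm
  · exact Finset.sup'_le _ _ fun y _ =>
      le_trans (le_abs_self _) (Finset.le_sup' (fun z => |h z|) (Finset.mem_univ y))
  · refine Finset.sup'_le _ _ fun y _ => ?_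
    rw [abs_of_nonneg (hh y)]
    exact le_cubeSup _ _ (by rw [cube_univ]; exact Finset.mem_univ y)

theorem main_ind {l ε : ℝ} (hl0 : 0 ≤ l) (hl1 : l ≤ 1) (hε0 : 0 ≤ ε)
    (hε : 1 - ε = 2 ^ (l - 1 : ℝ)) (S : Finset (Fin n)) :
    ∀ f : (Fin n → Bool) → ℝ, (∀ x, 0 ≤ f x) → ∀ x,
      NS ε S f x ≤ ∏ U ∈ S.powerset,
        cubeSup S (condExp f (U ∪ Sᶜ)) x ^ ((l ^ U.card * (1 - l) ^ (S.card - U.card) : ℝ)) := by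
  have h2pos : (0:ℝ) < 2 ^ (l - 1 : ℝ) := Real.rpow_pos_of_pos (by norm_num) _
  have hε1 : ε ≤ 1 := by nlinarith
  have hl1' : (0:ℝ) ≤ 1 - l := by linarith
  induction S using Finset.induction_on with
  | empty =>
    intro f hf x
    rw [NS_empty, Finset.powerset_empty, Finset.prod_singleton]
    have e : ((∅ : Finset (Fin n)) ∪ (∅ : Finset (Fin n))ᶜ) = Finset.univ := by
      rw [Finset.empty_union, Finset.compl_empty]
    have e2 : ((l ^ (∅ : Finset (Fin n)).card *
        (1 - l) ^ ((∅ : Finset (Fin n)).card - (∅ : Finset (Fin n)).card) : ℝ)) = 1 := by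
      simp
    rw [e, e2, Real.rpow_one, cubeSup_empty, condExp_univ]
  | @insert i S hiS IH =>
    intro f hf x
    have hAf0 : ∀ z, 0 ≤ (fun z => (f z + f (flip i z)) / 2) z := fun z =>
      div_nonneg (add_nonneg (hf z) (hf (flip i z))) (by norm_num)
    have hw0 : ∀ U : Finset (Fin n), (0:ℝ) ≤ l ^ U.card * (1 - l) ^ (S.card - U.card) :=
      fun U => mul_nonneg (pow_nonneg hl0 _) (pow_nonneg hl1' _)
    have hsub1 : cube S x ⊆ cube (insert i S) x := by
      rw [cube_insert]; exact Finset.subset_union_left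
    have hsub2 : cube S (flip i x) ⊆ cube (insert i S) x := by
      rw [cube_insert]; exact Finset.subset_union_right
    have hcs0 : ∀ (T : Finset (Fin n)) (W : Finset (Fin n)) (z),
        0 ≤ cubeSup W (condExp f T) z := fun T W z => cubeSup_nonneg (condExp_nonneg hf T) z
    -- the M bound
    have hM : max (NS ε S f x) (NS ε S f (flip i x)) ≤
        ∏ U ∈ S.powerset, cubeSup (insert i S) (condExp f (U ∪ Sᶜ)) x
          ^ ((l ^ U.card * (1 - l) ^ (S.card - U.card) : ℝ)) := by
      apply max_le
      · refine (IH f hf x).trans (Finset.prod_le_prod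
          (fun U _ => Real.rpow_nonneg (hcs0 _ _ _) _) (fun U _ => ?_))
        exact Real.rpow_le_rpow (hcs0 _ _ _) (cubeSup_le_of_subset _ hsub1) (hw0 U)
      · refine (IH f hf (flip i x)).trans (Finset.prod_le_prod
          (fun U _ => Real.rpow_nonneg (hcs0 _ _ _) _) (fun U _ => ?_))
        exact Real.rpow_le_rpow (hcs0 _ _ _) (cubeSup_le_of_subset _ hsub2) (hw0 U)
    -- the A bound
    have hA : NS ε S (fun z => (f z + f (flip i z)) / 2) x ≤
        ∏ U ∈ S.powerset, cubeSup (insert i S) (condExp f (U ∪ (insert i S)ᶜ)) x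
          ^ ((l ^ U.card * (1 - l) ^ (S.card - U.card) : ℝ)) := by
      refine (IH _ hAf0 x).trans (Finset.prod_le_prod
        (fun U _ => Real.rpow_nonneg (cubeSup_nonneg (condExp_nonneg hAf0 _) x) _)
        (fun U hU => ?_))
      have hiU : i ∉ U := fun hmem => hiS (Finset.mem_powerset.mp hU hmem)
      have hcond : condExp (fun z => (f z + f (flip i z)) / 2) (U ∪ Sᶜ)
          = condExp f (U ∪ (insert i S)ᶜ) := by
        have hiV : i ∉ U ∪ Sᶜ.erase i := by simp [hiU]
        have e1 : U ∪ Sᶜ = insert i (U ∪ Sᶜ.erase i) := by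
          rw [← Finset.union_insert, Finset.insert_erase (Finset.mem_compl.mpr hiS)]
        rw [e1, Finset.compl_insert]
        funext z
        exact condExp_avg hiV f z
      refine Real.rpow_le_rpow (cubeSup_nonneg (condExp_nonneg hAf0 _) x) ?_ (hw0 U)
      rw [hcond]
      exact cubeSup_le_of_subset _ hsub1
    -- combine
    have hNx := NS_nonneg hε0 hε1 S hf x
    have hNx' := NS_nonneg hε0 hε1 S hf (flip i x)
    have key := onecoord hl0 hl1 hε hNx hNx'
    have havg : (NS ε S f x + NS ε S f (flip i x)) / 2
        = NS ε S (fun z => (f z + f (flip i z)) / 2) x := by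
      rw [NS_flip hiS]
      simp only [NS]
      rw [← Finset.sum_add_distrib, Finset.sum_div]
      refine Finset.sum_congr rfl fun y _ => ?_
      ring
    rw [NS_insert hiS]
    refine key.trans ?_
    have hMnn : (0:ℝ) ≤ max (NS ε S f x) (NS ε S f (flip i x)) := le_max_of_le_left hNx
    have havgnn : (0:ℝ) ≤ (NS ε S f x + NS ε S f (flip i x)) / 2 := by positivity
    have step2 : (max (NS ε S f x) (NS ε S f (flip i x))) ^ (l:ℝ)
          * (((NS ε S f x + NS ε S f (flip i x)) / 2)) ^ ((1 - l):ℝ)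
        ≤ (∏ U ∈ S.powerset, cubeSup (insert i S) (condExp f (U ∪ Sᶜ)) x
            ^ ((l ^ U.card * (1 - l) ^ (S.card - U.card) : ℝ))) ^ (l:ℝ)
          * (∏ U ∈ S.powerset, cubeSup (insert i S) (condExp f (U ∪ (insert i S)ᶜ)) x
            ^ ((l ^ U.card * (1 - l) ^ (S.card - U.card) : ℝ))) ^ ((1 - l):ℝ) := by
      refine mul_le_mul (Real.rpow_le_rpow hMnn hM hl0)
        (Real.rpow_le_rpow havgnn (by rw [havg]; exact hA) hl1')
        (Real.rpow_nonneg havgnn _)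
        (Real.rpow_nonneg (Finset.prod_nonneg fun U _ => Real.rpow_nonneg (hcs0 _ _ _) _) _)
    refine step2.trans (le_of_eq ?_)
    -- now an algebraic identity
    have hrw1 : (∏ U ∈ S.powerset, cubeSup (insert i S) (condExp f (U ∪ Sᶜ)) x
          ^ ((l ^ U.card * (1 - l) ^ (S.card - U.card) : ℝ))) ^ (l:ℝ)
        = ∏ U ∈ S.powerset, cubeSup (insert i S) (condExp f (U ∪ Sᶜ)) x
          ^ ((l ^ U.card * (1 - l) ^ (S.card - U.card) : ℝ) * l) := by
      rw [← Real.finset_prod_rpow _ _ (fun U _ => Real.rpow_nonneg (hcs0 _ _ _) _) l]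
      exact Finset.prod_congr rfl fun U _ => (Real.rpow_mul (hcs0 _ _ _) _ _).symm
    have hrw2 : (∏ U ∈ S.powerset, cubeSup (insert i S) (condExp f (U ∪ (insert i S)ᶜ)) x
          ^ ((l ^ U.card * (1 - l) ^ (S.card - U.card) : ℝ))) ^ ((1-l):ℝ)
        = ∏ U ∈ S.powerset, cubeSup (insert i S) (condExp f (U ∪ (insert i S)ᶜ)) x
          ^ ((l ^ U.card * (1 - l) ^ (S.card - U.card) : ℝ) * (1 - l)) := by
      rw [← Real.finset_prod_rpow _ _ (fun U _ => Real.rpow_nonneg (hcs0 _ _ _) _) (1-l)]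
      exact Finset.prod_congr rfl fun U _ => (Real.rpow_mul (hcs0 _ _ _) _ _).symm
    rw [hrw1, hrw2]
    have hdisjU : Disjoint S.powerset (S.powerset.image (insert i)) := by
      rw [Finset.disjoint_left]
      intro V hV hV2
      obtain ⟨U, hU, rfl⟩ := Finset.mem_image.mp hV2
      exact hiS (Finset.mem_powerset.mp hV (Finset.mem_insert_self i U))
    have hinj : ∀ U1 ∈ S.powerset, ∀ U2 ∈ S.powerset, insert i U1 = insert i U2 → U1 = U2 := by
      intro U1 h1 U2 h2 he
      have i1 : i ∉ U1 := fun h => hiS (Finset.mem_powerset.mp h1 h)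
      have i2 : i ∉ U2 := fun h => hiS (Finset.mem_powerset.mp h2 h)
      rw [← Finset.erase_insert i1, ← Finset.erase_insert i2, he]
    rw [Finset.powerset_insert, Finset.prod_union hdisjU, Finset.prod_image hinj, mul_comm]
    congr 1
    · refine Finset.prod_congr rfl fun U hU => ?_
      have hUS : U ⊆ S := Finset.mem_powerset.mp hU
      congr 1
      rw [Finset.card_insert_of_notMem hiS]
      have h1 : S.card + 1 - U.card = (S.card - U.card) + 1 := by
        have := Finset.card_le_card hUS; omega
      rw [h1, pow_succ]
      ring
    · refine Finset.prod_congr rfl fun U hU => ?_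
      have hUS : U ⊆ S := Finset.mem_powerset.mp hU
      have hiU : i ∉ U := fun h => hiS (hUS h)
      have hset : insert i U ∪ (insert i S)ᶜ = U ∪ Sᶜ := by
        rw [Finset.compl_insert, Finset.insert_union, ← Finset.union_insert,
          Finset.insert_erase (Finset.mem_compl.mpr hiS)]
      rw [hset, Finset.card_insert_of_notMem hiS, Finset.card_insert_of_notMem hiU]
      have h2 : S.card + 1 - (U.card + 1) = S.card - U.card := by omega
      rw [h2]
      congr 1
      rw [pow_succ]
      ring

end NoiseAux

/-- **Theorem (main inequality, `ℓ_∞` version).** For `0 ≤ ε ≤ 1/2` and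
`λ = 1 + log₂(1-ε)`, for every nonnegative `f ≢ 0` on `{0,1}^n`,
`log ‖T_ε f‖_∞ ≤ E_{T∼λ} log ‖E(f|T)‖_∞`. -/
theorem noise_sup_le_avg_condExp (n : ℕ) (hn : 1 ≤ n)
    (ε : ℝ) (hε0 : 0 ≤ ε) (hε1 : ε ≤ 1 / 2)
    (f : (Fin n → Bool) → ℝ) (hf : ∀ x, 0 ≤ f x) (hf0 : f ≠ 0) :
    Real.log (supNorm (noiseOp ε f)) ≤
      ∑ T : Finset (Fin n),
        (1 + Real.logb 2 (1 - ε)) ^ T.card *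
          (1 - (1 + Real.logb 2 (1 - ε))) ^ (n - T.card) *
          Real.log (supNorm (condExp f T)) := by
    classical
  set l := 1 + Real.logb 2 (1 - ε) with hl
  have hεpos : (0:ℝ) < 1 - ε := by linarith
  have hkey : 1 - ε = 2 ^ (l - 1 : ℝ) := by
    have e : (l - 1 : ℝ) = Real.logb 2 (1 - ε) := by rw [hl]; ring
    rw [e, Real.rpow_logb (by norm_num) (by norm_num) hεpos]
  have hl0 : 0 ≤ l := by
    have h12 : ((1:ℝ)/2) = 2 ^ (-1 : ℝ) := by rw [Real.rpow_neg_one]; norm_num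
    have h2 : (2:ℝ) ^ (-1:ℝ) ≤ 2 ^ (l - 1 : ℝ) := by rw [← h12, ← hkey]; linarith
    have := (Real.rpow_le_rpow_left_iff (by norm_num : (1:ℝ) < 2)).mp h2
    linarith
  have hl1 : l ≤ 1 := by
    have h2 : (2:ℝ) ^ (l - 1 : ℝ) ≤ 2 ^ (0:ℝ) := by
      rw [Real.rpow_zero, ← hkey]; linarith
    have := (Real.rpow_le_rpow_left_iff (by norm_num : (1:ℝ) < 2)).mp h2
    linarith
  obtain ⟨x₁, hx₁⟩ := Function.ne_iff.mp hf0
  have hfx₁ : 0 < f x₁ := lt_of_le_of_ne (hf x₁) (Ne.symm hx₁)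
  have htermnn : ∀ x y : Fin n → Bool,
      0 ≤ ε ^ hamDist x y * (1 - ε) ^ (n - hamDist x y) * f y := fun x y =>
    mul_nonneg (mul_nonneg (pow_nonneg hε0 _) (pow_nonneg (by linarith) _)) (hf y)
  have hnn : ∀ x, 0 ≤ noiseOp ε f x := fun x =>
    Finset.sum_nonneg fun y _ => htermnn x y
  have hTx₁ : 0 < noiseOp ε f x₁ := by
    have hterm : (0:ℝ) < ε ^ hamDist x₁ x₁ * (1 - ε) ^ (n - hamDist x₁ x₁) * f x₁ := by
      have hdd : hamDist x₁ x₁ = 0 := by simp [hamDist]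
      rw [hdd]
      simp only [pow_zero, one_mul, Nat.sub_zero]
      exact mul_pos (pow_pos hεpos n) hfx₁
    exact lt_of_lt_of_le hterm (Finset.single_le_sum
      (f := fun y => ε ^ hamDist x₁ y * (1 - ε) ^ (n - hamDist x₁ y) * f y)
      (fun y _ => htermnn x₁ y) (Finset.mem_univ x₁))
  obtain ⟨x₀, _, hx₀⟩ := Finset.exists_mem_eq_sup'
    (Finset.univ_nonempty : (Finset.univ : Finset (Fin n → Bool)).Nonempty)
    (fun x => |noiseOp ε f x|)
  have hsup : supNorm (noiseOp ε f) = noiseOp ε f x₀ := by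
    rw [supNorm, hx₀, abs_of_nonneg (hnn x₀)]
  have hTpos : 0 < noiseOp ε f x₀ := by
    rw [← hsup]
    exact lt_of_lt_of_le hTx₁ (le_trans (le_abs_self _)
      (Finset.le_sup' (fun x => |noiseOp ε f x|) (Finset.mem_univ x₁)))
  have hcpos : ∀ T : Finset (Fin n), 0 < supNorm (condExp f T) := fun T =>
    NoiseAux.supNorm_pos (NoiseAux.condExp_pos hf hfx₁ T)
  have hmain := NoiseAux.main_ind hl0 hl1 hε0 hkey (Finset.univ : Finset (Fin n)) f hf x₀
  rw [NoiseAux.NS_univ] at hmain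
  have hprod : ∏ U ∈ (Finset.univ : Finset (Fin n)).powerset,
      NoiseAux.cubeSup Finset.univ (condExp f (U ∪ (Finset.univ : Finset (Fin n))ᶜ)) x₀
        ^ ((l ^ U.card * (1 - l) ^ ((Finset.univ : Finset (Fin n)).card - U.card) : ℝ))
      = ∏ T : Finset (Fin n), supNorm (condExp f T)
        ^ ((l ^ T.card * (1 - l) ^ (n - T.card) : ℝ)) := by
    rw [Finset.powerset_univ]
    refine Finset.prod_congr rfl fun T _ => ?_
    rw [Finset.compl_univ, Finset.union_empty,
      NoiseAux.cubeSup_univ (NoiseAux.condExp_nonneg hf T) x₀]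
    congr 2
    rw [Finset.card_univ, Fintype.card_fin]
  rw [hprod] at hmain
  have hlog := Real.log_le_log hTpos hmain
  rw [Real.log_prod (fun T _ => ne_of_gt (Real.rpow_pos_of_pos (hcpos T) _))] at hlog
  calc Real.log (supNorm (noiseOp ε f)) = Real.log (noiseOp ε f x₀) := by rw [hsup]
    _ ≤ ∑ T : Finset (Fin n),
        Real.log (supNorm (condExp f T) ^ ((l ^ T.card * (1 - l) ^ (n - T.card) : ℝ))) := hlog
    _ = ∑ T : Finset (Fin n),
        l ^ T.card * (1 - l) ^ (n - T.card) * Real.log (supNorm (condExp f T)) := by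
      refine Finset.sum_congr rfl fun T _ => ?_
      rw [Real.log_rpow (hcpos T)]
end

section
/- Let n ≥ 1, let q ≥ 2 be an integer, let 0 ≤ ε ≤ 1/2, and set λ = 1 + (1/(q-1))·log₂(ε^q + (1-ε)^q). If f is the characteristic function of a subcube of {0,1}^n, i.e. f(x) = 1 if x_i = a_i for all i ∈ K and f(x) = 0 otherwise, for some K ⊆ [n] and a ∈ {0,1}^K, then equality holds: log ‖T_ε f‖_q = Σ_{T⊆[n]} λ^{|T|}(1-λ)^{n-|T|} · log ‖E(f|T)‖_q. -/
/-- The `ℓ_q` norm with respect to the uniform measure on the boolean cube. -/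
noncomputable def lqNorm {n : ℕ} (q : ℕ) (f : (Fin n → Bool) → ℝ) : ℝ :=
  (((2 : ℝ) ^ n)⁻¹ * ∑ x : Fin n → Bool, |f x| ^ q) ^ ((1 : ℝ) / q)

open Finset

lemma sum_prod_bool {n : ℕ} (g : Fin n → Bool → ℝ) :
    ∑ x : Fin n → Bool, ∏ i, g i (x i) = ∏ i, (g i true + g i false) := by
  classical
  calc ∑ x : Fin n → Bool, ∏ i, g i (x i)
      = ∑ x ∈ Fintype.piFinset (fun _ : Fin n => (univ : Finset Bool)), ∏ i, g i (x i) := by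
        rw [Fintype.piFinset_univ]
    _ = ∏ i, ∑ b : Bool, g i b := (Finset.prod_univ_sum _ _).symm
    _ = ∏ i, (g i true + g i false) := by simp [Fintype.sum_bool]

lemma weight_eq_prod {n : ℕ} (ε : ℝ) (x y : Fin n → Bool) :
    ε ^ hamDist x y * (1 - ε) ^ (n - hamDist x y) =
      ∏ i, (if x i = y i then 1 - ε else ε) := by
  classical
  rw [Finset.prod_ite (f := fun _ => (1:ℝ) - ε) (g := fun _ => ε),
    Finset.prod_const, Finset.prod_const]
  have hcard : (univ.filter fun i => x i = y i).card = n - hamDist x y := by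
    have h := Finset.card_filter_add_card_filter_not
      (s := (univ : Finset (Fin n))) (p := fun i => x i = y i)
    simp only [Finset.card_univ, Fintype.card_fin] at h
    have : hamDist x y = (univ.filter fun i => ¬ x i = y i).card := rfl
    omega
  rw [hcard, show (univ.filter fun i => ¬ x i = y i).card = hamDist x y from rfl]; ring

lemma indicator_eq_prod {n : ℕ} (K : Finset (Fin n)) (a x : Fin n → Bool) :
    (if ∀ i ∈ K, x i = a i then (1:ℝ) else 0) =
      ∏ i, (if i ∈ K then (if x i = a i then (1:ℝ) else 0) else 1) := by
  classical
  rw [Finset.prod_ite_mem, Finset.univ_inter, Finset.prod_boole]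
  split_ifs <;> rfl

-- general "prod over K with const elsewhere" sum
lemma prod_if_mem {n : ℕ} (K : Finset (Fin n)) (c : Fin n → ℝ) :
    ∏ i, (if i ∈ K then c i else 1) = ∏ i ∈ K, c i := by
  rw [Finset.prod_ite_mem, Finset.univ_inter]

lemma noiseOp_subcube {n : ℕ} (ε : ℝ) (K : Finset (Fin n)) (a : Fin n → Bool)
    (f : (Fin n → Bool) → ℝ)
    (hf : ∀ x, f x = if ∀ i ∈ K, x i = a i then 1 else 0) (x : Fin n → Bool) :
    noiseOp ε f x = ∏ i ∈ K, (if x i = a i then 1 - ε else ε) := by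
  classical
  have step : ∀ y : Fin n → Bool,
      ε ^ hamDist x y * (1 - ε) ^ (n - hamDist x y) * f y =
        ∏ i, ((if x i = y i then 1 - ε else ε) *
          (if i ∈ K then (if y i = a i then (1:ℝ) else 0) else 1)) := by
    intro y
    rw [hf y, weight_eq_prod, indicator_eq_prod, Finset.prod_mul_distrib]
  calc noiseOp ε f x
      = ∑ y : Fin n → Bool, ∏ i, ((if x i = y i then 1 - ε else ε) *
          (if i ∈ K then (if y i = a i then (1:ℝ) else 0) else 1)) := by
        unfold noiseOp; exact Finset.sum_congr rfl (fun y _ => step y)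
    _ = ∏ i, (((if x i = true then 1 - ε else ε) *
          (if i ∈ K then (if true = a i then (1:ℝ) else 0) else 1)) +
          ((if x i = false then 1 - ε else ε) *
          (if i ∈ K then (if false = a i then (1:ℝ) else 0) else 1))) :=
        sum_prod_bool (fun i b => (if x i = b then 1 - ε else ε) *
          (if i ∈ K then (if b = a i then (1:ℝ) else 0) else 1))
    _ = ∏ i, (if i ∈ K then (if x i = a i then 1 - ε else ε) else 1) := by
        apply Finset.prod_congr rfl
        intro i _
        by_cases hK : i ∈ K <;> cases ha : a i <;> cases hx : x i <;>
          simp [hK, ha, hx] <;> ring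
    _ = ∏ i ∈ K, (if x i = a i then 1 - ε else ε) := prod_if_mem _ _

lemma prod_if_mem_const {n : ℕ} (K : Finset (Fin n)) (A B : ℝ) :
    ∏ i, (if i ∈ K then A else B) = A ^ K.card * B ^ (n - K.card) := by
  classical
  rw [Finset.prod_ite (f := fun _ => A) (g := fun _ => B), Finset.prod_const,
    Finset.prod_const]
  congr 2
  · simp
  · have : (Finset.univ.filter fun x => x ∉ K) = Kᶜ := by
      ext j; simp
    rw [this, Finset.card_compl]
    simp

lemma prod_if_mem' {n : ℕ} (K : Finset (Fin n)) (d : Fin n → ℝ) (B : ℝ) :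
    ∏ i, (if i ∈ K then d i else B) = (∏ i ∈ K, d i) * B ^ (n - K.card) := by
  classical
  have h1 : (Finset.univ.filter fun i => i ∈ K) = K := by ext j; simp
  have h2 : (Finset.univ.filter fun i => i ∉ K) = Kᶜ := by ext j; simp
  rw [Finset.prod_ite (f := d) (g := fun _ => B), h1, h2, Finset.prod_const,
    Finset.card_compl]
  simp

lemma sum_prod_mem_bool {n : ℕ} (K : Finset (Fin n)) (c : Fin n → Bool → ℝ) :
    ∑ x : Fin n → Bool, ∏ i ∈ K, c i (x i)
      = (∏ i ∈ K, (c i true + c i false)) * 2 ^ (n - K.card) := by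
  classical
  calc ∑ x : Fin n → Bool, ∏ i ∈ K, c i (x i)
      = ∑ x : Fin n → Bool, ∏ i, (if i ∈ K then c i (x i) else 1) :=
        Finset.sum_congr rfl fun x _ => (prod_if_mem K (fun i => c i (x i))).symm
    _ = ∏ i, ((if i ∈ K then c i true else 1) + (if i ∈ K then c i false else 1)) :=
        sum_prod_bool (fun i b => if i ∈ K then c i b else 1)
    _ = ∏ i, (if i ∈ K then c i true + c i false else 2) := by
        refine Finset.prod_congr rfl fun i _ => ?_
        split_ifs <;> norm_num
    _ = (∏ i ∈ K, (c i true + c i false)) * 2 ^ (n - K.card) := prod_if_mem' _ _ _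

lemma bern_prod {n : ℕ} (μ : ℝ) (x : Fin n → Bool) :
    μ ^ (Finset.univ.filter fun j => x j = true).card *
      (1 - μ) ^ (n - (Finset.univ.filter fun j => x j = true).card) =
      ∏ j, (if x j = true then μ else 1 - μ) := by
  classical
  rw [Finset.prod_ite (f := fun _ => μ) (g := fun _ => (1:ℝ) - μ), Finset.prod_const,
    Finset.prod_const]
  have h := Finset.card_filter_add_card_filter_not
    (s := (Finset.univ : Finset (Fin n))) (p := fun j => x j = true)
  simp only [Finset.card_univ, Fintype.card_fin] at h
  have h2 : (Finset.univ.filter fun j => ¬ x j = true).card =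
      n - (Finset.univ.filter fun j => x j = true).card := by omega
  rw [h2]

lemma bernoulli_sum {n : ℕ} (μ : ℝ) (i : Fin n) (A B : ℝ) :
    ∑ T : Finset (Fin n),
      μ ^ T.card * (1 - μ) ^ (n - T.card) * (if i ∈ T then A else B)
      = μ * A + (1 - μ) * B := by
  classical
  let e : (Fin n → Bool) ≃ Finset (Fin n) :=
    { toFun := fun x => Finset.univ.filter fun j => x j = true
      invFun := fun T j => decide (j ∈ T)
      left_inv := fun x => by ext j; simp
      right_inv := fun T => by ext j; simp }
  rw [← Equiv.sum_comp e]
  have step : ∀ x : Fin n → Bool,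
      μ ^ (e x).card * (1 - μ) ^ (n - (e x).card) * (if i ∈ e x then A else B)
        = ∏ j, ((if x j = true then μ else 1 - μ) *
            (if j = i then (if x j = true then A else B) else 1)) := by
    intro x
    rw [Finset.prod_mul_distrib]
    have h1 : (if i ∈ e x then A else B) =
        ∏ j, (if j = i then (if x j = true then A else B) else 1) := by
      rw [Finset.prod_ite_eq']
      simp [e]
    rw [← h1]
    have h2 : μ ^ (e x).card * (1 - μ) ^ (n - (e x).card) =
        ∏ j, (if x j = true then μ else 1 - μ) := bern_prod μ x
    rw [← h2]
  calc ∑ x : Fin n → Bool,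
        μ ^ (e x).card * (1 - μ) ^ (n - (e x).card) * (if i ∈ e x then A else B)
      = ∑ x : Fin n → Bool, ∏ j, ((if x j = true then μ else 1 - μ) *
          (if j = i then (if x j = true then A else B) else 1)) :=
        Finset.sum_congr rfl fun x _ => step x
    _ = ∏ j, (((if true = true then μ else 1 - μ) *
          (if j = i then (if true = true then A else B) else 1)) +
          ((if false = true then μ else 1 - μ) *
          (if j = i then (if false = true then A else B) else 1))) :=
        sum_prod_bool (fun j b => (if b = true then μ else 1 - μ) *
          (if j = i then (if b = true then A else B) else 1))
    _ = ∏ j, (if j = i then μ * A + (1 - μ) * B else 1) := by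
        refine Finset.prod_congr rfl fun j _ => ?_
        by_cases h : j = i <;> simp [h] <;> ring
    _ = μ * A + (1 - μ) * B := by rw [Finset.prod_ite_eq']; simp

lemma sum_indicator {n : ℕ} (S : Finset (Fin n)) (a : Fin n → Bool) :
    ∑ x : Fin n → Bool, (if ∀ i ∈ S, x i = a i then (1:ℝ) else 0) =
      2 ^ (n - S.card) := by
  classical
  calc ∑ x : Fin n → Bool, (if ∀ i ∈ S, x i = a i then (1:ℝ) else 0)
      = ∑ x : Fin n → Bool, ∏ i ∈ S, (if x i = a i then (1:ℝ) else 0) := by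
        refine Finset.sum_congr rfl fun x _ => ?_
        rw [indicator_eq_prod, prod_if_mem]
    _ = (∏ i ∈ S, ((if true = a i then (1:ℝ) else 0) + (if false = a i then (1:ℝ) else 0)))
          * 2 ^ (n - S.card) :=
        sum_prod_mem_bool S (fun i b => if b = a i then (1:ℝ) else 0)
    _ = 2 ^ (n - S.card) := by
        rw [Finset.prod_congr rfl (fun i _ => by cases h : a i <;> simp [h] :
          ∀ i ∈ S, _ = (1:ℝ)), Finset.prod_const_one, one_mul]

lemma card_filter_agree {n : ℕ} (T : Finset (Fin n)) (x : Fin n → Bool) :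
    (((Finset.univ.filter (fun y : Fin n → Bool => ∀ i ∈ T, y i = x i)).card : ℝ)) =
      2 ^ (n - T.card) := by
  classical
  rw [← Finset.sum_boole]
  exact sum_indicator T x

lemma condExp_subcube {n : ℕ} (K T : Finset (Fin n)) (a : Fin n → Bool)
    (f : (Fin n → Bool) → ℝ)
    (hf : ∀ x, f x = if ∀ i ∈ K, x i = a i then 1 else 0) (x : Fin n → Bool) :
    condExp f T x =
      (if ∀ i ∈ K ∩ T, x i = a i then (1:ℝ) else 0) * ((2:ℝ) ^ (K \ T).card)⁻¹ := by
  classical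
  have hN : (∑ y ∈ Finset.univ.filter (fun y : Fin n → Bool => ∀ i ∈ T, y i = x i), f y)
      = (if ∀ i ∈ K ∩ T, x i = a i then (1:ℝ) else 0) * 2 ^ (n - (T ∪ K).card) := by
    calc (∑ y ∈ Finset.univ.filter (fun y : Fin n → Bool => ∀ i ∈ T, y i = x i), f y)
        = ∑ y : Fin n → Bool,
            ((if ∀ i ∈ T, y i = x i then (1:ℝ) else 0) *
             (if ∀ i ∈ K, y i = a i then (1:ℝ) else 0)) := by
          rw [Finset.sum_filter]
          refine Finset.sum_congr rfl fun y _ => ?_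
          rw [hf y]; split_ifs <;> norm_num
      _ = ∑ y : Fin n → Bool, ∏ i, ((if i ∈ T then (if y i = x i then (1:ℝ) else 0) else 1) *
            (if i ∈ K then (if y i = a i then (1:ℝ) else 0) else 1)) := by
          refine Finset.sum_congr rfl fun y _ => ?_
          rw [indicator_eq_prod T x y, indicator_eq_prod K a y, Finset.prod_mul_distrib]
      _ = ∏ i, (((if i ∈ T then (if true = x i then (1:ℝ) else 0) else 1) *
            (if i ∈ K then (if true = a i then (1:ℝ) else 0) else 1)) +
            ((if i ∈ T then (if false = x i then (1:ℝ) else 0) else 1) *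
            (if i ∈ K then (if false = a i then (1:ℝ) else 0) else 1))) :=
          sum_prod_bool (fun i b => (if i ∈ T then (if b = x i then (1:ℝ) else 0) else 1) *
            (if i ∈ K then (if b = a i then (1:ℝ) else 0) else 1))
      _ = ∏ i, ((if i ∈ K ∩ T then (if x i = a i then (1:ℝ) else 0) else 1) *
            (if i ∈ T ∪ K then (1:ℝ) else 2)) := by
          refine Finset.prod_congr rfl fun i _ => ?_
          by_cases hT : i ∈ T <;> by_cases hK : i ∈ K <;>
            cases hx : x i <;> cases ha : a i <;>
            simp [hT, hK, hx, ha, Finset.mem_inter, Finset.mem_union] <;> norm_num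
      _ = (if ∀ i ∈ K ∩ T, x i = a i then (1:ℝ) else 0) * 2 ^ (n - (T ∪ K).card) := by
          rw [Finset.prod_mul_distrib, prod_if_mem, Finset.prod_boole,
            prod_if_mem_const, one_pow, one_mul]
          congr 1
          split_ifs <;> rfl
  have hc : n - T.card = (n - (T ∪ K).card) + (K \ T).card := by
    have h1 : (K \ T).card + T.card = (K ∪ T).card := Finset.card_sdiff_add_card K T
    have h2 : (T ∪ K).card = (K ∪ T).card := by rw [Finset.union_comm]
    have h3 : (T ∪ K).card ≤ n := by
      simpa using Finset.card_le_univ (T ∪ K)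
    have h4 : T.card ≤ (T ∪ K).card := Finset.card_le_card Finset.subset_union_left
    omega
  unfold condExp
  rw [hN, card_filter_agree, hc, pow_add]
  have h5 : ((2:ℝ) ^ (n - (T ∪ K).card)) ≠ 0 := by positivity
  have h6 : ((2:ℝ) ^ (K \ T).card) ≠ 0 := by positivity
  field_simp

lemma log_lq_noise {n : ℕ} (q : ℕ) (hq : 2 ≤ q) (ε : ℝ) (hε0 : 0 ≤ ε) (hε1 : ε ≤ 1 / 2)
    (K : Finset (Fin n)) (a : Fin n → Bool) (f : (Fin n → Bool) → ℝ)
    (hf : ∀ x, f x = if ∀ i ∈ K, x i = a i then 1 else 0) :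
    Real.log (lqNorm q (noiseOp ε f)) =
      ((K.card : ℝ) / q) * (Real.log (ε ^ q + (1 - ε) ^ q) - Real.log 2) := by
  classical
  have h1ε : (0:ℝ) < 1 - ε := by linarith
  have hA : (0:ℝ) < ε ^ q + (1 - ε) ^ q :=
    add_pos_of_nonneg_of_pos (pow_nonneg hε0 q) (pow_pos h1ε q)
  have hk : K.card ≤ n := by simpa using Finset.card_le_univ K
  have hsum : ∑ x : Fin n → Bool, |noiseOp ε f x| ^ q =
      (ε ^ q + (1 - ε) ^ q) ^ K.card * 2 ^ (n - K.card) := by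
    calc ∑ x : Fin n → Bool, |noiseOp ε f x| ^ q
        = ∑ x : Fin n → Bool, ∏ i ∈ K, (if x i = a i then 1 - ε else ε) ^ q := by
          refine Finset.sum_congr rfl fun x _ => ?_
          rw [noiseOp_subcube ε K a f hf x, Finset.abs_prod, ← Finset.prod_pow]
          refine Finset.prod_congr rfl fun i _ => ?_
          congr 1
          split_ifs <;> [exact abs_of_nonneg h1ε.le; exact abs_of_nonneg hε0]
      _ = (∏ i ∈ K, ((if true = a i then 1 - ε else ε) ^ q +
            (if false = a i then 1 - ε else ε) ^ q)) * 2 ^ (n - K.card) :=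
          sum_prod_mem_bool K (fun i b => (if b = a i then 1 - ε else ε) ^ q)
      _ = (ε ^ q + (1 - ε) ^ q) ^ K.card * 2 ^ (n - K.card) := by
          rw [Finset.prod_congr rfl
            (fun i _ => by cases h : a i <;> simp [h] <;> ring :
              ∀ i ∈ K, _ = ε ^ q + (1 - ε) ^ q), Finset.prod_const]
  have hpos : (0:ℝ) < ((2:ℝ) ^ n)⁻¹ *
      ((ε ^ q + (1 - ε) ^ q) ^ K.card * 2 ^ (n - K.card)) := by
    have := pow_pos hA K.card
    positivity
  have hq0 : (q:ℝ) ≠ 0 := by positivity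
  unfold lqNorm
  rw [hsum, Real.log_rpow hpos, Real.log_mul (by positivity) (by positivity),
    Real.log_mul (by positivity) (by positivity), Real.log_inv, Real.log_pow,
    Real.log_pow, Real.log_pow, Nat.cast_sub hk]
  ring

lemma log_lq_condExp {n : ℕ} (q : ℕ) (hq : 2 ≤ q) (K T : Finset (Fin n))
    (a : Fin n → Bool) (f : (Fin n → Bool) → ℝ)
    (hf : ∀ x, f x = if ∀ i ∈ K, x i = a i then 1 else 0) :
    Real.log (lqNorm q (condExp f T)) =
      -((((K ∩ T).card : ℝ) / q + ((K \ T).card : ℝ)) * Real.log 2) := by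
  classical
  have hq0 : q ≠ 0 := by omega
  have hm : (K ∩ T).card ≤ n := by simpa using Finset.card_le_univ (K ∩ T)
  have hsum : ∑ x : Fin n → Bool, |condExp f T x| ^ q =
      (((2:ℝ) ^ (K \ T).card)⁻¹) ^ q * 2 ^ (n - (K ∩ T).card) := by
    calc ∑ x : Fin n → Bool, |condExp f T x| ^ q
        = ∑ x : Fin n → Bool, (((2:ℝ) ^ (K \ T).card)⁻¹) ^ q *
            (if ∀ i ∈ K ∩ T, x i = a i then (1:ℝ) else 0) := by
          refine Finset.sum_congr rfl fun x _ => ?_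
          rw [condExp_subcube K T a f hf x]
          split_ifs with h
          · rw [one_mul, abs_of_nonneg (by positivity), mul_one]
          · rw [zero_mul, abs_zero, zero_pow hq0, mul_zero]
      _ = (((2:ℝ) ^ (K \ T).card)⁻¹) ^ q * 2 ^ (n - (K ∩ T).card) := by
          rw [← Finset.mul_sum, sum_indicator (K ∩ T) a]
  have hpos : (0:ℝ) < ((2:ℝ) ^ n)⁻¹ *
      ((((2:ℝ) ^ (K \ T).card)⁻¹) ^ q * 2 ^ (n - (K ∩ T).card)) := by positivity
  have hqR : (q:ℝ) ≠ 0 := by positivity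
  unfold lqNorm
  rw [hsum, Real.log_rpow hpos, Real.log_mul (by positivity) (by positivity),
    Real.log_mul (by positivity) (by positivity), Real.log_inv, Real.log_pow,
    Real.log_pow, Real.log_inv, Real.log_pow, Real.log_pow, Nat.cast_sub hm]
  field_simp
  ring

/-- **Theorem (tightness for subcubes, scalar noise).** If `f` is the characteristic
function of a subcube `{x : x_i = a_i for i ∈ K}`, then the main inequality holds
with equality. -/
theorem noise_lq_eq_avg_condExp_of_subcube (n : ℕ) (hn : 1 ≤ n) (q : ℕ) (hq : 2 ≤ q)
    (ε : ℝ) (hε0 : 0 ≤ ε) (hε1 : ε ≤ 1 / 2)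
    (K : Finset (Fin n)) (a : Fin n → Bool)
    (f : (Fin n → Bool) → ℝ)
    (hf : ∀ x, f x = if ∀ i ∈ K, x i = a i then 1 else 0) :
    Real.log (lqNorm q (noiseOp ε f)) =
      ∑ T : Finset (Fin n),
        (1 + 1 / ((q : ℝ) - 1) * Real.logb 2 (ε ^ q + (1 - ε) ^ q)) ^ T.card *
          (1 - (1 + 1 / ((q : ℝ) - 1) * Real.logb 2 (ε ^ q + (1 - ε) ^ q))) ^ (n - T.card) *
          Real.log (lqNorm q (condExp f T)) := by
  classical
  set lam := 1 + 1 / ((q : ℝ) - 1) * Real.logb 2 (ε ^ q + (1 - ε) ^ q) with hlam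
  have hL : Real.log 2 ≠ 0 := ne_of_gt (Real.log_pos one_lt_two)
  have hq0 : (q:ℝ) ≠ 0 := Nat.cast_ne_zero.mpr (by omega)
  have hq2 : (2:ℝ) ≤ (q:ℝ) := by exact_mod_cast hq
  have hq1 : (q:ℝ) - 1 ≠ 0 := by linarith
  have key : ∀ T : Finset (Fin n),
      Real.log (lqNorm q (condExp f T)) =
        ∑ i ∈ K, (if i ∈ T then -(Real.log 2 / q) else -(Real.log 2)) := by
    intro T
    rw [log_lq_condExp q hq K T a f hf,
      Finset.sum_ite (f := fun _ => -(Real.log 2 / (q:ℝ))) (g := fun _ => -(Real.log 2)),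
      Finset.sum_const, Finset.sum_const]
    have e1 : K.filter (fun i => i ∈ T) = K ∩ T := by ext i; simp
    have e2 : K.filter (fun i => i ∉ T) = K \ T := by ext i; simp
    rw [e1, e2, nsmul_eq_mul, nsmul_eq_mul]
    ring
  calc Real.log (lqNorm q (noiseOp ε f))
      = ((K.card:ℝ)/q) * (Real.log (ε ^ q + (1 - ε) ^ q) - Real.log 2) :=
        log_lq_noise q hq ε hε0 hε1 K a f hf
    _ = ∑ i ∈ K, (lam * (-(Real.log 2 / q)) + (1 - lam) * (-(Real.log 2))) := by
        rw [Finset.sum_const, nsmul_eq_mul, hlam, Real.logb]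
        field_simp
        ring
    _ = ∑ i ∈ K, ∑ T : Finset (Fin n), lam ^ T.card * (1 - lam) ^ (n - T.card) *
          (if i ∈ T then -(Real.log 2 / q) else -(Real.log 2)) :=
        Finset.sum_congr rfl fun i _ => (bernoulli_sum lam i _ _).symm
    _ = ∑ T : Finset (Fin n), ∑ i ∈ K, lam ^ T.card * (1 - lam) ^ (n - T.card) *
          (if i ∈ T then -(Real.log 2 / q) else -(Real.log 2)) := Finset.sum_comm
    _ = ∑ T : Finset (Fin n), lam ^ T.card * (1 - lam) ^ (n - T.card) *
          Real.log (lqNorm q (condExp f T)) := by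
        refine Finset.sum_congr rfl fun T _ => ?_
        rw [key T, Finset.mul_sum]
end

section
/- Let n ≥ 1, let q ≥ 2 be an integer, and let ε⃗ = (ε₁,…,ε_n) with 0 ≤ ε_i ≤ 1/2 for each i. Set λ_i = 1 + (1/(q-1))·log₂(ε_i^q + (1-ε_i)^q). Then for every nonnegative function f on {0,1}^n that is not identically zero, log ‖T_{ε⃗} f‖_q ≤ Σ_{T⊆[n]} (Π_{i∈T} λ_i)(Π_{j∉T} (1-λ_j)) · log ‖E(f|T)‖_q. -/
/-- The noise operator `T_ε⃗` with coordinatewise noise rates `ε⃗ = (ε₁,…,ε_n)`: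
`(T_ε⃗ f)(x) = Σ_y (Π_{i : y_i ≠ x_i} ε_i)(Π_{i : y_i = x_i} (1-ε_i)) f(y)`. -/
noncomputable def noiseOpVec {n : ℕ} (ε : Fin n → ℝ) (f : (Fin n → Bool) → ℝ) :
    (Fin n → Bool) → ℝ :=
  fun x => ∑ y : Fin n → Bool, (∏ i : Fin n, if y i = x i then 1 - ε i else ε i) * f y

open Finset Real

namespace NVC

section Core
open Set


/-! ### analytic core : basic polynomial functions -/

def Pf (j : ℕ) (t : ℝ) : ℝ := (1+t)^j + (1-t)^j
def Mf (j : ℕ) (t : ℝ) : ℝ := (1+t)^j - (1-t)^j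

lemma Pf_pos {j : ℕ} {t : ℝ} (h0 : 0 ≤ t) (h1 : t ≤ 1) : 0 < Pf j t := by
  have : (0:ℝ) < (1+t)^j := pow_pos (by linarith) j
  have : (0:ℝ) ≤ (1-t)^j := pow_nonneg (by linarith) j
  unfold Pf; linarith

lemma Mf_nonneg {j : ℕ} {t : ℝ} (h0 : 0 ≤ t) (h1 : t ≤ 1) : 0 ≤ Mf j t := by
  unfold Mf
  have := pow_le_pow_left₀ (by linarith : (0:ℝ) ≤ 1 - t) (by linarith : 1 - t ≤ 1 + t) j
  linarith

lemma Mf_pos {j : ℕ} (hj : 1 ≤ j) {t : ℝ} (h0 : 0 < t) (h1 : t ≤ 1) : 0 < Mf j t := by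
  unfold Mf
  have := pow_lt_pow_left₀ (by linarith : 1 - t < 1 + t) (by linarith : (0:ℝ) ≤ 1 - t)
    (by omega : j ≠ 0)
  linarith

lemma hasDerivAt_Pf {j : ℕ} (hj : 1 ≤ j) (t : ℝ) :
    HasDerivAt (Pf j) ((j:ℝ) * Mf (j-1) t) t := by
  have h1 : HasDerivAt (fun t : ℝ => (1+t)^j) ((j:ℝ) * (1+t)^(j-1) * 1) t :=
    (HasDerivAt.const_add 1 (hasDerivAt_id t)).pow j
  have h2 : HasDerivAt (fun t : ℝ => (1-t)^j) ((j:ℝ) * (1-t)^(j-1) * (-1)) t :=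
    (HasDerivAt.const_sub 1 (hasDerivAt_id t)).pow j
  have := h1.add h2
  refine this.congr_deriv (Eq.symm ?_)
  unfold Mf
  ring

lemma hasDerivAt_Mf {j : ℕ} (hj : 1 ≤ j) (t : ℝ) :
    HasDerivAt (Mf j) ((j:ℝ) * Pf (j-1) t) t := by
  have h1 : HasDerivAt (fun t : ℝ => (1+t)^j) ((j:ℝ) * (1+t)^(j-1) * 1) t :=
    (HasDerivAt.const_add 1 (hasDerivAt_id t)).pow j
  have h2 : HasDerivAt (fun t : ℝ => (1-t)^j) ((j:ℝ) * (1-t)^(j-1) * (-1)) t :=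
    (HasDerivAt.const_sub 1 (hasDerivAt_id t)).pow j
  have := h1.sub h2
  refine this.congr_deriv (Eq.symm ?_)
  unfold Pf
  ring

lemma continuous_Pf (j : ℕ) : Continuous (Pf j) := by
  unfold Pf; continuity

lemma continuous_Mf (j : ℕ) : Continuous (Mf j) := by
  unfold Mf; continuity

lemma K1 {q : ℕ} (hq : 2 ≤ q) (t : ℝ) :
    Pf (q-2) t * Pf q t = (Mf (q-1) t)^2 + 4*((1-t^2)^(q-2)) := by
  obtain ⟨m, rfl⟩ : ∃ m, q = m + 2 := ⟨q - 2, by omega⟩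
  have e1 : m + 2 - 2 = m := by omega
  have e2 : m + 2 - 1 = m + 1 := by omega
  rw [e1, e2]
  have e3 : (1 - t^2) = (1+t)*(1-t) := by ring
  rw [e3, mul_pow]
  unfold Pf Mf
  ring

lemma K2 {q : ℕ} (hq : 1 ≤ q) (t : ℝ) :
    Pf q t = Pf (q-1) t + t * Mf (q-1) t := by
  obtain ⟨m, rfl⟩ : ∃ m, q = m + 1 := ⟨q - 1, by omega⟩
  have e2 : m + 1 - 1 = m := by omega
  rw [e2]
  unfold Pf Mf
  ring

/-- the key AM-GM-type inequality `M_j ≤ j t P_{j-1}` -/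
lemma key_MP {j : ℕ} (hj : 1 ≤ j) {t : ℝ} (h0 : 0 ≤ t) (h1 : t ≤ 1) :
    Mf j t ≤ (j:ℝ) * t * Pf (j-1) t := by
  set u : ℝ := 1 + t with hu
  set v : ℝ := 1 - t with hv
  have hv0 : (0:ℝ) ≤ v := by rw [hv]; linarith
  have hvu : v ≤ u := by rw [hu, hv]; linarith
  have hu0 : (0:ℝ) ≤ u := le_trans hv0 hvu
  have hgeom : (∑ i ∈ Finset.range j, u ^ i * v ^ (j - 1 - i)) * (u - v) = u ^ j - v ^ j :=
    geom_sum₂_mul u v j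
  have huv : u - v = 2 * t := by rw [hu, hv]; ring
  -- pair bound : each pair sums to ≤ u^(j-1) + v^(j-1)
  have hpair : ∀ i ∈ Finset.range j,
      u ^ i * v ^ (j - 1 - i) + u ^ (j - 1 - i) * v ^ i ≤ u ^ (j-1) + v ^ (j-1) := by
    intro i hi
    have hij : i ≤ j - 1 := by
      have := Finset.mem_range.1 hi; omega
    have hsum : i + (j - 1 - i) = j - 1 := by omega
    have key : 0 ≤ (u ^ i - v ^ i) * (u ^ (j-1-i) - v ^ (j-1-i)) :=
      mul_nonneg (by have := pow_le_pow_left₀ hv0 hvu i; linarith)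
        (by have := pow_le_pow_left₀ hv0 hvu (j-1-i); linarith)
    have e1 : u ^ (j-1) = u ^ i * u ^ (j-1-i) := by rw [← pow_add, hsum]
    have e2 : v ^ (j-1) = v ^ i * v ^ (j-1-i) := by rw [← pow_add, hsum]
    nlinarith [key]
  have hsum2 : 2 * (∑ i ∈ Finset.range j, u ^ i * v ^ (j - 1 - i))
      ≤ (j:ℝ) * (u ^ (j-1) + v ^ (j-1)) := by
    have hrefl : ∑ i ∈ Finset.range j, u ^ (j - 1 - i) * v ^ (j - 1 - (j - 1 - i))
        = ∑ i ∈ Finset.range j, u ^ i * v ^ (j - 1 - i) :=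
      Finset.sum_range_reflect (fun i => u ^ i * v ^ (j - 1 - i)) j
    have hrec : ∀ i ∈ Finset.range j, u ^ (j - 1 - i) * v ^ (j - 1 - (j - 1 - i))
        = u ^ (j - 1 - i) * v ^ i := by
      intro i hi
      have : j - 1 - (j - 1 - i) = i := by
        have := Finset.mem_range.1 hi; omega
      rw [this]
    rw [Finset.sum_congr rfl hrec] at hrefl
    calc 2 * (∑ i ∈ Finset.range j, u ^ i * v ^ (j - 1 - i))
        = (∑ i ∈ Finset.range j, u ^ i * v ^ (j - 1 - i))
          + ∑ i ∈ Finset.range j, u ^ (j-1-i) * v ^ i := by rw [hrefl]; ring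
    _ = ∑ i ∈ Finset.range j, (u ^ i * v ^ (j - 1 - i) + u ^ (j-1-i) * v ^ i) := by
          rw [Finset.sum_add_distrib]
    _ ≤ ∑ i ∈ Finset.range j, (u ^ (j-1) + v ^ (j-1)) := Finset.sum_le_sum hpair
    _ = (j:ℝ) * (u ^ (j-1) + v ^ (j-1)) := by
          rw [Finset.sum_const, Finset.card_range, nsmul_eq_mul]
  have hMf : Mf j t = (∑ i ∈ Finset.range j, u ^ i * v ^ (j - 1 - i)) * (2*t) := by
    rw [← huv, hgeom]; rfl
  have hPf : Pf (j-1) t = u ^ (j-1) + v ^ (j-1) := rfl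
  rw [hMf, hPf]
  nlinarith [hsum2, h0]

/-! ### the two rational functions and their monotonicity -/

noncomputable def R1 (q : ℕ) (t : ℝ) : ℝ := t * Mf (q-1) t / Pf q t
noncomputable def R2 (q : ℕ) (t : ℝ) : ℝ :=
  4*((q:ℝ)-1) * t * (1-t^2)^(q-2) / (Pf q t * Mf (q-1) t)

section withq
variable {q : ℕ}

lemma cast_q1 (hq : 2 ≤ q) : ((q-1 : ℕ) : ℝ) = (q:ℝ) - 1 := by
  have : 1 ≤ q := by omega
  push_cast [Nat.cast_sub this]
  ring

lemma cast_q2 (hq : 2 ≤ q) : ((q-2 : ℕ) : ℝ) = (q:ℝ) - 2 := by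
  push_cast [Nat.cast_sub hq]
  ring

lemma hasDerivAt_R1 (hq : 2 ≤ q) {t : ℝ} (h0 : 0 ≤ t) (h1 : t ≤ 1) :
    HasDerivAt (R1 q)
      (((Mf (q-1) t + t * (((q:ℝ)-1) * Pf (q-2) t)) * Pf q t
        - t * Mf (q-1) t * ((q:ℝ) * Mf (q-1) t)) / (Pf q t)^2) t := by
  have hP : Pf q t ≠ 0 := ne_of_gt (Pf_pos h0 h1)
  have hM : HasDerivAt (Mf (q-1)) (((q-1 : ℕ):ℝ) * Pf ((q-1)-1) t) t :=
    hasDerivAt_Mf (by omega) t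
  have hq21 : (q-1)-1 = q-2 := by omega
  rw [hq21, cast_q1 hq] at hM
  have hnum : HasDerivAt (fun t => t * Mf (q-1) t)
      (1 * Mf (q-1) t + t * (((q:ℝ)-1) * Pf (q-2) t)) t :=
    (hasDerivAt_id t).mul hM
  have hPd : HasDerivAt (Pf q) ((q:ℝ) * Mf (q-1) t) t := hasDerivAt_Pf (by omega) t
  have := hnum.div hPd hP
  refine this.congr_deriv (Eq.symm ?_)
  rw [one_mul]

lemma R1_deriv_eq (hq : 2 ≤ q) {t : ℝ} (h0 : 0 ≤ t) (h1 : t ≤ 1) :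
    ((Mf (q-1) t + t * (((q:ℝ)-1) * Pf (q-2) t)) * Pf q t
        - t * Mf (q-1) t * ((q:ℝ) * Mf (q-1) t))
      = Mf (q-1) t * Pf (q-1) t + 4*((q:ℝ)-1)*t*(1-t^2)^(q-2) := by
  have k1 := K1 hq t
  have k2 := K2 (by omega : 1 ≤ q) t
  linear_combination ((q:ℝ)-1) * t * k1 + Mf (q-1) t * k2

lemma R1_mono (hq : 2 ≤ q) : MonotoneOn (R1 q) (Icc (0:ℝ) 1) := by
  apply monotoneOn_of_deriv_nonneg (convex_Icc 0 1)
  · -- continuity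
    apply ContinuousOn.div
    · exact (continuous_id.mul (continuous_Mf (q-1))).continuousOn
    · exact (continuous_Pf q).continuousOn
    · intro t ht
      exact ne_of_gt (Pf_pos ht.1 ht.2)
  · intro t ht
    rw [interior_Icc] at ht
    exact ((hasDerivAt_R1 hq (le_of_lt ht.1) (le_of_lt ht.2)).differentiableAt).differentiableWithinAt
  · intro t ht
    rw [interior_Icc] at ht
    rw [(hasDerivAt_R1 hq (le_of_lt ht.1) (le_of_lt ht.2)).deriv]
    rw [R1_deriv_eq hq (le_of_lt ht.1) (le_of_lt ht.2)]
    have h1 : 0 ≤ Mf (q-1) t := Mf_nonneg (le_of_lt ht.1) (le_of_lt ht.2)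
    have h2 : 0 < Pf (q-1) t := Pf_pos (le_of_lt ht.1) (le_of_lt ht.2)
    have h3 : 0 ≤ (1 - t^2) := by nlinarith [ht.1, ht.2]
    have h4 : (0:ℝ) ≤ 4*((q:ℝ)-1)*t*(1-t^2)^(q-2) := by
      have hc : (0:ℝ) ≤ (q:ℝ) - 1 := by
        have : (2:ℝ) ≤ (q:ℝ) := by exact_mod_cast hq
        linarith
      exact mul_nonneg (mul_nonneg (by linarith) (le_of_lt ht.1)) (pow_nonneg h3 (q-2))
    have h5 : 0 < (Pf q t)^2 := pow_pos (Pf_pos (le_of_lt ht.1) (le_of_lt ht.2)) 2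
    apply div_nonneg _ (le_of_lt h5)
    nlinarith

lemma hasDerivAt_R2 (hq : 2 ≤ q) {t : ℝ} (ht0 : 0 < t) (ht1 : t < 1) :
    HasDerivAt (R2 q)
      (((4*((q:ℝ)-1) * (1-t^2)^(q-2)
          + 4*((q:ℝ)-1) * t * (((q-2:ℕ):ℝ) * (1-t^2)^((q-2)-1) * (-(2*t)))) *
            (Pf q t * Mf (q-1) t)
        - 4*((q:ℝ)-1) * t * (1-t^2)^(q-2) *
            (((q:ℝ) * Mf (q-1) t) * Mf (q-1) t + Pf q t * (((q:ℝ)-1) * Pf (q-2) t)))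
        / (Pf q t * Mf (q-1) t)^2) t := by
  have hwd : HasDerivAt (fun t : ℝ => (1 - t^2)^(q-2))
      (((q-2:ℕ):ℝ) * (1-t^2)^((q-2)-1) * (-(2*t))) t := by
    have hin : HasDerivAt (fun t : ℝ => 1 - t^2) (-(2*t)) t := by
      have := (hasDerivAt_pow 2 t).const_sub 1
      refine this.congr_deriv (Eq.symm ?_)
      push_cast; ring
    exact hin.pow (q-2)
  have hnum : HasDerivAt (fun t : ℝ => 4*((q:ℝ)-1) * t * (1-t^2)^(q-2))
      (4*((q:ℝ)-1) * (1-t^2)^(q-2)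
        + 4*((q:ℝ)-1) * t * (((q-2:ℕ):ℝ) * (1-t^2)^((q-2)-1) * (-(2*t)))) t := by
    have hlin : HasDerivAt (fun t : ℝ => 4*((q:ℝ)-1) * t) (4*((q:ℝ)-1)) t := by
      simpa using (hasDerivAt_id t).const_mul (4*((q:ℝ)-1))
    have := hlin.mul hwd
    exact this
  have hden : HasDerivAt (fun t : ℝ => Pf q t * Mf (q-1) t)
      (((q:ℝ) * Mf (q-1) t) * Mf (q-1) t + Pf q t * (((q:ℝ)-1) * Pf (q-2) t)) t := by
    have hM : HasDerivAt (Mf (q-1)) (((q-1 : ℕ):ℝ) * Pf ((q-1)-1) t) t :=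
      hasDerivAt_Mf (by omega) t
    have hq21 : (q-1)-1 = q-2 := by omega
    rw [hq21, cast_q1 hq] at hM
    exact (hasDerivAt_Pf (by omega) t).mul hM
  have hPM : Pf q t * Mf (q-1) t ≠ 0 :=
    ne_of_gt (mul_pos (Pf_pos (le_of_lt ht0) (le_of_lt ht1))
      (Mf_pos (by omega) ht0 (le_of_lt ht1)))
  exact hnum.div hden hPM

lemma R2_deriv_nonpos (hq : 2 ≤ q) {t : ℝ} (ht0 : 0 < t) (ht1 : t < 1) :
    ((4*((q:ℝ)-1) * (1-t^2)^(q-2)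
          + 4*((q:ℝ)-1) * t * (((q-2:ℕ):ℝ) * (1-t^2)^((q-2)-1) * (-(2*t)))) *
            (Pf q t * Mf (q-1) t)
        - 4*((q:ℝ)-1) * t * (1-t^2)^(q-2) *
            (((q:ℝ) * Mf (q-1) t) * Mf (q-1) t + Pf q t * (((q:ℝ)-1) * Pf (q-2) t)))
        / (Pf q t * Mf (q-1) t)^2 ≤ 0 := by
  apply div_nonpos_of_nonpos_of_nonneg _ (sq_nonneg _)
  have hP := Pf_pos (j := q) (le_of_lt ht0) (le_of_lt ht1)
  have hM := Mf_pos (j := q-1) (by omega) ht0 (le_of_lt ht1)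
  have hP2 := Pf_pos (j := q-2) (le_of_lt ht0) (le_of_lt ht1)
  have hw : (0:ℝ) ≤ 1 - t^2 := by nlinarith
  have hwp : (0:ℝ) ≤ (1-t^2)^(q-2) := pow_nonneg hw _
  have hwp1 : (0:ℝ) ≤ (1-t^2)^((q-2)-1) := pow_nonneg hw _
  have hq1 : (0:ℝ) ≤ (q:ℝ)-1 := by
    have : (2:ℝ) ≤ (q:ℝ) := by exact_mod_cast hq
    linarith
  have hq2 : (0:ℝ) ≤ ((q-2:ℕ):ℝ) := Nat.cast_nonneg _
  have hKEY : Mf (q-1) t ≤ ((q:ℝ)-1) * t * Pf (q-2) t := by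
    have := key_MP (j := q-1) (by omega) (le_of_lt ht0) (le_of_lt ht1)
    rwa [cast_q1 hq, show (q-1)-1 = q-2 by omega] at this
  have hu'le : 4*((q:ℝ)-1) * (1-t^2)^(q-2)
        + 4*((q:ℝ)-1) * t * (((q-2:ℕ):ℝ) * (1-t^2)^((q-2)-1) * (-(2*t)))
      ≤ 4*((q:ℝ)-1) * (1-t^2)^(q-2) := by
    have he : 4*((q:ℝ)-1) * t * (((q-2:ℕ):ℝ) * (1-t^2)^((q-2)-1) * (-(2*t)))
        = -(8*((q:ℝ)-1) * ((q-2:ℕ):ℝ) * (t^2) * (1-t^2)^((q-2)-1)) := by ring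
    have hnn : (0:ℝ) ≤ 8*((q:ℝ)-1) * ((q-2:ℕ):ℝ) * (t^2) * (1-t^2)^((q-2)-1) := by
      have := sq_nonneg t
      exact mul_nonneg (mul_nonneg (mul_nonneg (by linarith) hq2) (sq_nonneg t)) hwp1
    linarith [he ▸ le_refl (4*((q:ℝ)-1) * t * (((q-2:ℕ):ℝ) * (1-t^2)^((q-2)-1) * (-(2*t))))]
  have hstep1 : (4*((q:ℝ)-1) * (1-t^2)^(q-2)) * (Pf q t * Mf (q-1) t)
      ≤ (4*((q:ℝ)-1) * t * (1-t^2)^(q-2)) * (((q:ℝ) * Mf (q-1) t) * Mf (q-1) t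
          + Pf q t * (((q:ℝ)-1) * Pf (q-2) t)) := by
    have hA : (4*((q:ℝ)-1) * (1-t^2)^(q-2)) * (Pf q t * Mf (q-1) t)
        ≤ (4*((q:ℝ)-1) * (1-t^2)^(q-2)) * (Pf q t * (((q:ℝ)-1) * t * Pf (q-2) t)) := by
      apply mul_le_mul_of_nonneg_left _ (by positivity)
      exact mul_le_mul_of_nonneg_left hKEY (le_of_lt hP)
    have hB : (4*((q:ℝ)-1) * (1-t^2)^(q-2)) * (Pf q t * (((q:ℝ)-1) * t * Pf (q-2) t))
        ≤ (4*((q:ℝ)-1) * t * (1-t^2)^(q-2)) * (((q:ℝ) * Mf (q-1) t) * Mf (q-1) t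
          + Pf q t * (((q:ℝ)-1) * Pf (q-2) t)) := by
      have hqM : (0:ℝ) ≤ (q:ℝ) * Mf (q-1) t * Mf (q-1) t := by positivity
      have hiden : (4*((q:ℝ)-1) * t * (1-t^2)^(q-2)) * (((q:ℝ) * Mf (q-1) t) * Mf (q-1) t
            + Pf q t * (((q:ℝ)-1) * Pf (q-2) t))
          = (4*((q:ℝ)-1) * (1-t^2)^(q-2)) * (Pf q t * (((q:ℝ)-1) * t * Pf (q-2) t))
            + (4*((q:ℝ)-1) * t * (1-t^2)^(q-2)) * ((q:ℝ) * Mf (q-1) t * Mf (q-1) t) := by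
        ring
      have hnn2 : (0:ℝ) ≤ (4*((q:ℝ)-1) * t * (1-t^2)^(q-2)) *
          ((q:ℝ) * Mf (q-1) t * Mf (q-1) t) := by
        exact mul_nonneg (mul_nonneg (mul_nonneg (by linarith) (le_of_lt ht0)) hwp) hqM
      linarith [hiden]
    linarith
  nlinarith [mul_le_mul_of_nonneg_right hu'le (le_of_lt (mul_pos hP hM)), hstep1]

lemma R2_anti (hq : 2 ≤ q) : AntitoneOn (R2 q) (Ioc (0:ℝ) 1) := by
  apply antitoneOn_of_deriv_nonpos (convex_Ioc 0 1)
  · apply ContinuousOn.div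
    · apply Continuous.continuousOn
      have h : Continuous (fun t : ℝ => (1 - t^2)^(q-2)) := by continuity
      continuity
    · exact ((continuous_Pf q).mul (continuous_Mf (q-1))).continuousOn
    · intro t ht
      exact ne_of_gt (mul_pos (Pf_pos (le_of_lt ht.1) ht.2)
        (Mf_pos (by omega) ht.1 ht.2))
  · intro t ht
    rw [interior_Ioc] at ht
    exact (hasDerivAt_R2 hq ht.1 ht.2).differentiableAt.differentiableWithinAt
  · intro t ht
    rw [interior_Ioc] at ht
    rw [(hasDerivAt_R2 hq ht.1 ht.2).deriv]
    exact R2_deriv_nonpos hq ht.1 ht.2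

noncomputable def mfun (q : ℕ) (t : ℝ) : ℝ := 1 - R1 q t + R2 q t

lemma R2_nonneg (hq : 2 ≤ q) {t : ℝ} (h0 : 0 < t) (h1 : t ≤ 1) : 0 ≤ R2 q t := by
  unfold R2
  have hP := Pf_pos (j := q) (le_of_lt h0) h1
  have hM := Mf_pos (j := q-1) (by omega) h0 h1
  have hq1 : (0:ℝ) ≤ (q:ℝ)-1 := by
    have : (2:ℝ) ≤ (q:ℝ) := by exact_mod_cast hq
    linarith
  have hw : (0:ℝ) ≤ 1 - t^2 := by nlinarith
  apply div_nonneg _ (le_of_lt (mul_pos hP hM))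
  exact mul_nonneg (mul_nonneg (by linarith) (le_of_lt h0)) (pow_nonneg hw _)

lemma R1_pos (hq : 2 ≤ q) {t : ℝ} (h0 : 0 < t) (h1 : t ≤ 1) : 0 < R1 q t := by
  unfold R1
  exact div_pos (mul_pos h0 (Mf_pos (by omega) h0 h1)) (Pf_pos (le_of_lt h0) h1)

lemma R1_lt_one (hq : 2 ≤ q) {t : ℝ} (h0 : 0 < t) (h1 : t ≤ 1) : R1 q t < 1 := by
  unfold R1
  rw [div_lt_one (Pf_pos (le_of_lt h0) h1)]
  have k2 := K2 (by omega : 1 ≤ q) t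
  have := Pf_pos (j := q-1) (le_of_lt h0) h1
  linarith

lemma mfun_pos (hq : 2 ≤ q) {t : ℝ} (h0 : 0 < t) (h1 : t ≤ 1) : 0 < mfun q t := by
  unfold mfun
  have := R1_lt_one hq h0 h1
  have := R2_nonneg hq h0 h1
  linarith

lemma mfun_anti (hq : 2 ≤ q) : AntitoneOn (mfun q) (Ioc (0:ℝ) 1) := by
  intro x hx y hy hxy
  unfold mfun
  have h1 : R1 q x ≤ R1 q y :=
    R1_mono hq ⟨le_of_lt hx.1, hx.2⟩ ⟨le_of_lt hy.1, hy.2⟩ hxy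
  have h2 : R2 q y ≤ R2 q x := R2_anti hq hx hy hxy
  linarith

lemma hasDerivAt_R1m (hq : 2 ≤ q) {t : ℝ} (ht0 : 0 < t) (ht1 : t < 1) :
    HasDerivAt (R1 q) (R1 q t / t * mfun q t) t := by
  have h := hasDerivAt_R1 hq (le_of_lt ht0) (le_of_lt ht1)
  rw [R1_deriv_eq hq (le_of_lt ht0) (le_of_lt ht1)] at h
  convert h using 1
  have hP : Pf q t ≠ 0 := ne_of_gt (Pf_pos (le_of_lt ht0) (le_of_lt ht1))
  have hM : Mf (q-1) t ≠ 0 := ne_of_gt (Mf_pos (by omega) ht0 (le_of_lt ht1))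
  have ht : t ≠ 0 := ne_of_gt ht0
  have k2 := K2 (by omega : 1 ≤ q) t
  simp only [mfun, R1, R2]
  field_simp
  rw [k2]
  ring

/-! ### the log of φ -/

noncomputable def Lq (q : ℕ) (t : ℝ) : ℝ := Real.log (Pf q t / 2)

lemma Pf_gt_two (hq : 2 ≤ q) {t : ℝ} (h0 : 0 < t) (h1 : t ≤ 1) : 2 < Pf q t := by
  have hsc := strictConvexOn_pow hq
  have hx : (1+t) ∈ Ici (0:ℝ) := by simp; linarith
  have hy : (1-t) ∈ Ici (0:ℝ) := by simp; linarith
  have hxy : (1+t) ≠ (1-t) := by intro h; linarith [h]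
  have h := hsc.2 hx hy hxy (by norm_num : (0:ℝ) < 1/2) (by norm_num : (0:ℝ) < 1/2)
    (by norm_num)
  have he : (1/2 : ℝ) • (1+t) + (1/2 : ℝ) • (1-t) = 1 := by
    simp only [smul_eq_mul]; ring
  rw [he] at h
  simp only [one_pow, smul_eq_mul] at h
  unfold Pf
  linarith

lemma Pf_ge_two (hq : 2 ≤ q) {t : ℝ} (h0 : 0 ≤ t) (h1 : t ≤ 1) : 2 ≤ Pf q t := by
  rcases eq_or_lt_of_le h0 with rfl | h0'
  · unfold Pf; norm_num
  · exact le_of_lt (Pf_gt_two hq h0' h1)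

lemma Lq_pos (hq : 2 ≤ q) {t : ℝ} (h0 : 0 < t) (h1 : t ≤ 1) : 0 < Lq q t := by
  apply Real.log_pos
  have := Pf_gt_two hq h0 h1
  linarith

lemma Lq_nonneg (hq : 2 ≤ q) {t : ℝ} (h0 : 0 ≤ t) (h1 : t ≤ 1) : 0 ≤ Lq q t := by
  apply Real.log_nonneg
  have := Pf_ge_two hq h0 h1
  linarith

lemma Lq_zero : Lq q 0 = 0 := by
  unfold Lq Pf
  norm_num

lemma Lq_one (hq : 2 ≤ q) : Lq q 1 = ((q:ℝ) - 1) * Real.log 2 := by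
  unfold Lq Pf
  have h0 : (0:ℝ)^q = 0 := zero_pow (by omega)
  have h2 : ((1:ℝ)+1)^q = 2^q := by norm_num
  have h3 : ((1:ℝ)-1)^q = 0 := by norm_num [zero_pow (show q ≠ 0 by omega)]
  rw [h2, h3, add_zero]
  have h4 : (2:ℝ)^q / 2 = 2^(q-1) := by
    rw [div_eq_iff (by norm_num : (2:ℝ) ≠ 0), ← pow_succ]
    congr 1
    omega
  rw [h4, Real.log_pow, cast_q1 hq]

lemma Lq_continuousOn : ContinuousOn (Lq q) (Icc (0:ℝ) 1) := by
  apply ContinuousOn.log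
  · exact ((continuous_Pf q).div_const 2).continuousOn
  · intro t ht
    have := Pf_pos (j := q) ht.1 ht.2
    positivity

lemma hasDerivAt_Lq {t : ℝ} (hq : 2 ≤ q) (h0 : 0 ≤ t) (h1 : t ≤ 1) :
    HasDerivAt (Lq q) ((q:ℝ) * Mf (q-1) t / Pf q t) t := by
  have hP : Pf q t / 2 ≠ 0 := by
    have := Pf_pos (j := q) h0 h1
    positivity
  have h := ((hasDerivAt_Pf (show 1 ≤ q by omega) t).div_const 2).log hP
  refine h.congr_deriv (Eq.symm ?_)
  have := Pf_pos (j := q) h0 h1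
  field_simp

lemma hasDerivAt_Lq' {t : ℝ} (hq : 2 ≤ q) (h0 : 0 < t) (h1 : t ≤ 1) :
    HasDerivAt (Lq q) ((q:ℝ) * R1 q t / t) t := by
  have h := hasDerivAt_Lq hq (le_of_lt h0) h1
  convert h using 1
  have ht : t ≠ 0 := ne_of_gt h0
  have hP : Pf q t ≠ 0 := ne_of_gt (Pf_pos (le_of_lt h0) h1)
  unfold R1
  field_simp

/-! ### tangent-line bound from log-concavity of `R1` in the multiplicative scale -/

lemma hasDerivAt_logR1 (hq : 2 ≤ q) {s : ℝ} (h0 : 0 < s) (h1 : s < 1) :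
    HasDerivAt (fun s => Real.log (R1 q s)) (mfun q s / s) s := by
  have hR1 : R1 q s ≠ 0 := ne_of_gt (R1_pos hq h0 (le_of_lt h1))
  have h := (hasDerivAt_R1m hq h0 h1).log hR1
  convert h using 1
  field_simp

lemma tangent_bound (hq : 2 ≤ q) {t s : ℝ} (ht0 : 0 < t) (ht1 : t ≤ 1)
    (hs0 : 0 < s) (hst : s ≤ t) :
    R1 q s ≤ R1 q t * (s/t) ^ (mfun q t) := by
  rcases eq_or_lt_of_le hst with rfl | hst'
  · rw [div_self (ne_of_gt ht0), Real.one_rpow, mul_one]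
  set c := mfun q t with hc
  set θ : ℝ → ℝ := fun s => Real.log (R1 q s) - c * Real.log s with hθ
  have hmono : MonotoneOn θ (Ioc (0:ℝ) t) := by
    apply monotoneOn_of_deriv_nonneg (convex_Ioc 0 t)
    · apply ContinuousOn.sub
      · apply ContinuousOn.log
        · apply ContinuousOn.div
          · exact (continuous_id.mul (continuous_Mf (q-1))).continuousOn
          · exact (continuous_Pf q).continuousOn
          · intro x hx
            exact ne_of_gt (Pf_pos (le_of_lt hx.1) (le_trans hx.2 ht1))
        · intro x hx
          exact ne_of_gt (R1_pos hq hx.1 (le_trans hx.2 ht1))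
      · apply ContinuousOn.mul continuousOn_const
        apply ContinuousOn.log continuousOn_id
        intro x hx
        exact ne_of_gt hx.1
    · intro x hx
      rw [interior_Ioc] at hx
      have hx1 : x < 1 := lt_of_lt_of_le hx.2 ht1
      have hd : HasDerivAt θ (mfun q x / x - c / x) x := by
        apply HasDerivAt.sub (hasDerivAt_logR1 hq hx.1 hx1)
        have := (Real.hasDerivAt_log (ne_of_gt hx.1)).const_mul c
        simpa [div_eq_mul_inv] using this
      exact hd.differentiableAt.differentiableWithinAt
    · intro x hx
      rw [interior_Ioc] at hx
      have hx1 : x < 1 := lt_of_lt_of_le hx.2 ht1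
      have hd : HasDerivAt θ (mfun q x / x - c / x) x := by
        apply HasDerivAt.sub (hasDerivAt_logR1 hq hx.1 hx1)
        have := (Real.hasDerivAt_log (ne_of_gt hx.1)).const_mul c
        simpa [div_eq_mul_inv] using this
      rw [hd.deriv]
      have hmx : c ≤ mfun q x :=
        mfun_anti hq ⟨hx.1, le_trans (le_of_lt hx.2) ht1⟩ ⟨ht0, ht1⟩ (le_of_lt hx.2)
      have : 0 < x := hx.1
      rw [div_sub_div_same]
      exact div_nonneg (by linarith) (le_of_lt hx.1)
  have hθst : θ s ≤ θ t := hmono ⟨hs0, hst⟩ ⟨ht0, le_refl t⟩ hst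
  rw [hθ] at hθst
  simp only at hθst
  have hR1s : 0 < R1 q s := R1_pos hq hs0 (le_trans hst ht1)
  have hR1t : 0 < R1 q t := R1_pos hq ht0 ht1
  have hrpos : 0 < (s/t) ^ c := Real.rpow_pos_of_pos (div_pos hs0 ht0) c
  rw [← Real.log_le_log_iff hR1s (mul_pos hR1t hrpos)]
  rw [Real.log_mul (ne_of_gt hR1t) (ne_of_gt hrpos),
    Real.log_rpow (div_pos hs0 ht0), Real.log_div (ne_of_gt hs0) (ne_of_gt ht0)]
  linarith

/-! ### the central bound `m·L ≤ q·R1` -/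

lemma mL_le_qR1 (hq : 2 ≤ q) {t : ℝ} (ht0 : 0 < t) (ht1 : t ≤ 1) :
    mfun q t * Lq q t ≤ (q:ℝ) * R1 q t := by
  set c := mfun q t with hc
  have hcpos : 0 < c := mfun_pos hq ht0 ht1
  set K := (q:ℝ) * R1 q t / c with hK
  set η : ℝ → ℝ := fun s => Lq q s - K * (s/t) ^ c with hη
  have hanti : AntitoneOn η (Icc (0:ℝ) t) := by
    apply antitoneOn_of_deriv_nonpos (convex_Icc 0 t)
    · apply ContinuousOn.sub
      · exact Lq_continuousOn.mono (fun x hx => ⟨hx.1, le_trans hx.2 ht1⟩)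
      · apply ContinuousOn.mul continuousOn_const
        apply Continuous.continuousOn
        apply continuous_iff_continuousAt.2
        intro x
        exact (Real.continuousAt_rpow_const _ _ (Or.inr (le_of_lt hcpos))).comp
          ((continuous_id.div_const t).continuousAt)
    · intro x hx
      rw [interior_Icc] at hx
      have hx1 : x < 1 := lt_of_lt_of_le hx.2 ht1
      have h1 := hasDerivAt_Lq' hq hx.1 (le_of_lt hx1)
      have h2 : HasDerivAt (fun s : ℝ => K * (s/t) ^ c)
          (K * ((1/t) * c * (x/t) ^ (c - 1))) x := by
        have hdiv : HasDerivAt (fun s : ℝ => s / t) (1/t) x := by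
          simpa using (hasDerivAt_id x).div_const t
        have := (hdiv.rpow_const (p := c) (Or.inl (ne_of_gt (div_pos hx.1 ht0))))
        exact this.const_mul K
      exact (h1.sub h2).differentiableAt.differentiableWithinAt
    · intro x hx
      rw [interior_Icc] at hx
      have hx1 : x < 1 := lt_of_lt_of_le hx.2 ht1
      have h1 := hasDerivAt_Lq' hq hx.1 (le_of_lt hx1)
      have h2 : HasDerivAt (fun s : ℝ => K * (s/t) ^ c)
          (K * ((1/t) * c * (x/t) ^ (c - 1))) x := by
        have hdiv : HasDerivAt (fun s : ℝ => s / t) (1/t) x := by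
          simpa using (hasDerivAt_id x).div_const t
        have := (hdiv.rpow_const (p := c) (Or.inl (ne_of_gt (div_pos hx.1 ht0))))
        exact this.const_mul K
      rw [show deriv η x = _ from (h1.sub h2).deriv]
      -- show q*R1 x/x − K*(1/t)*c*(x/t)^(c−1) ≤ 0
      have htan := tangent_bound hq ht0 ht1 hx.1 (le_of_lt hx.2)
      have hxt : (0:ℝ) < x/t := div_pos hx.1 ht0
      have he : K * ((1/t) * c * (x/t) ^ (c - 1)) = (q:ℝ) * (R1 q t * (x/t) ^ c) / x := by
        have hcne : c ≠ 0 := ne_of_gt hcpos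
        have htne : t ≠ 0 := ne_of_gt ht0
        have hxne : x ≠ 0 := ne_of_gt hx.1
        rw [hK, Real.rpow_sub_one (ne_of_gt hxt)]
        field_simp
      rw [he]
      have hmono : (q:ℝ) * R1 q x / x ≤ (q:ℝ) * (R1 q t * (x/t) ^ c) / x := by
        apply (div_le_div_iff_of_pos_right hx.1).2
        apply mul_le_mul_of_nonneg_left htan (Nat.cast_nonneg q)
      linarith
  have hfinal := hanti (Set.mem_Icc.2 ⟨le_refl 0, le_of_lt ht0⟩)
    (Set.mem_Icc.2 ⟨le_of_lt ht0, le_refl t⟩) (le_of_lt ht0)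
  rw [hη] at hfinal
  simp only at hfinal
  rw [Lq_zero, zero_div, Real.zero_rpow (ne_of_gt hcpos), mul_zero, sub_zero,
    div_self (ne_of_gt ht0), Real.one_rpow, mul_one] at hfinal
  have hLK : Lq q t ≤ K := by linarith
  calc c * Lq q t = Lq q t * c := by ring
  _ ≤ K * c := mul_le_mul_of_nonneg_right hLK (le_of_lt hcpos)
  _ = (q:ℝ) * R1 q t := by
      rw [hK]
      field_simp

/-! ### `ψ = q R1 / L` is antitone -/

noncomputable def psi (q : ℕ) (t : ℝ) : ℝ := (q:ℝ) * R1 q t / Lq q t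

lemma psi_anti (hq : 2 ≤ q) : AntitoneOn (psi q) (Ioc (0:ℝ) 1) := by
  apply antitoneOn_of_deriv_nonpos (convex_Ioc 0 1)
  · apply ContinuousOn.div
    · apply ContinuousOn.mul continuousOn_const
      apply ContinuousOn.div
      · exact (continuous_id.mul (continuous_Mf (q-1))).continuousOn
      · exact (continuous_Pf q).continuousOn
      · intro x hx
        exact ne_of_gt (Pf_pos (le_of_lt hx.1) hx.2)
    · exact Lq_continuousOn.mono (fun x hx => ⟨le_of_lt hx.1, hx.2⟩)
    · intro x hx
      exact ne_of_gt (Lq_pos hq hx.1 hx.2)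
  · intro x hx
    rw [interior_Ioc] at hx
    have h1 := (hasDerivAt_R1m hq hx.1 hx.2).const_mul ((q:ℝ))
    have h2 := hasDerivAt_Lq' hq hx.1 (le_of_lt hx.2)
    have hL : Lq q x ≠ 0 := ne_of_gt (Lq_pos hq hx.1 (le_of_lt hx.2))
    exact ((h1.div h2 hL)).differentiableAt.differentiableWithinAt
  · intro x hx
    rw [interior_Ioc] at hx
    have h1 := (hasDerivAt_R1m hq hx.1 hx.2).const_mul ((q:ℝ))
    have h2 := hasDerivAt_Lq' hq hx.1 (le_of_lt hx.2)
    have hLpos : 0 < Lq q x := Lq_pos hq hx.1 (le_of_lt hx.2)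
    have hL : Lq q x ≠ 0 := ne_of_gt hLpos
    have hdiv := h1.div h2 hL
    have : deriv (psi q) x = ((q:ℝ) * (R1 q x / x * mfun q x) * Lq q x
        - (q:ℝ) * R1 q x * ((q:ℝ) * R1 q x / x)) / (Lq q x)^2 := by
      have hpsi : psi q = fun t => (q:ℝ) * R1 q t / Lq q t := rfl
      rw [hpsi]; exact hdiv.deriv
    rw [this]
    apply div_nonpos_of_nonpos_of_nonneg _ (sq_nonneg _)
    have hnum : (q:ℝ) * (R1 q x / x * mfun q x) * Lq q x
        - (q:ℝ) * R1 q x * ((q:ℝ) * R1 q x / x)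
        = ((q:ℝ) * R1 q x / x) * (mfun q x * Lq q x - (q:ℝ) * R1 q x) := by
      ring
    rw [hnum]
    apply mul_nonpos_of_nonneg_of_nonpos
    · have hr := R1_pos hq hx.1 (le_of_lt hx.2)
      exact div_nonneg (mul_nonneg (Nat.cast_nonneg q) (le_of_lt hr)) (le_of_lt hx.1)
    · have := mL_le_qR1 hq hx.1 (le_of_lt hx.2)
      linarith

/-! ### the core inequality -/

lemma core_ineq (hq : 2 ≤ q) {d u : ℝ} (hd : d ∈ Ioc (0:ℝ) 1) (hu : u ∈ Ioc (0:ℝ) 1) :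
    Lq q (d*u) * Lq q 1 ≤ Lq q d * Lq q u := by
  have hu0 := hu.1
  have hu1 := hu.2
  set g : ℝ → ℝ := fun x => Real.log (Lq q (x*u)) - Real.log (Lq q x) with hg
  have hmem : ∀ x ∈ Ioc (0:ℝ) 1, x * u ∈ Ioc (0:ℝ) 1 := by
    intro x hx
    constructor
    · exact mul_pos hx.1 hu0
    · calc x * u ≤ 1 * 1 := mul_le_mul hx.2 hu1 (le_of_lt hu0) zero_le_one
      _ = 1 := by ring
  have hgmono : MonotoneOn g (Ioc (0:ℝ) 1) := by
    apply monotoneOn_of_deriv_nonneg (convex_Ioc 0 1)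
    · apply ContinuousOn.sub
      · apply ContinuousOn.log
        · apply (Lq_continuousOn (q := q)).comp ((continuous_id.mul continuous_const).continuousOn)
          intro x hx
          have := hmem x hx
          exact ⟨le_of_lt this.1, this.2⟩
        · intro x hx
          exact ne_of_gt (Lq_pos hq (hmem x hx).1 (hmem x hx).2)
      · apply ContinuousOn.log
        · exact Lq_continuousOn.mono (fun x hx => ⟨le_of_lt hx.1, hx.2⟩)
        · intro x hx
          exact ne_of_gt (Lq_pos hq hx.1 hx.2)
    · intro x hx
      rw [interior_Ioc] at hx
      have hxu : x * u ∈ Ioc (0:ℝ) 1 := hmem x ⟨hx.1, le_of_lt hx.2⟩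
      have hLxu : Lq q (x*u) ≠ 0 := ne_of_gt (Lq_pos hq hxu.1 hxu.2)
      have hLx : Lq q x ≠ 0 := ne_of_gt (Lq_pos hq hx.1 (le_of_lt hx.2))
      have hc1 : HasDerivAt (fun x : ℝ => Lq q (x*u)) ((q:ℝ) * R1 q (x*u) / (x*u) * u) x := by
        have hinner : HasDerivAt (fun x : ℝ => x * u) u x := hasDerivAt_mul_const u
        exact HasDerivAt.comp (h₂ := Lq q) (h := fun x : ℝ => x * u) x (hasDerivAt_Lq' hq hxu.1 hxu.2) hinner
      have hd1 := hc1.log hLxu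
      have hd2 := (hasDerivAt_Lq' hq hx.1 (le_of_lt hx.2)).log hLx
      exact (hd1.sub hd2).differentiableAt.differentiableWithinAt
    · intro x hx
      rw [interior_Ioc] at hx
      have hxu : x * u ∈ Ioc (0:ℝ) 1 := hmem x ⟨hx.1, le_of_lt hx.2⟩
      have hLxupos : 0 < Lq q (x*u) := Lq_pos hq hxu.1 hxu.2
      have hLxu : Lq q (x*u) ≠ 0 := ne_of_gt hLxupos
      have hLxpos : 0 < Lq q x := Lq_pos hq hx.1 (le_of_lt hx.2)
      have hLx : Lq q x ≠ 0 := ne_of_gt hLxpos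
      have hc1 : HasDerivAt (fun x : ℝ => Lq q (x*u)) ((q:ℝ) * R1 q (x*u) / (x*u) * u) x := by
        have hinner : HasDerivAt (fun x : ℝ => x * u) u x := hasDerivAt_mul_const u
        exact HasDerivAt.comp (h₂ := Lq q) (h := fun x : ℝ => x * u) x (hasDerivAt_Lq' hq hxu.1 hxu.2) hinner
      have hd1 := hc1.log hLxu
      have hd2 := (hasDerivAt_Lq' hq hx.1 (le_of_lt hx.2)).log hLx
      rw [show deriv g x = _ from (hd1.sub hd2).deriv]
      have he1 : (q:ℝ) * R1 q (x*u) / (x*u) * u / Lq q (x*u) = psi q (x*u) / x := by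
        unfold psi
        have hx0 : x ≠ 0 := ne_of_gt hx.1
        have hu0' : u ≠ 0 := ne_of_gt hu0
        field_simp
      have he2 : (q:ℝ) * R1 q x / x / Lq q x = psi q x / x := by
        unfold psi
        field_simp
      rw [he1, he2]
      have hpsile : psi q x ≤ psi q (x*u) := by
        apply psi_anti hq hxu ⟨hx.1, le_of_lt hx.2⟩
        calc x * u ≤ x * 1 := by
              apply mul_le_mul_of_nonneg_left hu1 (le_of_lt hx.1)
        _ = x := by ring
      have : 0 ≤ psi q (x*u) - psi q x := by linarith
      rw [div_sub_div_same]
      exact div_nonneg this (le_of_lt hx.1)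
  have hg1 : g d ≤ g 1 := hgmono hd ⟨zero_lt_one, le_refl 1⟩ hd.2
  rw [hg] at hg1
  simp only [one_mul] at hg1
  have hdu : d * u ∈ Ioc (0:ℝ) 1 := hmem d hd
  have hLdu := Lq_pos hq hdu.1 hdu.2
  have hLd := Lq_pos hq hd.1 hd.2
  have hLu := Lq_pos hq hu.1 hu.2
  have hL1 := Lq_pos hq zero_lt_one (le_refl 1)
  have hlog : Real.log (Lq q (d*u) * Lq q 1) ≤ Real.log (Lq q d * Lq q u) := by
    rw [Real.log_mul (ne_of_gt hLdu) (ne_of_gt hL1),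
      Real.log_mul (ne_of_gt hLd) (ne_of_gt hLu)]
    linarith
  exact (Real.log_le_log_iff (mul_pos hLdu hL1) (mul_pos hLd hLu)).1 hlog

/-! ### the relation with `λ` and the two-point inequality -/

noncomputable def lam' (q : ℕ) (e : ℝ) : ℝ := 1 + 1/((q:ℝ)-1) * Real.logb 2 (e^q + (1-e)^q)

lemma s_pos (hq : 2 ≤ q) {e : ℝ} (he0 : 0 ≤ e) (he1 : e ≤ 1/2) : 0 < e^q + (1-e)^q := by
  have h2 : (0:ℝ) < (1-e)^q := pow_pos (by linarith) q
  have h1 : (0:ℝ) ≤ e^q := pow_nonneg he0 q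
  linarith

lemma Pf_delta (hq : 2 ≤ q) (e : ℝ) :
    Pf q (1 - 2*e) = 2^q * (e^q + (1-e)^q) := by
  unfold Pf
  have e1 : (1 + (1 - 2*e)) = 2 * (1-e) := by ring
  have e2 : (1 - (1 - 2*e)) = 2 * e := by ring
  rw [e1, e2, mul_pow, mul_pow]
  ring

lemma Lq_delta (hq : 2 ≤ q) {e : ℝ} (he0 : 0 ≤ e) (he1 : e ≤ 1/2) :
    Lq q (1 - 2*e) = ((q:ℝ)-1) * Real.log 2 + Real.log (e^q + (1-e)^q) := by
  unfold Lq
  rw [Pf_delta hq e]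
  have hs := s_pos hq he0 he1
  have h1 : (2:ℝ)^q * (e^q + (1-e)^q) / 2 = 2^(q-1) * (e^q + (1-e)^q) := by
    rw [show (2:ℝ)^q = 2^(q-1) * 2 by rw [← pow_succ]; congr 1; omega]
    ring
  rw [h1, Real.log_mul (by positivity) (ne_of_gt hs), Real.log_pow, cast_q1 hq]

lemma lam_mul_L1 (hq : 2 ≤ q) {e : ℝ} (he0 : 0 ≤ e) (he1 : e ≤ 1/2) :
    lam' q e * Lq q 1 = Lq q (1 - 2*e) := by
  rw [Lq_one hq, Lq_delta hq he0 he1]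
  unfold lam' Real.logb
  have hq1 : ((q:ℝ) - 1) ≠ 0 := by
    have : (2:ℝ) ≤ (q:ℝ) := by exact_mod_cast hq
    linarith
  have hl2 : Real.log 2 ≠ 0 := by
    have := Real.log_pos (by norm_num : (1:ℝ) < 2)
    linarith
  field_simp

lemma lam'_eq (hq : 2 ≤ q) {e : ℝ} (he0 : 0 ≤ e) (he1 : e ≤ 1/2) :
    lam' q e = Lq q (1 - 2*e) / Lq q 1 := by
  have hL1 : 0 < Lq q 1 := Lq_pos hq zero_lt_one (le_refl 1)
  rw [eq_div_iff (ne_of_gt hL1)]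
  exact lam_mul_L1 hq he0 he1

lemma lam'_nonneg (hq : 2 ≤ q) {e : ℝ} (he0 : 0 ≤ e) (he1 : e ≤ 1/2) :
    0 ≤ lam' q e := by
  rw [lam'_eq hq he0 he1]
  have hL1 : 0 < Lq q 1 := Lq_pos hq zero_lt_one (le_refl 1)
  apply div_nonneg _ (le_of_lt hL1)
  exact Lq_nonneg hq (by linarith) (by linarith)

lemma lam'_le_one (hq : 2 ≤ q) {e : ℝ} (he0 : 0 ≤ e) (he1 : e ≤ 1/2) :
    lam' q e ≤ 1 := by
  rw [lam'_eq hq he0 he1]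
  have hL1 : 0 < Lq q 1 := Lq_pos hq zero_lt_one (le_refl 1)
  rw [div_le_one hL1]
  -- Lq (1-2e) ≤ Lq 1 since Pf q (1-2e) ≤ 2^q = Pf q 1
  unfold Lq
  apply Real.log_le_log
  · have := Pf_pos (j := q) (t := 1 - 2*e) (by linarith) (by linarith)
    positivity
  have hPf1 : Pf q 1 = 2^q := by
    unfold Pf
    norm_num [zero_pow (show q ≠ 0 by omega)]
  have hle : Pf q (1 - 2*e) ≤ 2^q := by
    unfold Pf
    have hx0 : (0:ℝ) ≤ 1 + (1 - 2*e) := by linarith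
    have hy0 : (0:ℝ) ≤ 1 - (1 - 2*e) := by linarith
    have := pow_add_pow_le hx0 hy0 (show q ≠ 0 by omega)
    have he2 : (1 + (1 - 2*e)) + (1 - (1 - 2*e)) = (2:ℝ) := by ring
    rwa [he2] at this
  rw [hPf1]
  linarith

/-- `φ(δu) ≤ φ(u)^λ` -/
lemma tp_phi (hq : 2 ≤ q) {d u : ℝ} (hd : d ∈ Icc (0:ℝ) 1) (hu : u ∈ Icc (0:ℝ) 1)
    {l : ℝ} (hl : l = Lq q d / Lq q 1) :
    Pf q (d*u) / 2 ≤ (Pf q u / 2) ^ l := by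
  have hL1 : 0 < Lq q 1 := Lq_pos hq zero_lt_one (le_refl 1)
  have hl0 : 0 ≤ l := by
    rw [hl]
    exact div_nonneg (Lq_nonneg hq hd.1 hd.2) (le_of_lt hL1)
  have hphiu1 : 1 ≤ Pf q u / 2 := by
    have := Pf_ge_two hq hu.1 hu.2
    linarith
  rcases eq_or_lt_of_le hd.1 with hd0 | hd0
  · -- d = 0
    rw [← hd0, zero_mul]
    have : Pf q 0 / 2 = 1 := by unfold Pf; norm_num
    rw [this]
    calc (1:ℝ) = 1 ^ l := (Real.one_rpow l).symm
    _ ≤ (Pf q u / 2) ^ l := Real.rpow_le_rpow (by norm_num) hphiu1 hl0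
  rcases eq_or_lt_of_le hu.1 with hu0 | hu0
  · -- u = 0
    have h0 : Pf q 0 / 2 = 1 := by unfold Pf; norm_num
    rw [← hu0, mul_zero, h0, Real.one_rpow]
  -- main case
  have hcore := core_ineq hq (d := d) (u := u) ⟨hd0, hd.2⟩ ⟨hu0, hu.2⟩
  have hdu : 0 < d * u := mul_pos hd0 hu0
  have hdu1 : d * u ≤ 1 := by
    calc d * u ≤ 1 * 1 := mul_le_mul hd.2 hu.2 (le_of_lt hu0) zero_le_one
    _ = 1 := by ring
  have hLle : Lq q (d*u) ≤ l * Lq q u := by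
    rw [hl]
    rw [div_mul_eq_mul_div, le_div_iff₀ hL1]
    calc Lq q (d*u) * Lq q 1 ≤ Lq q d * Lq q u := hcore
    _ = Lq q d * Lq q u := rfl
  have hphiu0 : (0:ℝ) < Pf q u / 2 := by linarith
  have hphidu0 : (0:ℝ) < Pf q (d*u) / 2 := by
    have := Pf_pos (j := q) (le_of_lt hdu) hdu1
    linarith
  calc Pf q (d*u) / 2 = Real.exp (Lq q (d*u)) := (Real.exp_log hphidu0).symm
  _ ≤ Real.exp (l * Lq q u) := Real.exp_le_exp.2 hLle
  _ = (Pf q u / 2) ^ l := by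
      rw [Real.rpow_def_of_pos hphiu0]
      congr 1
      unfold Lq
      ring

lemma tp_main (hq : 2 ≤ q) {e a b : ℝ} (he0 : 0 ≤ e) (he1 : e ≤ 1/2)
    (ha : 0 ≤ a) (hb : 0 ≤ b) (hba : b ≤ a) (hab : 0 < a + b) :
    (((1-e)*a + e*b)^q + (e*a + (1-e)*b)^q)/2 ≤
      ((a^q + b^q)/2) ^ (lam' q e) * ((((a+b)/2)^q)) ^ (1 - lam' q e) := by
  set d : ℝ := 1 - 2*e with hd
  set c : ℝ := (a+b)/2 with hc
  set u : ℝ := (a-b)/(a+b) with hu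
  have hc0 : 0 < c := by rw [hc]; linarith
  have hd0 : 0 ≤ d := by rw [hd]; linarith
  have hd1 : d ≤ 1 := by rw [hd]; linarith
  have hu0 : 0 ≤ u := by
    rw [hu]; exact div_nonneg (by linarith) (le_of_lt hab)
  have hu1 : u ≤ 1 := by
    rw [hu, div_le_one hab]; linarith
  have habne : a + b ≠ 0 := ne_of_gt hab
  have i1 : (1-e)*a + e*b = c*(1 + d*u) := by
    rw [hc, hd, hu]; field_simp; ring
  have i2 : e*a + (1-e)*b = c*(1 - d*u) := by
    rw [hc, hd, hu]; field_simp; ring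
  have i3 : a = c*(1 + u) := by
    rw [hc, hu]; field_simp; ring
  have i4 : b = c*(1 - u) := by
    rw [hc, hu]; field_simp; ring
  have hlhs : (((1-e)*a + e*b)^q + (e*a + (1-e)*b)^q)/2 = c^q * (Pf q (d*u) / 2) := by
    rw [i1, i2]
    unfold Pf
    rw [mul_pow, mul_pow]
    ring
  have hmid : (a^q + b^q)/2 = c^q * (Pf q u / 2) := by
    rw [i3, i4]
    unfold Pf
    rw [mul_pow, mul_pow]
    ring
  have hc2 : ((a+b)/2)^q = c^q := by rw [hc]
  have hcq0 : (0:ℝ) < c^q := pow_pos hc0 q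
  have hphiu0 : (0:ℝ) < Pf q u / 2 := by
    have := Pf_pos (j := q) hu0 hu1
    linarith
  have hlam := lam'_eq hq he0 he1
  rw [← hd] at hlam
  have htp := tp_phi hq (d := d) (u := u) ⟨hd0, hd1⟩ ⟨hu0, hu1⟩ hlam
  rw [hlhs, hmid, hc2]
  have hrhs : (c^q * (Pf q u / 2)) ^ lam' q e * (c^q) ^ (1 - lam' q e)
      = c^q * (Pf q u / 2) ^ lam' q e := by
    rw [Real.mul_rpow (le_of_lt hcq0) (le_of_lt hphiu0), mul_assoc,
      mul_comm ((Pf q u / 2) ^ lam' q e) _, ← mul_assoc, ← Real.rpow_add hcq0]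
    norm_num
  rw [hrhs]
  exact mul_le_mul_of_nonneg_left htp (le_of_lt hcq0)

lemma two_point' (hq : 2 ≤ q) {e a b : ℝ} (he0 : 0 ≤ e) (he1 : e ≤ 1/2)
    (ha : 0 ≤ a) (hb : 0 ≤ b) :
    (((1-e)*a + e*b)^q + (e*a + (1-e)*b)^q)/2 ≤
      ((a^q + b^q)/2) ^ (lam' q e) * ((((a+b)/2)^q)) ^ (1 - lam' q e) := by
  rcases eq_or_lt_of_le (by linarith : (0:ℝ) ≤ a + b) with hab | hab
  · -- a = b = 0
    have ha0 : a = 0 := by linarith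
    have hb0 : b = 0 := by linarith
    rw [ha0, hb0]
    have hz : ((1-e)*0 + e*0 : ℝ) = 0 := by ring
    have hz2 : (e*0 + (1-e)*0 : ℝ) = 0 := by ring
    rw [hz, hz2]
    rw [zero_pow (show q ≠ 0 by omega)]
    norm_num
    positivity
  rcases le_total b a with hba | hba
  · exact tp_main hq he0 he1 ha hb hba hab
  · have := tp_main hq he0 he1 hb ha hba (by linarith)
    have e1 : (1-e)*b + e*a = e*a + (1-e)*b := by ring
    have e2 : e*b + (1-e)*a = (1-e)*a + e*b := by ring
    rw [e1, e2, add_comm (b^q) (a^q), add_comm b a] at this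
    rw [show ((1-e)*a + e*b)^q + (e*a + (1-e)*b)^q
        = (e*a + (1-e)*b)^q + ((1-e)*a + e*b)^q by ring]
    exact this

end withq

end Core

noncomputable def lam (q : ℕ) (e : ℝ) : ℝ := 1 + 1/((q:ℝ)-1) * Real.logb 2 (e^q + (1-e)^q)

lemma lam_nonneg {q : ℕ} (hq : 2 ≤ q) {e : ℝ} (he0 : 0 ≤ e) (he1 : e ≤ 1/2) :
    0 ≤ lam q e := by
  have h := lam'_nonneg hq he0 he1
  rwa [show lam' q e = lam q e from rfl] at h

lemma lam_le_one {q : ℕ} (hq : 2 ≤ q) {e : ℝ} (he0 : 0 ≤ e) (he1 : e ≤ 1/2) :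
    lam q e ≤ 1 := by
  have h := lam'_le_one hq he0 he1
  rwa [show lam' q e = lam q e from rfl] at h

/-- The two-point inequality (core analytic fact). -/
lemma two_point {q : ℕ} (hq : 2 ≤ q) {e a b : ℝ} (he0 : 0 ≤ e) (he1 : e ≤ 1/2)
    (ha : 0 ≤ a) (hb : 0 ≤ b) :
    (((1-e)*a + e*b)^q + (e*a + (1-e)*b)^q)/2 ≤
      ((a^q + b^q)/2) ^ (lam q e) * ((((a+b)/2)^q)) ^ (1 - lam q e) := by
  have h := two_point' hq he0 he1 ha hb
  rwa [show lam' q e = lam q e from rfl] at h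

section Cube

variable {n : ℕ}

abbrev Ω (n : ℕ) := Fin n → Bool

def flipc (k : Fin n) (x : Ω n) : Ω n := Function.update x k (!(x k))

lemma flipc_apply_self (k : Fin n) (x : Ω n) : flipc k x k = !(x k) := by
  simp [flipc]

lemma flipc_apply_ne (k i : Fin n) (x : Ω n) (h : i ≠ k) : flipc k x i = x i := by
  simp [flipc, Function.update_of_ne h]

lemma flipc_flipc (k : Fin n) (x : Ω n) : flipc k (flipc k x) = x := by
  funext i
  rcases eq_or_ne i k with rfl | h
  · rw [flipc_apply_self, flipc_apply_self, Bool.not_not]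
  · rw [flipc_apply_ne _ _ _ h, flipc_apply_ne _ _ _ h]

def flipE (k : Fin n) : Equiv.Perm (Ω n) :=
  ⟨flipc k, flipc k, flipc_flipc k, flipc_flipc k⟩

/-- the set of `y` agreeing with `x` on `W` -/
def agr (W : Finset (Fin n)) (x : Ω n) : Finset (Ω n) :=
  Finset.univ.filter (fun y : Ω n => ∀ i ∈ W, y i = x i)

lemma mem_agr {W : Finset (Fin n)} {x y : Ω n} : y ∈ agr W x ↔ ∀ i ∈ W, y i = x i := by
  simp [agr]

lemma condExp_eq (f : Ω n → ℝ) (T : Finset (Fin n)) (x : Ω n) :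
    condExp f T x = (∑ y ∈ agr T x, f y) / ((agr T x).card : ℝ) := rfl

lemma agr_univ (x : Ω n) : agr (univ : Finset (Fin n)) x = {x} := by
  ext y
  simp only [mem_agr, Finset.mem_singleton]
  constructor
  · intro h; funext i; exact h i (mem_univ i)
  · rintro rfl; intro i _; rfl

lemma condExp_univ (f : Ω n → ℝ) : condExp f univ = f := by
  funext x
  rw [condExp_eq, agr_univ]
  simp

lemma condExp_nonneg {f : Ω n → ℝ} (hf : ∀ x, 0 ≤ f x) (T : Finset (Fin n)) (x : Ω n) :
    0 ≤ condExp f T x := by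
  rw [condExp_eq]
  apply div_nonneg (Finset.sum_nonneg fun y _ => hf y) (Nat.cast_nonneg _)

variable (ε : Fin n → ℝ)

/-- single-coordinate noise operator -/
noncomputable def Tk (k : Fin n) (f : Ω n → ℝ) : Ω n → ℝ :=
  fun x => (1 - ε k) * f x + ε k * f (flipc k x)

/-- single-coordinate averaging operator -/
noncomputable def Ek (k : Fin n) (f : Ω n → ℝ) : Ω n → ℝ :=
  fun x => (f x + f (flipc k x)) / 2

/-- noise on the coordinates in `S` -/
noncomputable def TS (S : Finset (Fin n)) (f : Ω n → ℝ) : Ω n → ℝ :=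
  fun x => ∑ y ∈ agr Sᶜ x, (∏ i ∈ S, if y i = x i then 1 - ε i else ε i) * f y

lemma TS_empty (f : Ω n → ℝ) : TS ε ∅ f = f := by
  funext x
  rw [TS, Finset.compl_empty, agr_univ]
  simp

lemma TS_univ (f : Ω n → ℝ) : TS ε univ f = noiseOpVec ε f := by
  funext x
  rw [TS, noiseOpVec, Finset.compl_univ]
  congr 1
  ext y
  simp [agr]

lemma agr_erase_split (W : Finset (Fin n)) (k : Fin n) (hk : k ∈ W) (x : Ω n) :
    agr (W.erase k) x = agr W x ∪ agr W (flipc k x) := by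
  ext y
  simp only [mem_agr, Finset.mem_union]
  constructor
  · intro h
    rcases Bool.eq_or_eq_not (y k) (x k) with hyk | hyk
    · left; intro i hi
      rcases eq_or_ne i k with rfl | hik
      · exact hyk
      · exact h i (Finset.mem_erase.2 ⟨hik, hi⟩)
    · right; intro i hi
      rcases eq_or_ne i k with rfl | hik
      · rw [hyk, flipc_apply_self]
      · rw [flipc_apply_ne _ _ _ hik]; exact h i (Finset.mem_erase.2 ⟨hik, hi⟩)
  · intro h i hi
    rcases h with h | h
    · exact h i (Finset.mem_erase.1 hi).2
    · rw [h i (Finset.mem_erase.1 hi).2, flipc_apply_ne _ _ _ (Finset.mem_erase.1 hi).1]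

lemma agr_disj (W : Finset (Fin n)) (k : Fin n) (hk : k ∈ W) (x : Ω n) :
    Disjoint (agr W x) (agr W (flipc k x)) := by
  rw [Finset.disjoint_left]
  intro y hy1 hy2
  have h1 := (mem_agr.1 hy1) k hk
  have h2 := (mem_agr.1 hy2) k hk
  rw [flipc_apply_self] at h2
  rw [h1] at h2
  exact (Bool.not_ne_self (x k)).symm h2

lemma sum_agr_flip (W : Finset (Fin n)) (k : Fin n) (hk : k ∈ W) (x : Ω n) (g : Ω n → ℝ) :
    ∑ y ∈ agr W (flipc k x), g y = ∑ y ∈ agr W x, g (flipc k y) := by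
  apply Finset.sum_nbij' (fun y => flipc k y) (fun y => flipc k y)
  · intro y hy
    rw [mem_agr] at hy ⊢
    intro i hi
    rcases eq_or_ne i k with rfl | hik
    · rw [flipc_apply_self, hy i hi, flipc_apply_self, Bool.not_not]
    · rw [flipc_apply_ne _ _ _ hik, hy i hi, flipc_apply_ne _ _ _ hik]
  · intro y hy
    rw [mem_agr] at hy ⊢
    intro i hi
    rcases eq_or_ne i k with rfl | hik
    · rw [flipc_apply_self, hy i hi, flipc_apply_self]
    · rw [flipc_apply_ne _ _ _ hik, hy i hi, flipc_apply_ne _ _ _ hik]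
  · intro y _; exact flipc_flipc k y
  · intro y _; exact flipc_flipc k y
  · intro y _; rw [flipc_flipc]

lemma card_agr_flip' (W : Finset (Fin n)) (k : Fin n) (hk : k ∈ W) (x : Ω n) :
    (agr W (flipc k x)).card = (agr W x).card := by
  apply Finset.card_bij (fun y _ => flipc k y)
  · intro y hy
    rw [mem_agr] at hy ⊢
    intro i hi
    rcases eq_or_ne i k with rfl | hik
    · rw [flipc_apply_self, hy i hi, flipc_apply_self, Bool.not_not]
    · rw [flipc_apply_ne _ _ _ hik, hy i hi, flipc_apply_ne _ _ _ hik]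
  · intro y1 h1 y2 h2 hEq
    have := congrArg (flipc k) hEq
    rwa [flipc_flipc, flipc_flipc] at this
  · intro y hy
    refine ⟨flipc k y, ?_, flipc_flipc k y⟩
    rw [mem_agr] at hy ⊢
    intro i hi
    rcases eq_or_ne i k with rfl | hik
    · rw [flipc_apply_self, hy i hi, flipc_apply_self]
    · rw [flipc_apply_ne _ _ _ hik, hy i hi, flipc_apply_ne _ _ _ hik]

/-- conditional expectation absorbs the averaging operator -/
lemma condExp_Ek (f : Ω n → ℝ) (W : Finset (Fin n)) (k : Fin n) (hk : k ∈ W) :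
    condExp (Ek k f) W = condExp f (W.erase k) := by
  funext x
  rw [condExp_eq, condExp_eq, agr_erase_split W k hk x,
    Finset.sum_union (agr_disj W k hk x), Finset.card_union_of_disjoint (agr_disj W k hk x),
    sum_agr_flip W k hk x f, card_agr_flip' W k hk x]
  have : ∑ y ∈ agr W x, Ek k f y = (∑ y ∈ agr W x, f y + ∑ y ∈ agr W x, f (flipc k y)) / 2 := by
    rw [← Finset.sum_add_distrib, Finset.sum_div]
    rfl
  rw [this]
  push_cast
  ring

lemma TS_insert (f : Ω n → ℝ) (S : Finset (Fin n)) (k : Fin n) (hk : k ∉ S) :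
    TS ε (insert k S) f = Tk ε k (TS ε S f) := by
  classical
  funext x
  have hcompl : (insert k S)ᶜ = Sᶜ.erase k := by
    rw [Finset.compl_insert]
  have hkS : k ∈ Sᶜ := Finset.mem_compl.2 hk
  rw [TS, hcompl, agr_erase_split Sᶜ k hkS x, Finset.sum_union (agr_disj Sᶜ k hkS x)]
  have h1 : ∀ y ∈ agr Sᶜ x,
      (∏ i ∈ insert k S, if y i = x i then 1 - ε i else ε i) * f y
      = (1 - ε k) * ((∏ i ∈ S, if y i = x i then 1 - ε i else ε i) * f y) := by
    intro y hy
    rw [Finset.prod_insert hk, if_pos ((mem_agr.1 hy) k hkS)]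
    ring
  have h2 : ∀ y ∈ agr Sᶜ (flipc k x),
      (∏ i ∈ insert k S, if y i = x i then 1 - ε i else ε i) * f y
      = ε k * ((∏ i ∈ S, if y i = (flipc k x) i then 1 - ε i else ε i) * f y) := by
    intro y hy
    have hyk : y k = !(x k) := by
      have := (mem_agr.1 hy) k hkS
      rwa [flipc_apply_self] at this
    have hne : ¬ (y k = x k) := by
      rw [hyk]; exact Bool.not_ne_self (x k)
    rw [Finset.prod_insert hk, if_neg hne]
    have heq : (∏ i ∈ S, if y i = x i then 1 - ε i else ε i)
        = ∏ i ∈ S, if y i = (flipc k x) i then 1 - ε i else ε i := by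
      apply Finset.prod_congr rfl
      intro i hi
      have hik : i ≠ k := fun h => hk (h ▸ hi)
      rw [flipc_apply_ne _ _ _ hik]
    rw [heq]
    ring
  rw [Finset.sum_congr rfl h1, Finset.sum_congr rfl h2, ← Finset.mul_sum, ← Finset.mul_sum]
  rfl

lemma Ek_TS (f : Ω n → ℝ) (S : Finset (Fin n)) (k : Fin n) (hk : k ∉ S) :
    Ek k (TS ε S f) = TS ε S (Ek k f) := by
  classical
  funext x
  have hkS : k ∈ Sᶜ := Finset.mem_compl.2 hk
  have hflip : TS ε S f (flipc k x)
      = ∑ y ∈ agr Sᶜ x, (∏ i ∈ S, if y i = x i then 1 - ε i else ε i) * f (flipc k y) := by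
    rw [TS, sum_agr_flip Sᶜ k hkS x]
    apply Finset.sum_congr rfl
    intro y hy
    congr 1
    apply Finset.prod_congr rfl
    intro i hi
    have hik : i ≠ k := fun h => hk (h ▸ hi)
    rw [flipc_apply_ne _ _ _ hik, flipc_apply_ne _ _ _ hik]
  show (TS ε S f x + TS ε S f (flipc k x)) / 2 = _
  rw [hflip, TS, TS, ← Finset.sum_add_distrib, Finset.sum_div]
  apply Finset.sum_congr rfl
  intro y hy
  show ((∏ i ∈ S, if y i = x i then 1 - ε i else ε i) * f y +
      (∏ i ∈ S, if y i = x i then 1 - ε i else ε i) * f (flipc k y)) / 2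
      = (∏ i ∈ S, if y i = x i then 1 - ε i else ε i) * ((f y + f (flipc k y)) / 2)
  ring

lemma wt_nonneg (hε0 : ∀ i, 0 ≤ ε i) (hε1 : ∀ i, ε i ≤ 1/2) (i : Fin n) (b c : Bool) :
    0 ≤ (if b = c then 1 - ε i else ε i) := by
  split
  · linarith [hε1 i]
  · exact hε0 i

lemma TS_nonneg (hε0 : ∀ i, 0 ≤ ε i) (hε1 : ∀ i, ε i ≤ 1/2)
    {f : Ω n → ℝ} (hf : ∀ x, 0 ≤ f x) (S : Finset (Fin n)) (x : Ω n) :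
    0 ≤ TS ε S f x := by
  apply Finset.sum_nonneg
  intro y _
  apply mul_nonneg _ (hf y)
  apply Finset.prod_nonneg
  intro i _
  exact wt_nonneg ε hε0 hε1 i (y i) (x i)

lemma Ek_nonneg {f : Ω n → ℝ} (hf : ∀ x, 0 ≤ f x) (k : Fin n) (x : Ω n) :
    0 ≤ Ek k f x := by
  have := hf x; have := hf (flipc k x)
  unfold Ek; positivity

/-! ### `lqNorm` lemmas -/

lemma lqNorm_nonneg (q : ℕ) (f : Ω n → ℝ) : 0 ≤ lqNorm q f := by
  apply Real.rpow_nonneg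
  positivity

lemma lqNorm_eq_of_nonneg (q : ℕ) {f : Ω n → ℝ} (hf : ∀ x, 0 ≤ f x) :
    lqNorm q f = (((2:ℝ)^n)⁻¹ * ∑ x : Ω n, (f x)^q) ^ ((1:ℝ)/q) := by
  unfold lqNorm
  congr 2
  apply Finset.sum_congr rfl
  intro x _
  rw [abs_of_nonneg (hf x)]

lemma lqNorm_pos (q : ℕ) {f : Ω n → ℝ} (hf : ∀ x, 0 ≤ f x) {x₀ : Ω n} (hx₀ : 0 < f x₀) :
    0 < lqNorm q f := by
  rw [lqNorm_eq_of_nonneg q hf]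
  apply Real.rpow_pos_of_pos
  apply mul_pos (by positivity)
  have h1 : (0:ℝ) < f x₀ ^ q := pow_pos hx₀ q
  have h2 : ∀ x ∈ (univ : Finset (Ω n)), 0 ≤ f x ^ q := fun x _ => pow_nonneg (hf x) q
  calc (0:ℝ) < f x₀ ^ q := h1
  _ ≤ ∑ x : Ω n, f x ^ q := Finset.single_le_sum h2 (mem_univ x₀)

/-! ### Hölder inequality for weighted sums -/

lemma hoelder_sum {ι : Type*} (s : Finset ι) (w X Y : ι → ℝ)
    (hw : ∀ i ∈ s, 0 ≤ w i) (hX : ∀ i ∈ s, 0 ≤ X i) (hY : ∀ i ∈ s, 0 ≤ Y i)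
    {l : ℝ} (hl0 : 0 ≤ l) (hl1 : l ≤ 1) :
    ∑ i ∈ s, w i * (X i ^ l * Y i ^ (1 - l)) ≤
      (∑ i ∈ s, w i * X i) ^ l * (∑ i ∈ s, w i * Y i) ^ (1 - l) := by
  rcases eq_or_lt_of_le hl0 with rfl | hl0'
  · simp only [Real.rpow_zero, sub_zero, Real.rpow_one, one_mul]; exact le_refl _
  rcases eq_or_lt_of_le hl1 with rfl | hl1'
  · simp only [sub_self, Real.rpow_zero, mul_one, Real.rpow_one]; exact le_refl _
  -- now 0 < l < 1
  set Sx := ∑ i ∈ s, w i * X i with hSx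
  set Sy := ∑ i ∈ s, w i * Y i with hSy
  have hSx0 : 0 ≤ Sx := Finset.sum_nonneg fun i hi => mul_nonneg (hw i hi) (hX i hi)
  have hSy0 : 0 ≤ Sy := Finset.sum_nonneg fun i hi => mul_nonneg (hw i hi) (hY i hi)
  rcases eq_or_lt_of_le hSx0 with hSx0' | hSx0'
  · have hz : ∀ i ∈ s, w i * X i = 0 := by
      intro i hi
      have := (Finset.sum_eq_zero_iff_of_nonneg
        (fun i hi => mul_nonneg (hw i hi) (hX i hi))).1 hSx0'.symm
      exact this i hi
    have hzz : ∑ i ∈ s, w i * (X i ^ l * Y i ^ (1 - l)) = 0 := by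
      apply Finset.sum_eq_zero
      intro i hi
      rcases mul_eq_zero.1 (hz i hi) with h | h
      · rw [h, zero_mul]
      · rw [h, Real.zero_rpow (ne_of_gt hl0'), zero_mul, mul_zero]
    rw [hzz, ← hSx0', Real.zero_rpow (ne_of_gt hl0'), zero_mul]
  rcases eq_or_lt_of_le hSy0 with hSy0' | hSy0'
  · have hz : ∀ i ∈ s, w i * Y i = 0 := by
      intro i hi
      have := (Finset.sum_eq_zero_iff_of_nonneg
        (fun i hi => mul_nonneg (hw i hi) (hY i hi))).1 hSy0'.symm
      exact this i hi
    have hzz : ∑ i ∈ s, w i * (X i ^ l * Y i ^ (1 - l)) = 0 := by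
      apply Finset.sum_eq_zero
      intro i hi
      rcases mul_eq_zero.1 (hz i hi) with h | h
      · rw [h, zero_mul]
      · rw [h, Real.zero_rpow (by linarith : (1:ℝ) - l ≠ 0), mul_zero, mul_zero]
    rw [hzz, ← hSy0', Real.zero_rpow (by linarith : (1:ℝ) - l ≠ 0), mul_zero]
  -- main case
  have key : ∀ i ∈ s, w i * (X i ^ l * Y i ^ (1 - l)) ≤
      Sx ^ l * Sy ^ (1 - l) * (w i * (l * (X i / Sx) + (1 - l) * (Y i / Sy))) := by
    intro i hi
    have hXi := hX i hi; have hYi := hY i hi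
    have hgm : (X i / Sx) ^ l * (Y i / Sy) ^ (1 - l) ≤
        l * (X i / Sx) + (1 - l) * (Y i / Sy) :=
      Real.geom_mean_le_arith_mean2_weighted (le_of_lt hl0') (by linarith)
        (div_nonneg hXi hSx0) (div_nonneg hYi hSy0) (by ring)
    have hrw : X i ^ l * Y i ^ (1 - l) =
        Sx ^ l * Sy ^ (1 - l) * ((X i / Sx) ^ l * (Y i / Sy) ^ (1 - l)) := by
      rw [Real.div_rpow hXi hSx0, Real.div_rpow hYi hSy0]
      field_simp
    rw [hrw]
    have hfac : 0 ≤ Sx ^ l * Sy ^ (1 - l) :=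
      mul_nonneg (Real.rpow_nonneg hSx0 l) (Real.rpow_nonneg hSy0 _)
    calc w i * (Sx ^ l * Sy ^ (1 - l) * ((X i / Sx) ^ l * (Y i / Sy) ^ (1 - l)))
        = Sx ^ l * Sy ^ (1 - l) * (w i * ((X i / Sx) ^ l * (Y i / Sy) ^ (1 - l))) := by ring
    _ ≤ Sx ^ l * Sy ^ (1 - l) * (w i * (l * (X i / Sx) + (1 - l) * (Y i / Sy))) := by
        apply mul_le_mul_of_nonneg_left _ hfac
        exact mul_le_mul_of_nonneg_left hgm (hw i hi)
  calc ∑ i ∈ s, w i * (X i ^ l * Y i ^ (1 - l))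
      ≤ ∑ i ∈ s, Sx ^ l * Sy ^ (1 - l) * (w i * (l * (X i / Sx) + (1 - l) * (Y i / Sy))) :=
        Finset.sum_le_sum key
  _ = Sx ^ l * Sy ^ (1 - l) * ((l / Sx) * (∑ i ∈ s, w i * X i)
        + ((1 - l) / Sy) * (∑ i ∈ s, w i * Y i)) := by
        rw [← Finset.mul_sum]
        congr 1
        rw [Finset.mul_sum, Finset.mul_sum, ← Finset.sum_add_distrib]
        apply Finset.sum_congr rfl
        intro i hi
        field_simp
  _ = Sx ^ l * Sy ^ (1 - l) := by
        rw [← hSx, ← hSy]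
        rw [div_mul_eq_mul_div, mul_div_assoc, div_self (ne_of_gt hSx0'),
          div_mul_eq_mul_div, mul_div_assoc, div_self (ne_of_gt hSy0')]
        ring

/-! ### The single-coordinate step -/

lemma sum_flip_reindex (k : Fin n) (g : Ω n → ℝ) :
    ∑ x : Ω n, g (flipc k x) = ∑ x : Ω n, g x := by
  exact Equiv.sum_comp (flipE k) g

lemma step_lemma {q : ℕ} (hq : 2 ≤ q) (hε0 : ∀ i, 0 ≤ ε i) (hε1 : ∀ i, ε i ≤ 1/2)
    (k : Fin n) {g : Ω n → ℝ} (hg : ∀ x, 0 ≤ g x) :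
    lqNorm q (Tk ε k g) ≤
      lqNorm q g ^ (lam q (ε k)) * lqNorm q (Ek k g) ^ (1 - lam q (ε k)) := by
  set l := lam q (ε k) with hl
  have hl0 : 0 ≤ l := lam_nonneg hq (hε0 k) (hε1 k)
  have hl1 : l ≤ 1 := lam_le_one hq (hε0 k) (hε1 k)
  have hTk_nonneg : ∀ x, 0 ≤ Tk ε k g x := by
    intro x
    have h1 := hg x; have h2 := hg (flipc k x)
    have h3 := hε0 k; have h4 := hε1 k
    unfold Tk
    nlinarith
  have hEk_nonneg : ∀ x, 0 ≤ Ek k g x := Ek_nonneg hg k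
  set N : ℝ := ((2:ℝ)^n)⁻¹ with hN
  have hN0 : 0 ≤ N := by positivity
  set X : Ω n → ℝ := fun x => (g x ^ q + g (flipc k x) ^ q) / 2 with hX
  set Y : Ω n → ℝ := fun x => (Ek k g x) ^ q with hY
  have hXn : ∀ x, 0 ≤ X x := by
    intro x
    have := pow_nonneg (hg x) q; have := pow_nonneg (hg (flipc k x)) q
    rw [hX]; positivity
  have hYn : ∀ x, 0 ≤ Y x := fun x => pow_nonneg (hEk_nonneg x) q
  have hpt : ∀ x : Ω n, ((Tk ε k g x) ^ q + (Tk ε k g (flipc k x)) ^ q) / 2 ≤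
      X x ^ l * Y x ^ (1 - l) := by
    intro x
    have h2 := two_point hq (hε0 k) (hε1 k) (hg x) (hg (flipc k x))
    have e1 : Tk ε k g x = (1 - ε k) * g x + ε k * g (flipc k x) := rfl
    have e2 : Tk ε k g (flipc k x) = ε k * g x + (1 - ε k) * g (flipc k x) := by
      show (1 - ε k) * g (flipc k x) + ε k * g (flipc k (flipc k x)) = _
      rw [flipc_flipc]; ring
    rw [e1, e2]
    have e3 : Y x = ((g x + g (flipc k x))/2) ^ q := by
      rw [hY]; rfl
    rw [hX, e3]
    exact h2
  have hsq1 : N * ∑ x : Ω n, (Tk ε k g x) ^ q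
      = N * ∑ x : Ω n, ((Tk ε k g x) ^ q + (Tk ε k g (flipc k x)) ^ q) / 2 := by
    congr 1
    have hre := sum_flip_reindex k (fun x => (Tk ε k g x) ^ q)
    rw [← Finset.sum_div, Finset.sum_add_distrib, hre]
    field_simp; ring
  have hsqX : ∑ x : Ω n, N * X x = N * ∑ x : Ω n, (g x) ^ q := by
    rw [← Finset.mul_sum]
    congr 1
    rw [hX]
    have hre := sum_flip_reindex k (fun x => (g x) ^ q)
    rw [← Finset.sum_div, Finset.sum_add_distrib, hre]
    field_simp; ring
  have kk : N * ∑ x : Ω n, (Tk ε k g x) ^ q ≤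
      (N * ∑ x : Ω n, (g x) ^ q) ^ l * (N * ∑ x : Ω n, (Ek k g x) ^ q) ^ (1 - l) := by
    rw [hsq1]
    calc N * ∑ x : Ω n, ((Tk ε k g x) ^ q + (Tk ε k g (flipc k x)) ^ q) / 2
        ≤ N * ∑ x : Ω n, X x ^ l * Y x ^ (1 - l) := by
          apply mul_le_mul_of_nonneg_left _ hN0
          exact Finset.sum_le_sum (fun x _ => hpt x)
    _ = ∑ x : Ω n, N * (X x ^ l * Y x ^ (1 - l)) := Finset.mul_sum _ _ _
    _ ≤ (∑ x : Ω n, N * X x) ^ l * (∑ x : Ω n, N * Y x) ^ (1 - l) := by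
          exact hoelder_sum _ _ _ _ (fun x _ => hN0) (fun x _ => hXn x) (fun x _ => hYn x)
            hl0 hl1
    _ = (N * ∑ x : Ω n, (g x) ^ q) ^ l * (N * ∑ x : Ω n, (Ek k g x) ^ q) ^ (1 - l) := by
          rw [hsqX, ← Finset.mul_sum]
  rw [lqNorm_eq_of_nonneg q hTk_nonneg, lqNorm_eq_of_nonneg q hg, lqNorm_eq_of_nonneg q hEk_nonneg]
  have hq0 : (0:ℝ) ≤ 1/q := by positivity
  have hbase1 : 0 ≤ N * ∑ x : Ω n, (g x) ^ q :=
    mul_nonneg hN0 (Finset.sum_nonneg fun x _ => pow_nonneg (hg x) q)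
  have hbase2 : 0 ≤ N * ∑ x : Ω n, (Ek k g x) ^ q :=
    mul_nonneg hN0 (Finset.sum_nonneg fun x _ => pow_nonneg (hEk_nonneg x) q)
  calc (N * ∑ x : Ω n, (Tk ε k g x) ^ q) ^ ((1:ℝ)/q)
      ≤ ((N * ∑ x : Ω n, (g x) ^ q) ^ l * (N * ∑ x : Ω n, (Ek k g x) ^ q) ^ (1 - l)) ^ ((1:ℝ)/q) := by
        apply Real.rpow_le_rpow _ kk hq0
        exact mul_nonneg hN0 (Finset.sum_nonneg fun x _ => pow_nonneg (hTk_nonneg x) q)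
  _ = ((N * ∑ x : Ω n, (g x) ^ q) ^ ((1:ℝ)/q)) ^ l *
        ((N * ∑ x : Ω n, (Ek k g x) ^ q) ^ ((1:ℝ)/q)) ^ (1 - l) := by
        rw [Real.mul_rpow (Real.rpow_nonneg hbase1 l) (Real.rpow_nonneg hbase2 _),
          ← Real.rpow_mul hbase1, ← Real.rpow_mul hbase2,
          ← Real.rpow_mul hbase1, ← Real.rpow_mul hbase2,
          mul_comm l ((1:ℝ)/q), mul_comm (1-l) ((1:ℝ)/q)]

/-! ### Main induction -/

lemma main_ind {q : ℕ} (hq : 2 ≤ q) (hε0 : ∀ i, 0 ≤ ε i) (hε1 : ∀ i, ε i ≤ 1/2)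
    (S : Finset (Fin n)) :
    ∀ (f : Ω n → ℝ), (∀ x, 0 ≤ f x) →
    lqNorm q (TS ε S f) ≤ ∏ U ∈ S.powerset, lqNorm q (condExp f Uᶜ) ^
      ((∏ j ∈ U, (1 - lam q (ε j))) * ∏ i ∈ S \ U, lam q (ε i)) := by
  classical
  induction S using Finset.induction_on with
  | empty =>
    intro f hf
    rw [TS_empty, Finset.powerset_empty, Finset.prod_singleton, Finset.compl_empty,
      condExp_univ]
    simp
  | insert _ _ hk ih =>
    rename_i k S
    intro f hf
    set l := lam q (ε k) with hldef
    have hl0 : 0 ≤ l := lam_nonneg hq (hε0 k) (hε1 k)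
    have hl1 : l ≤ 1 := lam_le_one hq (hε0 k) (hε1 k)
    rw [TS_insert ε f S k hk]
    have h1 := step_lemma ε hq hε0 hε1 k (g := TS ε S f) (TS_nonneg ε hε0 hε1 hf S)
    rw [Ek_TS ε f S k hk] at h1
    have hEkf : ∀ x, 0 ≤ Ek k f x := Ek_nonneg hf k
    have h2 := ih f hf
    have h3 := ih (Ek k f) hEkf
    have h3' : lqNorm q (TS ε S (Ek k f)) ≤ ∏ U ∈ S.powerset,
        lqNorm q (condExp f (insert k U)ᶜ) ^
          ((∏ j ∈ U, (1 - lam q (ε j))) * ∏ i ∈ S \ U, lam q (ε i)) := by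
      refine le_trans h3 (le_of_eq ?_)
      apply Finset.prod_congr rfl
      intro U hU
      have hkU : k ∉ U := fun h => hk (Finset.mem_powerset.1 hU h)
      have hkUc : k ∈ Uᶜ := Finset.mem_compl.2 hkU
      rw [condExp_Ek f Uᶜ k hkUc, Finset.compl_insert]
    have hA0 : 0 ≤ ∏ U ∈ S.powerset, lqNorm q (condExp f Uᶜ) ^
        ((∏ j ∈ U, (1 - lam q (ε j))) * ∏ i ∈ S \ U, lam q (ε i)) :=
      Finset.prod_nonneg fun U _ => Real.rpow_nonneg (lqNorm_nonneg q _) _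
    have hcomb : lqNorm q (Tk ε k (TS ε S f)) ≤
        (∏ U ∈ S.powerset, lqNorm q (condExp f Uᶜ) ^
          ((∏ j ∈ U, (1 - lam q (ε j))) * ∏ i ∈ S \ U, lam q (ε i))) ^ l *
        (∏ U ∈ S.powerset, lqNorm q (condExp f (insert k U)ᶜ) ^
          ((∏ j ∈ U, (1 - lam q (ε j))) * ∏ i ∈ S \ U, lam q (ε i))) ^ (1 - l) := by
      refine le_trans h1 ?_
      apply mul_le_mul
      · exact Real.rpow_le_rpow (lqNorm_nonneg q _) h2 hl0
      · exact Real.rpow_le_rpow (lqNorm_nonneg q _) h3' (by linarith)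
      · exact Real.rpow_nonneg (lqNorm_nonneg q _) _
      · exact Real.rpow_nonneg hA0 l
    refine le_trans hcomb (le_of_eq ?_)
    rw [← Real.finset_prod_rpow _ _ (fun U _ => Real.rpow_nonneg (lqNorm_nonneg q _) _) l,
      ← Real.finset_prod_rpow _ _ (fun U _ => Real.rpow_nonneg (lqNorm_nonneg q _) _) (1-l),
      ← Finset.prod_mul_distrib]
    have hdisj : Disjoint S.powerset ((S.powerset).image (insert k)) := by
      rw [Finset.disjoint_left]
      intro U hU hU2
      rw [Finset.mem_image] at hU2
      obtain ⟨V, hV, rfl⟩ := hU2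
      exact hk (Finset.mem_powerset.1 hU (Finset.mem_insert_self k V))
    have hinj : ∀ U ∈ S.powerset, ∀ V ∈ S.powerset, insert k U = insert k V → U = V := by
      intro U hU V hV hUV
      have hkU : k ∉ U := fun h => hk (Finset.mem_powerset.1 hU h)
      have hkV : k ∉ V := fun h => hk (Finset.mem_powerset.1 hV h)
      have := congrArg (fun W => Finset.erase W k) hUV
      simpa [Finset.erase_insert hkU, Finset.erase_insert hkV] using this
    rw [Finset.powerset_insert, Finset.prod_union hdisj, Finset.prod_image hinj]
    rw [← Finset.prod_mul_distrib]
    apply Finset.prod_congr rfl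
    intro U hU
    have hUS : U ⊆ S := Finset.mem_powerset.1 hU
    have hkU : k ∉ U := fun h => hk (hUS h)
    have hkSU : k ∉ S \ U := fun h => hk (Finset.mem_sdiff.1 h).1
    have e1 : (insert k S) \ U = insert k (S \ U) := by
      ext x
      simp only [Finset.mem_sdiff, Finset.mem_insert]
      constructor
      · rintro ⟨h1 | h1, h2⟩
        · exact Or.inl h1
        · exact Or.inr ⟨h1, h2⟩
      · rintro (rfl | ⟨h1, h2⟩)
        · exact ⟨Or.inl rfl, hkU⟩
        · exact ⟨Or.inr h1, h2⟩
    have e2 : (insert k S) \ (insert k U) = S \ U := by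
      ext x
      simp only [Finset.mem_sdiff, Finset.mem_insert, not_or]
      constructor
      · rintro ⟨h1 | h1, h2, h3⟩
        · exact absurd h1 h2
        · exact ⟨h1, h3⟩
      · rintro ⟨h1, h2⟩
        exact ⟨Or.inr h1, fun hx => hk (hx ▸ h1), h2⟩
    rw [e1, e2, Finset.prod_insert hkSU, Finset.prod_insert hkU,
      ← Real.rpow_mul (lqNorm_nonneg q _), ← Real.rpow_mul (lqNorm_nonneg q _)]
    congr 1 <;> (congr 1; ring)

lemma condExp_pos {q : ℕ} {f : Ω n → ℝ} (hf : ∀ x, 0 ≤ f x) {x₀ : Ω n} (hx₀ : 0 < f x₀)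
    (T : Finset (Fin n)) : 0 < lqNorm q (condExp f T) := by
  apply lqNorm_pos q (condExp_nonneg hf T) (x₀ := x₀)
  rw [condExp_eq]
  have hmem : x₀ ∈ agr T x₀ := mem_agr.2 (fun i _ => rfl)
  have hcard : 0 < ((agr T x₀).card : ℝ) := by
    have : 0 < (agr T x₀).card := Finset.card_pos.2 ⟨x₀, hmem⟩
    exact_mod_cast this
  apply div_pos _ hcard
  calc (0:ℝ) < f x₀ := hx₀
  _ ≤ ∑ y ∈ agr T x₀, f y := Finset.single_le_sum (fun y _ => hf y) hmem

lemma TS_univ_pos {q : ℕ} (hε0 : ∀ i, 0 ≤ ε i) (hε1 : ∀ i, ε i ≤ 1/2)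
    {f : Ω n → ℝ} (hf : ∀ x, 0 ≤ f x) {x₀ : Ω n} (hx₀ : 0 < f x₀) :
    0 < lqNorm q (TS ε univ f) := by
  apply lqNorm_pos q (TS_nonneg ε hε0 hε1 hf univ) (x₀ := x₀)
  unfold TS
  have hmem : x₀ ∈ agr univᶜ x₀ := mem_agr.2 (fun i hi => rfl)
  have hterm : 0 < (∏ i : Fin n, if x₀ i = x₀ i then 1 - ε i else ε i) * f x₀ := by
    apply mul_pos _ hx₀
    apply Finset.prod_pos
    intro i _
    rw [if_pos rfl]
    linarith [hε1 i]
  calc (0:ℝ) < (∏ i : Fin n, if x₀ i = x₀ i then 1 - ε i else ε i) * f x₀ := hterm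
  _ ≤ ∑ y ∈ agr univᶜ x₀, (∏ i : Fin n, if y i = x₀ i then 1 - ε i else ε i) * f y := by
      apply Finset.single_le_sum
        (f := fun y => (∏ i : Fin n, if y i = x₀ i then 1 - ε i else ε i) * f y) _ hmem
      intro y _
      apply mul_nonneg _ (hf y)
      exact Finset.prod_nonneg fun i _ => wt_nonneg ε hε0 hε1 i (y i) (x₀ i)

end Cube

theorem main_theorem (n : ℕ) (hn : 1 ≤ n) (q : ℕ) (hq : 2 ≤ q)
    (ε : Fin n → ℝ) (hε0 : ∀ i, 0 ≤ ε i) (hε1 : ∀ i, ε i ≤ 1 / 2)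
    (f : (Fin n → Bool) → ℝ) (hf : ∀ x, 0 ≤ f x) (hf0 : f ≠ 0) :
    Real.log (lqNorm q (noiseOpVec ε f)) ≤
      ∑ T : Finset (Fin n),
        (∏ i ∈ T, (1 + 1 / ((q : ℝ) - 1) * Real.logb 2 (ε i ^ q + (1 - ε i) ^ q))) *
          (∏ j ∈ Tᶜ, (1 - (1 + 1 / ((q : ℝ) - 1) * Real.logb 2 (ε j ^ q + (1 - ε j) ^ q)))) *
          Real.log (lqNorm q (condExp f T)) := by
  classical
  -- find a point where f is positive
  have hex : ∃ x₀, 0 < f x₀ := by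
    by_contra h
    push_neg at h
    apply hf0
    funext x
    exact le_antisymm (h x) (hf x)
  obtain ⟨x₀, hx₀⟩ := hex
  have hmain := main_ind ε hq hε0 hε1 univ f hf
  rw [TS_univ] at hmain
  have hpos : 0 < lqNorm q (noiseOpVec ε f) := by
    rw [← TS_univ]
    exact TS_univ_pos ε hε0 hε1 hf hx₀
  have hNpos : ∀ T : Finset (Fin n), 0 < lqNorm q (condExp f T) :=
    fun T => condExp_pos hf hx₀ T
  have hlog := Real.log_le_log hpos hmain
  refine le_trans hlog (le_of_eq ?_)
  rw [Real.log_prod]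
  swap
  · intro U _
    exact ne_of_gt (Real.rpow_pos_of_pos (hNpos Uᶜ) _)
  have hterm : ∀ U : Finset (Fin n), U ∈ univ.powerset →
      Real.log (lqNorm q (condExp f Uᶜ) ^
        ((∏ j ∈ U, (1 - lam q (ε j))) * ∏ i ∈ univ \ U, lam q (ε i)))
      = ((∏ j ∈ U, (1 - lam q (ε j))) * ∏ i ∈ univ \ U, lam q (ε i)) *
          Real.log (lqNorm q (condExp f Uᶜ)) := by
    intro U _
    exact Real.log_rpow (hNpos Uᶜ) _
  rw [Finset.sum_congr rfl hterm, Finset.powerset_univ]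
  -- reindex by complement
  have hbij : Function.Bijective (fun T : Finset (Fin n) => Tᶜ) :=
    Function.Involutive.bijective (fun T => compl_compl T)
  apply Fintype.sum_bijective _ hbij
  intro U
  have he : univ \ U = Uᶜ := (Finset.compl_eq_univ_sdiff U).symm
  rw [he, compl_compl]
  show (∏ j ∈ U, (1 - lam q (ε j))) * (∏ i ∈ Uᶜ, lam q (ε i)) * Real.log (lqNorm q (condExp f Uᶜ))
    = (∏ i ∈ Uᶜ, lam q (ε i)) * (∏ j ∈ U, (1 - lam q (ε j))) * Real.log (lqNorm q (condExp f Uᶜ))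
  ring

end NVC


/-- **Theorem (main inequality, vector noise).** For integer `q ≥ 2`, `0 ≤ ε_i ≤ 1/2`, and
`λ_i = 1 + (1/(q-1))·log₂(ε_i^q + (1-ε_i)^q)`, for every nonnegative `f ≢ 0` on `{0,1}^n`,
`log ‖T_ε⃗ f‖_q ≤ Σ_T (Π_{i∈T} λ_i)(Π_{j∉T} (1-λ_j)) · log ‖E(f|T)‖_q`. -/
theorem noiseVec_lq_le_avg_condExp (n : ℕ) (hn : 1 ≤ n) (q : ℕ) (hq : 2 ≤ q)
    (ε : Fin n → ℝ) (hε0 : ∀ i, 0 ≤ ε i) (hε1 : ∀ i, ε i ≤ 1 / 2)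
    (f : (Fin n → Bool) → ℝ) (hf : ∀ x, 0 ≤ f x) (hf0 : f ≠ 0) :
    Real.log (lqNorm q (noiseOpVec ε f)) ≤
      ∑ T : Finset (Fin n),
        (∏ i ∈ T, (1 + 1 / ((q : ℝ) - 1) * Real.logb 2 (ε i ^ q + (1 - ε i) ^ q))) *
          (∏ j ∈ Tᶜ, (1 - (1 + 1 / ((q : ℝ) - 1) * Real.logb 2 (ε j ^ q + (1 - ε j) ^ q)))) *
          Real.log (lqNorm q (condExp f T)) :=
  NVC.main_theorem n hn q hq ε hε0 hε1 f hf hf0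
end

section
/- Let n ≥ 1 and let ε⃗ = (ε₁,…,ε_n) with 0 ≤ ε_i ≤ 1/2 for each i. Set λ_i = 1 + log₂(1-ε_i). Then for every nonnegative function f on {0,1}^n that is not identically zero, log ‖T_{ε⃗} f‖_∞ ≤ Σ_{T⊆[n]} (Π_{i∈T} λ_i)(Π_{j∉T} (1-λ_j)) · log ‖E(f|T)‖_∞. -/
open Finset

namespace NoisePf

variable {n : ℕ}

def bflip (k : Fin n) (x : Fin n → Bool) : Fin n → Bool := Function.update x k (!x k)

lemma bflip_self (k : Fin n) (x : Fin n → Bool) : bflip k x k = !x k :=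
  Function.update_self _ _ _

lemma bflip_ne {k i : Fin n} (h : i ≠ k) (x : Fin n → Bool) : bflip k x i = x i :=
  Function.update_of_ne h _ _

lemma bflip_bflip (k : Fin n) (x : Fin n → Bool) : bflip k (bflip k x) = x := by
  funext i
  rcases eq_or_ne i k with rfl | h
  · rw [bflip_self, bflip_self, Bool.not_not]
  · rw [bflip_ne h, bflip_ne h]

lemma bflip_invol (k : Fin n) : Function.Involutive (bflip k) := bflip_bflip k

noncomputable def W (ε : Fin n → ℝ) (S : Finset (Fin n)) (x y : Fin n → Bool) : ℝ :=
  (∏ i ∈ S, if y i = x i then 1 - ε i else ε i) *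
    (∏ j ∈ Sᶜ, if y j = x j then (1 : ℝ) else 0)

lemma W_nonneg {ε : Fin n → ℝ} (hε0 : ∀ i, 0 ≤ ε i) (hε1 : ∀ i, ε i ≤ 1 / 2)
    (S : Finset (Fin n)) (x y : Fin n → Bool) : 0 ≤ W ε S x y := by
  apply mul_nonneg <;> apply Finset.prod_nonneg <;> intro i _ <;> split <;>
    first
      | linarith [hε0 i, hε1 i]
      | norm_num

noncomputable def TOn (ε : Fin n → ℝ) (S : Finset (Fin n)) (f : (Fin n → Bool) → ℝ) :
    (Fin n → Bool) → ℝ := fun x => ∑ y : Fin n → Bool, W ε S x y * f y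

lemma TOn_empty (ε : Fin n → ℝ) (f : (Fin n → Bool) → ℝ) : TOn ε ∅ f = f := by
  funext x
  have : ∀ y : Fin n → Bool, W ε ∅ x y * f y = if y = x then f y else 0 := by
    intro y
    rcases eq_or_ne y x with rfl | h
    · simp [W]
    · simp only [W, if_neg h]
      obtain ⟨i, hi⟩ : ∃ i, y i ≠ x i := by
        by_contra hc
        push_neg at hc
        exact h (funext hc)
      rw [Finset.prod_eq_zero (f := fun j => if y j = x j then (1:ℝ) else 0)
        (Finset.mem_compl.2 (Finset.notMem_empty i)) (if_neg hi)]
      ring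
  simp only [TOn, this, Finset.sum_ite_eq' Finset.univ x f, Finset.mem_univ, if_true]

lemma TOn_univ (ε : Fin n → ℝ) (f : (Fin n → Bool) → ℝ) : TOn ε Finset.univ f = noiseOpVec ε f := by
  funext x
  simp [TOn, noiseOpVec, W]

lemma TOn_nonneg {ε : Fin n → ℝ} (hε0 : ∀ i, 0 ≤ ε i) (hε1 : ∀ i, ε i ≤ 1 / 2)
    (S : Finset (Fin n)) {f : (Fin n → Bool) → ℝ} (hf : ∀ x, 0 ≤ f x) (x : Fin n → Bool) :
    0 ≤ TOn ε S f x :=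
  Finset.sum_nonneg fun y _ => mul_nonneg (W_nonneg hε0 hε1 S x y) (hf y)

end NoisePf

namespace NoisePf

variable {n : ℕ}

lemma bool_eq_not_iff (a b : Bool) : (a = !b) ↔ ¬ (a = b) := by
  cases a <;> cases b <;> simp

lemma W_flip {ε : Fin n → ℝ} {S : Finset (Fin n)} {k : Fin n} (hk : k ∉ S)
    (x y : Fin n → Bool) : W ε S (bflip k x) y = W ε S x (bflip k y) := by
  unfold W
  congr 1
  · apply Finset.prod_congr rfl
    intro i hiS
    have hik : i ≠ k := fun h => hk (h ▸ hiS)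
    rw [bflip_ne hik, bflip_ne hik]
  · have hkc : k ∈ Sᶜ := Finset.mem_compl.2 hk
    rw [← Finset.mul_prod_erase _ _ hkc, ← Finset.mul_prod_erase _ _ hkc]
    congr 1
    · rw [bflip_self, bflip_self]
      cases hy : y k <;> cases hx : x k <;> simp
    · apply Finset.prod_congr rfl
      intro j hj
      have hjk : j ≠ k := Finset.ne_of_mem_erase hj
      rw [bflip_ne hjk, bflip_ne hjk]

lemma W_insert {ε : Fin n → ℝ} {S : Finset (Fin n)} {k : Fin n} (hk : k ∉ S)
    (x y : Fin n → Bool) :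
    (1 - ε k) * W ε S x y + ε k * W ε S (bflip k x) y = W ε (insert k S) x y := by
  unfold W
  have hkc : k ∈ Sᶜ := Finset.mem_compl.2 hk
  rw [Finset.prod_insert hk, Finset.compl_insert,
    ← Finset.mul_prod_erase _ (fun j => if y j = x j then (1:ℝ) else 0) hkc,
    ← Finset.mul_prod_erase _ (fun j => if y j = bflip k x j then (1:ℝ) else 0) hkc]
  have h1 : ∏ i ∈ S, (if y i = bflip k x i then 1 - ε i else ε i)
      = ∏ i ∈ S, (if y i = x i then 1 - ε i else ε i) := by
    apply Finset.prod_congr rfl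
    intro i hiS
    have hik : i ≠ k := fun h => hk (h ▸ hiS)
    rw [bflip_ne hik]
  have h2 : ∏ j ∈ Sᶜ.erase k, (if y j = bflip k x j then (1:ℝ) else 0)
      = ∏ j ∈ Sᶜ.erase k, (if y j = x j then (1:ℝ) else 0) := by
    apply Finset.prod_congr rfl
    intro j hj
    rw [bflip_ne (Finset.ne_of_mem_erase hj)]
  rw [h1, h2, bflip_self]
  rcases eq_or_ne (y k) (x k) with h | h
  · rw [if_pos h, if_pos h, if_neg (by rw [h, bool_eq_not_iff]; simp)]
    ring
  · rw [if_neg h, if_neg h, if_pos ((bool_eq_not_iff _ _).2 h)]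
    ring

lemma TOn_insert {ε : Fin n → ℝ} {S : Finset (Fin n)} {k : Fin n} (hk : k ∉ S)
    (f : (Fin n → Bool) → ℝ) (x : Fin n → Bool) :
    TOn ε (insert k S) f x
      = (1 - ε k) * TOn ε S f x + ε k * TOn ε S f (bflip k x) := by
  unfold TOn
  rw [Finset.mul_sum, Finset.mul_sum, ← Finset.sum_add_distrib]
  apply Finset.sum_congr rfl
  intro y _
  rw [← W_insert hk]
  ring

/-- average over coordinate `k` -/
noncomputable def avg (k : Fin n) (f : (Fin n → Bool) → ℝ) : (Fin n → Bool) → ℝ :=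
  fun x => (f x + f (bflip k x)) / 2

lemma avg_nonneg {k : Fin n} {f : (Fin n → Bool) → ℝ} (hf : ∀ x, 0 ≤ f x) (x : Fin n → Bool) :
    0 ≤ avg k f x := by
  have := hf x; have := hf (bflip k x); unfold avg; positivity

lemma TOn_avg_comm {ε : Fin n → ℝ} {S : Finset (Fin n)} {k : Fin n} (hk : k ∉ S)
    (f : (Fin n → Bool) → ℝ) (x : Fin n → Bool) :
    TOn ε S (avg k f) x = avg k (TOn ε S f) x := by
  show ∑ y : Fin n → Bool, W ε S x y * avg k f y
      = ((∑ y : Fin n → Bool, W ε S x y * f y)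
          + ∑ y : Fin n → Bool, W ε S (bflip k x) y * f y) / 2
  have key : ∑ y : Fin n → Bool, W ε S x y * f (bflip k y)
      = ∑ y : Fin n → Bool, W ε S (bflip k x) y * f y := by
    rw [← Function.Bijective.sum_comp (Function.Involutive.bijective (bflip_invol k))
      (fun y => W ε S (bflip k x) y * f y)]
    apply Finset.sum_congr rfl
    intro y _
    rw [← W_flip hk, bflip_bflip]
  rw [← key, ← Finset.sum_add_distrib, Finset.sum_div]
  apply Finset.sum_congr rfl
  intro y _
  unfold avg
  ring

end NoisePf

namespace NoisePf

variable {n : ℕ}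

lemma abs_le_supNorm (f : (Fin n → Bool) → ℝ) (x : Fin n → Bool) : |f x| ≤ supNorm f :=
  Finset.le_sup' (fun y => |f y|) (Finset.mem_univ x)

lemma le_supNorm (f : (Fin n → Bool) → ℝ) (x : Fin n → Bool) : f x ≤ supNorm f :=
  le_trans (le_abs_self _) (abs_le_supNorm f x)

lemma supNorm_nonneg (f : (Fin n → Bool) → ℝ) : 0 ≤ supNorm f :=
  le_trans (abs_nonneg _) (abs_le_supNorm f (Classical.arbitrary _))

lemma supNorm_le {f : (Fin n → Bool) → ℝ} {C : ℝ} (h : ∀ x, |f x| ≤ C) : supNorm f ≤ C :=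
  Finset.sup'_le _ _ fun x _ => h x

lemma supNorm_pos {f : (Fin n → Bool) → ℝ} {x : Fin n → Bool} (hx : 0 < f x) :
    0 < supNorm f := lt_of_lt_of_le hx (le_supNorm f x)

lemma condExp_univ (f : (Fin n → Bool) → ℝ) : condExp f Finset.univ = f := by
  funext x
  have hset : (Finset.univ.filter fun y : Fin n → Bool => ∀ i ∈ Finset.univ, y i = x i)
      = {x} := by
    ext y
    simp [funext_iff]
  rw [condExp, hset]
  simp

lemma condExp_nonneg {f : (Fin n → Bool) → ℝ} (hf : ∀ x, 0 ≤ f x) (T : Finset (Fin n))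
    (x : Fin n → Bool) : 0 ≤ condExp f T x := by
  unfold condExp
  apply div_nonneg (Finset.sum_nonneg fun y _ => hf y) (Nat.cast_nonneg _)

lemma condExp_pos {f : (Fin n → Bool) → ℝ} (hf : ∀ x, 0 ≤ f x) (T : Finset (Fin n))
    {x : Fin n → Bool} (hx : 0 < f x) : 0 < condExp f T x := by
  unfold condExp
  have hmem : x ∈ Finset.univ.filter (fun y : Fin n → Bool => ∀ i ∈ T, y i = x i) := by
    simp
  apply div_pos
  · exact lt_of_lt_of_le hx (Finset.single_le_sum (fun y _ => hf y) hmem)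
  · exact_mod_cast Finset.card_pos.2 ⟨x, hmem⟩

lemma condExp_avg (f : (Fin n → Bool) → ℝ) (k : Fin n) (T : Finset (Fin n)) :
    condExp (avg k f) T = condExp f (T.erase k) := by
  funext x
  by_cases hkT : k ∈ T
  · -- main case
    set M := Finset.univ.filter (fun y : Fin n → Bool => ∀ i ∈ T, y i = x i) with hM
    set M' := Finset.univ.filter (fun y : Fin n → Bool => ∀ i ∈ T.erase k, y i = x i) with hM'
    have hE1 : M'.filter (fun y => y k = x k) = M := by
      ext y
      simp only [hM, hM', Finset.mem_filter, Finset.mem_univ, true_and]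
      constructor
      · rintro ⟨h1, h2⟩ i hi
        rcases eq_or_ne i k with rfl | hik
        · exact h2
        · exact h1 i (Finset.mem_erase.2 ⟨hik, hi⟩)
      · intro h
        exact ⟨fun i hi => h i (Finset.mem_of_mem_erase hi), h k hkT⟩
    have hE2 : M'.filter (fun y => ¬ y k = x k) = M.image (bflip k) := by
      ext z
      simp only [hM, hM', Finset.mem_filter, Finset.mem_univ, true_and, Finset.mem_image]
      constructor
      · rintro ⟨h1, h2⟩
        refine ⟨bflip k z, fun i hi => ?_, bflip_bflip k z⟩
        rcases eq_or_ne i k with h | hik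
        · rw [h, bflip_self]
          cases hz : z k <;> cases hx' : x k <;> simp_all
        · rw [bflip_ne hik]
          exact h1 i (Finset.mem_erase.2 ⟨hik, hi⟩)
      · rintro ⟨y, hy, rfl⟩
        constructor
        · intro i hi
          have hik := (Finset.mem_erase.1 hi).1
          rw [bflip_ne hik]
          exact hy i (Finset.mem_of_mem_erase hi)
        · rw [bflip_self, hy k hkT]
          exact Bool.not_ne_self (x k)
    have hinj : ∀ a ∈ M, ∀ b ∈ M, bflip k a = bflip k b → a = b :=
      fun a _ b _ h => (bflip_invol k).injective h
    have hsum : ∑ y ∈ M', f y = (∑ y ∈ M, f y) + ∑ y ∈ M, f (bflip k y) := by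
      rw [← Finset.sum_filter_add_sum_filter_not M' (fun y => y k = x k) f, hE1, hE2,
        Finset.sum_image hinj]
    have hcard : (M'.card : ℝ) = 2 * (M.card : ℝ) := by
      rw [← Finset.card_filter_add_card_filter_not (s := M')
        (p := fun y => y k = x k), hE1, hE2, Finset.card_image_of_injective M
        (bflip_invol k).injective]
      push_cast
      ring
    have havg : ∑ y ∈ M, avg k f y = ((∑ y ∈ M, f y) + ∑ y ∈ M, f (bflip k y)) / 2 := by
      rw [← Finset.sum_add_distrib, Finset.sum_div]
      exact Finset.sum_congr rfl fun y _ => by unfold avg; ring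
    show (∑ y ∈ M, avg k f y) / (M.card : ℝ) = (∑ y ∈ M', f y) / (M'.card : ℝ)
    rw [havg, hsum, hcard, div_div]
    try ring
  · rw [Finset.erase_eq_of_notMem hkT]
    set M := Finset.univ.filter (fun y : Fin n → Bool => ∀ i ∈ T, y i = x i) with hM
    have himg : M.image (bflip k) = M := by
      ext z
      simp only [hM, Finset.mem_filter, Finset.mem_univ, true_and, Finset.mem_image]
      constructor
      · rintro ⟨y, hy, rfl⟩ i hi
        have hik : i ≠ k := fun h => hkT (h ▸ hi)
        rw [bflip_ne hik]
        exact hy i hi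
      · intro hz
        refine ⟨bflip k z, fun i hi => ?_, bflip_bflip k z⟩
        have hik : i ≠ k := fun h => hkT (h ▸ hi)
        rw [bflip_ne hik]
        exact hz i hi
    have hinj : ∀ a ∈ M, ∀ b ∈ M, bflip k a = bflip k b → a = b :=
      fun a _ b _ h => (bflip_invol k).injective h
    have hflip : ∑ y ∈ M, f (bflip k y) = ∑ y ∈ M, f y := by
      rw [← Finset.sum_image hinj, himg]
    show (∑ y ∈ M, avg k f y) / (M.card : ℝ) = (∑ y ∈ M, f y) / (M.card : ℝ)
    have havg : ∑ y ∈ M, avg k f y = ((∑ y ∈ M, f y) + ∑ y ∈ M, f (bflip k y)) / 2 := by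
      rw [← Finset.sum_add_distrib, Finset.sum_div]
      exact Finset.sum_congr rfl fun y _ => by unfold avg; ring
    rw [havg, hflip]
    try ring

end NoisePf

namespace NoisePf

lemma logb_bounds {e : ℝ} (he0 : 0 ≤ e) (he1 : e ≤ 1 / 2) :
    -1 ≤ Real.logb 2 (1 - e) ∧ Real.logb 2 (1 - e) ≤ 0 := by
  constructor
  · have h : Real.logb 2 (1/2 : ℝ) ≤ Real.logb 2 (1 - e) :=
      Real.logb_le_logb_of_le (by norm_num) (by norm_num) (by linarith)
    calc (-1 : ℝ) = Real.logb 2 (1/2 : ℝ) := by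
            rw [one_div, Real.logb_inv, Real.logb_self_eq_one] <;> norm_num
      _ ≤ _ := h
  · exact Real.logb_nonpos (by norm_num) (by linarith) (by linarith)

lemma key_scalar {e a b : ℝ} (he0 : 0 ≤ e) (he1 : e ≤ 1 / 2) (hb : 0 ≤ b) (hba : b ≤ a) :
    (1 - e) * a + e * b ≤
      a ^ (1 + Real.logb 2 (1 - e)) * ((a + b) / 2) ^ (1 - (1 + Real.logb 2 (1 - e))) := by
  obtain ⟨hl1, hl0⟩ := logb_bounds he0 he1
  set c : ℝ := 1 - (1 + Real.logb 2 (1 - e)) with hc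
  have hc0 : 0 ≤ c := by simp [hc]; linarith
  have hc1 : c ≤ 1 := by simp [hc]; linarith
  have h1e : (0:ℝ) < 1 - e := by linarith
  have hhalf : ((1:ℝ)/2) ^ c = 1 - e := by
    have : ((1:ℝ)/2) ^ c = (2:ℝ) ^ (-c) := by
      rw [one_div, Real.inv_rpow (by norm_num), Real.rpow_neg (by norm_num)]
    rw [this]
    have hnc : -c = Real.logb 2 (1 - e) := by rw [hc]; ring
    rw [hnc, Real.rpow_logb (by norm_num) (by norm_num) h1e]
  rcases eq_or_lt_of_le (le_trans hb hba) with ha0 | ha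
  · -- a = 0, hence b = 0
    have hb0 : b = 0 := le_antisymm (ha0 ▸ hba) hb
    rw [← ha0, hb0]
    have : (1 - e) * 0 + e * 0 = 0 := by ring
    rw [this]
    positivity
  · -- a > 0
    set t : ℝ := b / a with ht
    have ht0 : 0 ≤ t := div_nonneg hb ha.le
    have ht1 : t ≤ 1 := div_le_one_of_le₀ hba ha.le
    have hbt : b = a * t := by rw [ht]; field_simp
    have conc := (Real.concaveOn_rpow hc0 hc1).2 (x := (1:ℝ)/2) (y := (1:ℝ))
      (by norm_num : ((1:ℝ)/2) ∈ Set.Ici (0:ℝ)) (by norm_num : (1:ℝ) ∈ Set.Ici (0:ℝ))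
      (by linarith : (0:ℝ) ≤ 1 - t) ht0 (by ring)
    simp only [smul_eq_mul, Real.one_rpow, hhalf] at conc
    -- conc : (1 - t) * (1 - e) + t * 1 ≤ ((1 - t) * (1/2) + t * 1) ^ c
    have hmid : (1 - t) * ((1:ℝ)/2) + t * 1 = (1 + t) / 2 := by ring
    rw [hmid] at conc
    have hmul : (1 - e) * a + e * b = a * ((1 - t) * (1 - e) + t * 1) := by
      rw [hbt]; ring
    have hstep : a * ((1 - t) * (1 - e) + t * 1) ≤ a * ((1 + t) / 2) ^ c :=
      mul_le_mul_of_nonneg_left conc ha.le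
    have habt : (a + b) / 2 = a * ((1 + t) / 2) := by rw [hbt]; ring
    have hsplit : a ^ (1 + Real.logb 2 (1 - e)) * ((a + b) / 2) ^ c
        = a * ((1 + t) / 2) ^ c := by
      rw [habt, Real.mul_rpow ha.le (by positivity), ← mul_assoc, ← Real.rpow_add ha]
      have h1 : 1 + Real.logb 2 (1 - e) + c = 1 := by rw [hc]; ring
      rw [h1, Real.rpow_one]
    calc (1 - e) * a + e * b = a * ((1 - t) * (1 - e) + t * 1) := hmul
      _ ≤ a * ((1 + t) / 2) ^ c := hstep
      _ = _ := hsplit.symm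

lemma key_max {e a b : ℝ} (he0 : 0 ≤ e) (he1 : e ≤ 1 / 2) (ha : 0 ≤ a) (hb : 0 ≤ b) :
    (1 - e) * a + e * b ≤
      (max a b) ^ (1 + Real.logb 2 (1 - e)) *
        ((a + b) / 2) ^ (1 - (1 + Real.logb 2 (1 - e))) := by
  rcases le_total b a with h | h
  · rw [max_eq_left h]
    exact key_scalar he0 he1 hb h
  · rw [max_eq_right h]
    have : (1 - e) * a + e * b ≤ (1 - e) * b + e * a := by nlinarith
    calc (1 - e) * a + e * b ≤ (1 - e) * b + e * a := this
      _ ≤ b ^ (1 + Real.logb 2 (1 - e)) * ((b + a) / 2) ^ (1 - (1 + Real.logb 2 (1 - e))) :=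
          key_scalar he0 he1 ha h
      _ = _ := by rw [add_comm b a]

end NoisePf

namespace NoisePf

noncomputable def lam {n : ℕ} (ε : Fin n → ℝ) (i : Fin n) : ℝ := 1 + Real.logb 2 (1 - ε i)

lemma lam_nonneg {n : ℕ} {ε : Fin n → ℝ} (hε0 : ∀ i, 0 ≤ ε i) (hε1 : ∀ i, ε i ≤ 1 / 2)
    (i : Fin n) : 0 ≤ lam ε i := by
  have := (logb_bounds (hε0 i) (hε1 i)).1
  unfold lam; linarith

lemma lam_le_one {n : ℕ} {ε : Fin n → ℝ} (hε0 : ∀ i, 0 ≤ ε i) (hε1 : ∀ i, ε i ≤ 1 / 2)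
    (i : Fin n) : lam ε i ≤ 1 := by
  have := (logb_bounds (hε0 i) (hε1 i)).2
  unfold lam; linarith

lemma main_ind {n : ℕ} {ε : Fin n → ℝ} (hε0 : ∀ i, 0 ≤ ε i) (hε1 : ∀ i, ε i ≤ 1 / 2)
    (S : Finset (Fin n)) :
    ∀ f : (Fin n → Bool) → ℝ, (∀ x, 0 ≤ f x) →
      supNorm (TOn ε S f) ≤
        ∏ U ∈ S.powerset,
          supNorm (condExp f Uᶜ) ^
            ((∏ i ∈ U, (1 - lam ε i)) * ∏ i ∈ S \ U, lam ε i) := by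
  classical
  induction S using Finset.induction_on with
  | empty =>
      intro f hf
      rw [TOn_empty]
      simp [Finset.powerset_empty, Finset.compl_empty, condExp_univ]
  | @insert k S hk ih =>
      intro f hf
      have hlamk0 : 0 ≤ lam ε k := lam_nonneg hε0 hε1 k
      have hlamk1 : lam ε k ≤ 1 := lam_le_one hε0 hε1 k
      have hgnn : ∀ x, 0 ≤ TOn ε S f x := TOn_nonneg hε0 hε1 S hf
      have step1 : supNorm (TOn ε (insert k S) f) ≤
          supNorm (TOn ε S f) ^ lam ε k * supNorm (TOn ε S (avg k f)) ^ (1 - lam ε k) := by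
        have hTcomm : TOn ε S (avg k f) = avg k (TOn ε S f) := by
          funext x; exact TOn_avg_comm hk f x
        rw [hTcomm]
        apply supNorm_le
        intro x
        have hnn : 0 ≤ TOn ε (insert k S) f x := TOn_nonneg hε0 hε1 _ hf x
        rw [abs_of_nonneg hnn, TOn_insert hk]
        calc (1 - ε k) * TOn ε S f x + ε k * TOn ε S f (bflip k x)
            ≤ (max (TOn ε S f x) (TOn ε S f (bflip k x))) ^ lam ε k *
              ((TOn ε S f x + TOn ε S f (bflip k x)) / 2) ^ (1 - lam ε k) :=
              key_max (hε0 k) (hε1 k) (hgnn x) (hgnn (bflip k x))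
          _ ≤ supNorm (TOn ε S f) ^ lam ε k * supNorm (avg k (TOn ε S f)) ^ (1 - lam ε k) := by
              apply mul_le_mul
              · exact Real.rpow_le_rpow (le_max_of_le_left (hgnn x))
                  (max_le (le_supNorm _ x) (le_supNorm _ (bflip k x))) hlamk0
              · exact Real.rpow_le_rpow
                  (div_nonneg (add_nonneg (hgnn x) (hgnn (bflip k x))) (by norm_num))
                  (le_supNorm (avg k (TOn ε S f)) x) (by linarith)
              · exact Real.rpow_nonneg
                  (div_nonneg (add_nonneg (hgnn x) (hgnn (bflip k x))) (by norm_num)) _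
              · exact Real.rpow_nonneg (supNorm_nonneg _) _
      have hA := ih f hf
      have hB := ih (avg k f) (avg_nonneg hf)
      have hprodnn1 : (0:ℝ) ≤ ∏ U ∈ S.powerset,
          supNorm (condExp f Uᶜ) ^ ((∏ i ∈ U, (1 - lam ε i)) * ∏ i ∈ S \ U, lam ε i) :=
        Finset.prod_nonneg fun U _ => Real.rpow_nonneg (supNorm_nonneg _) _
      have step2 : supNorm (TOn ε (insert k S) f) ≤
          (∏ U ∈ S.powerset, supNorm (condExp f Uᶜ) ^
              ((∏ i ∈ U, (1 - lam ε i)) * ∏ i ∈ S \ U, lam ε i)) ^ lam ε k *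
          (∏ U ∈ S.powerset, supNorm (condExp (avg k f) Uᶜ) ^
              ((∏ i ∈ U, (1 - lam ε i)) * ∏ i ∈ S \ U, lam ε i)) ^ (1 - lam ε k) := by
        refine le_trans step1 (mul_le_mul ?_ ?_ ?_ ?_)
        · exact Real.rpow_le_rpow (supNorm_nonneg _) hA hlamk0
        · exact Real.rpow_le_rpow (supNorm_nonneg _) hB (by linarith)
        · exact Real.rpow_nonneg (supNorm_nonneg _) _
        · exact Real.rpow_nonneg hprodnn1 _
      refine le_trans step2 (le_of_eq ?_)
      -- now pure algebra
      rw [← Real.finset_prod_rpow _ _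
          (fun U _ => Real.rpow_nonneg (supNorm_nonneg _) _) (lam ε k),
        ← Real.finset_prod_rpow _ _
          (fun U _ => Real.rpow_nonneg (supNorm_nonneg _) _) (1 - lam ε k),
        Finset.prod_powerset_insert hk]
      congr 1
      · apply Finset.prod_congr rfl
        intro U hU
        have hkU : k ∉ U := fun h => hk (Finset.mem_powerset.1 hU h)
        have hsd : (insert k S) \ U = insert k (S \ U) :=
          Finset.insert_sdiff_of_notMem S hkU
        have hknSU : k ∉ S \ U := fun h => hk (Finset.mem_sdiff.1 h).1
        rw [hsd, Finset.prod_insert hknSU, ← Real.rpow_mul (supNorm_nonneg _)]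
        congr 1
        ring
      · apply Finset.prod_congr rfl
        intro U hU
        have hkU : k ∉ U := fun h => hk (Finset.mem_powerset.1 hU h)
        have hsd : (insert k S) \ (insert k U) = S \ U := by
          ext i
          simp only [Finset.mem_sdiff, Finset.mem_insert, not_or]
          constructor
          · rintro ⟨h1 | h1, h2, h3⟩
            · exact absurd h1 h2
            · exact ⟨h1, h3⟩
          · rintro ⟨h1, h2⟩
            exact ⟨Or.inr h1, fun h => hk (h ▸ h1), h2⟩
        have hcond : condExp (avg k f) Uᶜ = condExp f (insert k U)ᶜ := by
          rw [condExp_avg, Finset.compl_insert]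
        rw [hcond, hsd, Finset.prod_insert hkU, ← Real.rpow_mul (supNorm_nonneg _)]
        congr 1
        ring

end NoisePf

/-- **Theorem (main inequality, vector noise, `ℓ_∞` version).** For `0 ≤ ε_i ≤ 1/2` and
`λ_i = 1 + log₂(1-ε_i)`, for every nonnegative `f ≢ 0` on `{0,1}^n`,
`log ‖T_ε⃗ f‖_∞ ≤ Σ_T (Π_{i∈T} λ_i)(Π_{j∉T} (1-λ_j)) · log ‖E(f|T)‖_∞`. -/
theorem noiseVec_sup_le_avg_condExp (n : ℕ) (hn : 1 ≤ n)
    (ε : Fin n → ℝ) (hε0 : ∀ i, 0 ≤ ε i) (hε1 : ∀ i, ε i ≤ 1 / 2)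
    (f : (Fin n → Bool) → ℝ) (hf : ∀ x, 0 ≤ f x) (hf0 : f ≠ 0) :
    Real.log (supNorm (noiseOpVec ε f)) ≤
      ∑ T : Finset (Fin n),
        (∏ i ∈ T, (1 + Real.logb 2 (1 - ε i))) *
          (∏ j ∈ Tᶜ, (1 - (1 + Real.logb 2 (1 - ε j)))) *
          Real.log (supNorm (condExp f T)) := by
  classical
  open NoisePf in
  obtain ⟨x₀, hx₀⟩ : ∃ x, 0 < f x := by
    by_contra hc
    push_neg at hc
    exact hf0 (funext fun x => le_antisymm (hc x) (hf x))
  have hTpos : 0 < supNorm (noiseOpVec ε f) := by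
    rw [← TOn_univ]
    refine supNorm_pos (x := x₀) ?_
    refine Finset.sum_pos' (fun y _ => mul_nonneg (W_nonneg hε0 hε1 _ _ _) (hf y)) ⟨x₀,
      Finset.mem_univ _, ?_⟩
    have hW : W ε Finset.univ x₀ x₀ = ∏ i : Fin n, (1 - ε i) := by
      unfold W
      rw [Finset.compl_univ, Finset.prod_empty, mul_one]
      exact Finset.prod_congr rfl fun i _ => if_pos rfl
    rw [hW]
    have : (0:ℝ) < ∏ i : Fin n, (1 - ε i) :=
      Finset.prod_pos fun i _ => by linarith [hε1 i]
    exact mul_pos this hx₀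
  have hNpos : ∀ T : Finset (Fin n), 0 < supNorm (condExp f T) :=
    fun T => supNorm_pos (condExp_pos hf T hx₀)
  have h := main_ind hε0 hε1 Finset.univ f hf
  rw [TOn_univ] at h
  have hlog := Real.log_le_log hTpos h
  refine le_trans hlog (le_of_eq ?_)
  rw [Real.log_prod (fun U _ => ne_of_gt (Real.rpow_pos_of_pos (hNpos Uᶜ) _))]
  have hterm : ∀ U : Finset (Fin n),
      Real.log (supNorm (condExp f Uᶜ) ^
        ((∏ i ∈ U, (1 - lam ε i)) * ∏ i ∈ Finset.univ \ U, lam ε i))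
      = ((∏ i ∈ U, (1 - lam ε i)) * ∏ i ∈ Finset.univ \ U, lam ε i) *
          Real.log (supNorm (condExp f Uᶜ)) :=
    fun U => Real.log_rpow (hNpos Uᶜ) _
  rw [Finset.powerset_univ]
  rw [Finset.sum_congr rfl fun U _ => hterm U]
  refine Fintype.sum_bijective compl (Function.Involutive.bijective compl_compl) _ _ ?_
  intro U
  rw [← Finset.compl_eq_univ_sdiff, compl_compl]
  unfold NoisePf.lam
  ring
end

section
/- Let n ≥ 1, let q ≥ 2 be an integer, and let ε⃗ = (ε₁,…,ε_n) with 0 ≤ ε_i ≤ 1/2 for each i. Set λ_i = 1 + (1/(q-1))·log₂(ε_i^q + (1-ε_i)^q). If f is the characteristic function of a subcube of {0,1}^n, then equality holds: log ‖T_{ε⃗} f‖_q = Σ_{T⊆[n]} (Π_{i∈T} λ_i)(Π_{j∉T} (1-λ_j)) · log ‖E(f|T)‖_q. -/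
set_option maxHeartbeats 1000000 in
lemma cube_sum {n : ℕ} (u : Fin n → Bool → ℝ) :
    ∑ y : Fin n → Bool, ∏ i, u i (y i) = ∏ i, (u i false + u i true) := by
  rw [← Fintype.prod_sum]
  exact Finset.prod_congr rfl fun i _ => by simp [Fintype.sum_bool, add_comm]

set_option maxHeartbeats 1000000 in
lemma indicator_prod {n : ℕ} (K : Finset (Fin n)) (a y : Fin n → Bool) :
    (if ∀ i ∈ K, y i = a i then (1:ℝ) else 0)
      = ∏ i, (if i ∈ K then (if y i = a i then (1:ℝ) else 0) else 1) := by
  rw [Finset.prod_ite_mem, Finset.univ_inter, Finset.prod_boole]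
  by_cases h : ∀ i ∈ K, y i = a i <;> simp [h]

set_option maxHeartbeats 1000000 in
lemma lqNorm_prod_form' {n : ℕ} (q : ℕ) (g : (Fin n → Bool) → ℝ)
    (v : Fin n → Bool → ℝ) (hg : ∀ x, g x = ∏ i, v i (x i))
    (m : Fin n → ℝ)
    (hv : ∀ i, |v i false| ^ q + |v i true| ^ q = 2 * m i) :
    (((2 : ℝ) ^ n)⁻¹ * ∑ x : Fin n → Bool, |g x| ^ q) = ∏ i, m i := by
  have h1 : ∀ x, |g x| ^ q = ∏ i, |v i (x i)| ^ q := by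
    intro x
    rw [hg, Finset.abs_prod, Finset.prod_pow]
  simp_rw [h1]
  rw [show (∑ x : Fin n → Bool, ∏ i, |v i (x i)| ^ q)
      = ∏ i, (|v i false| ^ q + |v i true| ^ q) from cube_sum (fun i b => |v i b| ^ q)]
  have h2 : ∏ i, (|v i false| ^ q + |v i true| ^ q) = (2:ℝ)^n * ∏ i, m i := by
    simp_rw [hv]
    rw [Finset.prod_mul_distrib, Finset.prod_const, Finset.card_univ, Fintype.card_fin]
  rw [h2, ← mul_assoc, inv_mul_cancel₀ (by positivity), one_mul]

set_option maxHeartbeats 1000000 in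
lemma noise_eval {n : ℕ} (ε : Fin n → ℝ) (K : Finset (Fin n)) (a : Fin n → Bool)
    (f : (Fin n → Bool) → ℝ)
    (hf : ∀ x, f x = if ∀ i ∈ K, x i = a i then 1 else 0) (x : Fin n → Bool) :
    noiseOpVec ε f x
      = ∏ i, (if i ∈ K then (if x i = a i then 1 - ε i else ε i) else 1) := by
  unfold noiseOpVec
  have h1 : ∀ y : Fin n → Bool,
      (∏ i : Fin n, if y i = x i then 1 - ε i else ε i) * f y
      = ∏ i, ((if y i = x i then 1 - ε i else ε i) *
          (if i ∈ K then (if y i = a i then (1:ℝ) else 0) else 1)) := by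
    intro y
    rw [hf y, indicator_prod K a y, ← Finset.prod_mul_distrib]
  simp_rw [h1]
  refine (cube_sum (fun i b => (if b = x i then 1 - ε i else ε i) *
      (if i ∈ K then (if b = a i then (1:ℝ) else 0) else 1))).trans
    (Finset.prod_congr rfl fun i _ => ?_)
  by_cases hiK : i ∈ K
  · simp only [hiK, if_true]
    cases hx : x i <;> cases ha : a i <;> simp
  · simp only [hiK, if_false]
    cases hx : x i <;> simp

set_option maxHeartbeats 1000000 in
lemma condExp_eval {n : ℕ} (K : Finset (Fin n)) (a : Fin n → Bool)
    (f : (Fin n → Bool) → ℝ)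
    (hf : ∀ x, f x = if ∀ i ∈ K, x i = a i then 1 else 0)
    (T : Finset (Fin n)) (x : Fin n → Bool) :
    condExp f T x = ∏ i,
      (if i ∈ T then (if i ∈ K then (if x i = a i then (1:ℝ) else 0) else 1)
       else (if i ∈ K then 1/2 else 1)) := by
  unfold condExp
  have hden : ((Finset.univ.filter (fun y : Fin n → Bool => ∀ i ∈ T, y i = x i)).card : ℝ)
      = ∏ i, (if i ∈ T then (1:ℝ) else 2) := by
    rw [Finset.card_filter]
    push_cast
    have h1 : ∀ y : Fin n → Bool, (if ∀ i ∈ T, y i = x i then (1:ℝ) else 0)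
        = ∏ i, (if i ∈ T then (if y i = x i then (1:ℝ) else 0) else 1) :=
      fun y => indicator_prod T x y
    simp_rw [h1]
    refine (cube_sum (fun i b => if i ∈ T then (if b = x i then (1:ℝ) else 0) else 1)).trans
      (Finset.prod_congr rfl fun i _ => ?_)
    by_cases hi : i ∈ T
    · cases hx : x i <;> simp [hi]
    · norm_num [hi]
  have hnum : (∑ y ∈ Finset.univ.filter (fun y : Fin n → Bool => ∀ i ∈ T, y i = x i), f y)
      = ∏ i, ((if i ∈ T then (if i ∈ K then (if x i = a i then (1:ℝ) else 0) else 1)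
       else (if i ∈ K then 1 else 2))) := by
    rw [Finset.sum_filter]
    have h1 : ∀ y : Fin n → Bool, (if ∀ i ∈ T, y i = x i then f y else 0)
        = ∏ i, ((if i ∈ T then (if y i = x i then (1:ℝ) else 0) else 1) *
            (if i ∈ K then (if y i = a i then (1:ℝ) else 0) else 1)) := by
      intro y
      rw [Finset.prod_mul_distrib, ← indicator_prod T x y, ← indicator_prod K a y, ← hf y]
      by_cases h : ∀ i ∈ T, y i = x i <;> simp [h]
    simp_rw [h1]
    refine (cube_sum (fun i b => (if i ∈ T then (if b = x i then (1:ℝ) else 0) else 1) *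
        (if i ∈ K then (if b = a i then (1:ℝ) else 0) else 1))).trans
      (Finset.prod_congr rfl fun i _ => ?_)
    by_cases hiT : i ∈ T <;> by_cases hiK : i ∈ K
    · cases hx : x i <;> cases ha : a i <;> simp [hiT, hiK]
    · cases hx : x i <;> simp [hiT, hiK]
    · cases ha : a i <;> simp [hiT, hiK]
    · norm_num [hiT, hiK]
  rw [hnum, hden, ← Finset.prod_div_distrib]
  refine Finset.prod_congr rfl fun i _ => ?_
  by_cases hiT : i ∈ T <;> by_cases hiK : i ∈ K <;> simp [hiT, hiK]

set_option maxHeartbeats 1000000 in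
lemma weighted_sum {n : ℕ} (lam : Fin n → ℝ) (c1 c0 : ℝ) (K : Finset (Fin n)) :
    ∑ T : Finset (Fin n), (∏ i ∈ T, lam i) * (∏ j ∈ Tᶜ, (1 - lam j)) *
      (∑ i ∈ K, if i ∈ T then c1 else c0)
    = ∑ i ∈ K, (lam i * c1 + (1 - lam i) * c0) := by
  have key : ∀ T : Finset (Fin n),
      (∏ i ∈ T, lam i) * (∏ j ∈ Tᶜ, (1 - lam j)) * (∑ i ∈ K, if i ∈ T then c1 else c0)
      = ∑ i ∈ K, (∏ j ∈ T, lam j * (if j = i then c1 else 1)) *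
          ∏ j ∈ Tᶜ, (1 - lam j) * (if j = i then c0 else 1) := by
    intro T
    rw [Finset.mul_sum]
    refine Finset.sum_congr rfl fun i _ => ?_
    rw [Finset.prod_mul_distrib, Finset.prod_mul_distrib, Finset.prod_ite_eq',
      Finset.prod_ite_eq']
    by_cases hi : i ∈ T
    · simp only [hi, if_true, Finset.mem_compl, not_true, if_false]
      ring
    · simp only [hi, if_false, Finset.mem_compl, not_false_iff, if_true]
      ring
  simp_rw [key]
  rw [Finset.sum_comm]
  refine Finset.sum_congr rfl fun i _ => ?_
  rw [← Fintype.prod_add]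
  have h2 : ∀ j, lam j * (if j = i then c1 else 1) + (1 - lam j) * (if j = i then c0 else 1)
      = if j = i then lam i * c1 + (1 - lam i) * c0 else 1 := by
    intro j; by_cases hj : j = i
    · subst hj; simp
    · simp only [hj, if_false]; ring
  simp_rw [h2]
  rw [Finset.prod_ite_eq']
  simp

set_option maxHeartbeats 1000000 in
/-- **Theorem (tightness for subcubes, vector noise).** If `f` is the characteristic
function of a subcube `{x : x_i = a_i for i ∈ K}`, then the vector-noise inequality
holds with equality. -/
theorem noiseVec_lq_eq_avg_condExp_of_subcube (n : ℕ) (hn : 1 ≤ n) (q : ℕ) (hq : 2 ≤ q)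
    (ε : Fin n → ℝ) (hε0 : ∀ i, 0 ≤ ε i) (hε1 : ∀ i, ε i ≤ 1 / 2)
    (K : Finset (Fin n)) (a : Fin n → Bool)
    (f : (Fin n → Bool) → ℝ)
    (hf : ∀ x, f x = if ∀ i ∈ K, x i = a i then 1 else 0) :
    Real.log (lqNorm q (noiseOpVec ε f)) =
      ∑ T : Finset (Fin n),
        (∏ i ∈ T, (1 + 1 / ((q : ℝ) - 1) * Real.logb 2 (ε i ^ q + (1 - ε i) ^ q))) *
          (∏ j ∈ Tᶜ, (1 - (1 + 1 / ((q : ℝ) - 1) * Real.logb 2 (ε j ^ q + (1 - ε j) ^ q)))) *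
          Real.log (lqNorm q (condExp f T)) := by
  have hq2 : (2:ℝ) ≤ (q:ℝ) := by exact_mod_cast hq
  have hq0 : (q:ℝ) ≠ 0 := by linarith
  have hq1 : (q:ℝ) - 1 ≠ 0 := by linarith
  have hqn : q ≠ 0 := by omega
  have h1ε : ∀ i, (0:ℝ) < 1 - ε i := fun i => by linarith [hε1 i]
  have hspos : ∀ i, (0:ℝ) < ε i ^ q + (1 - ε i) ^ q := fun i =>
    add_pos_of_nonneg_of_pos (pow_nonneg (hε0 i) q) (pow_pos (h1ε i) q)
  have hl2 : Real.log 2 ≠ 0 := ne_of_gt (Real.log_pos one_lt_two)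
  have hlhalf : Real.log ((1:ℝ)/2) = -Real.log 2 := by rw [one_div, Real.log_inv]
  -- the LHS
  have hnoise : (((2:ℝ)^n)⁻¹ * ∑ x : Fin n → Bool, |noiseOpVec ε f x| ^ q)
      = ∏ i, (if i ∈ K then (ε i ^ q + (1 - ε i) ^ q) / 2 else 1) := by
    refine lqNorm_prod_form' q _
      (fun i b => if i ∈ K then (if b = a i then 1 - ε i else ε i) else 1)
      (noise_eval ε K a f hf) _ (fun i => ?_)
    have e0 : |ε i| = ε i := abs_of_nonneg (hε0 i)
    have e1 : |1 - ε i| = 1 - ε i := abs_of_nonneg (le_of_lt (h1ε i))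
    by_cases hiK : i ∈ K
    · cases ha : a i <;> simp [hiK, ha, e0, e1] <;> ring
    · norm_num [hiK]
  have hL : Real.log (lqNorm q (noiseOpVec ε f))
      = (1/(q:ℝ)) * ∑ i ∈ K, Real.log ((ε i ^ q + (1 - ε i) ^ q) / 2) := by
    unfold lqNorm
    rw [hnoise, Finset.prod_ite_mem, Finset.univ_inter,
      Real.log_rpow (Finset.prod_pos fun i _ => div_pos (hspos i) two_pos),
      Real.log_prod (fun i _ => ne_of_gt (div_pos (hspos i) two_pos))]
  -- the per-T norms
  have hw : ∀ i : Fin n, ∀ T : Finset (Fin n),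
      (0:ℝ) < (if i ∈ T then 1/2 else (1/2)^q) := by
    intro i T; by_cases hi : i ∈ T <;> simp [hi] <;> positivity
  have hC : ∀ T : Finset (Fin n), (((2:ℝ)^n)⁻¹ * ∑ x : Fin n → Bool, |condExp f T x| ^ q)
      = ∏ i, (if i ∈ K then (if i ∈ T then 1/2 else (1/2)^q) else 1) := by
    intro T
    refine lqNorm_prod_form' q _
      (fun i b => if i ∈ T then (if i ∈ K then (if b = a i then (1:ℝ) else 0) else 1)
        else (if i ∈ K then 1/2 else 1))
      (condExp_eval K a f hf T) _ (fun i => ?_)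
    have e2 : |(1:ℝ)/2| = 1/2 := abs_of_nonneg (by norm_num)
    by_cases hiT : i ∈ T <;> by_cases hiK : i ∈ K
    · cases ha : a i <;> simp [hiT, hiK, ha, zero_pow hqn] <;> norm_num
    · norm_num [hiT, hiK]
    · simp [hiT, hiK]
      ring
    · norm_num [hiT, hiK]
  have hCnorm : ∀ T : Finset (Fin n), Real.log (lqNorm q (condExp f T))
      = ∑ i ∈ K, (if i ∈ T then (1/(q:ℝ)) * Real.log ((1:ℝ)/2) else Real.log ((1:ℝ)/2)) := by
    intro T
    unfold lqNorm
    rw [hC T, Finset.prod_ite_mem, Finset.univ_inter,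
      Real.log_rpow (Finset.prod_pos fun i _ => hw i T),
      Real.log_prod (fun i _ => ne_of_gt (hw i T)), Finset.mul_sum]
    refine Finset.sum_congr rfl fun i _ => ?_
    by_cases hi : i ∈ T
    · simp [hi]
    · rw [if_neg hi, if_neg hi, Real.log_pow]
      push_cast
      field_simp
  -- assemble
  rw [hL]
  calc (1/(q:ℝ)) * ∑ i ∈ K, Real.log ((ε i ^ q + (1 - ε i) ^ q) / 2)
      = ∑ i ∈ K, ((1 + 1 / ((q : ℝ) - 1) * Real.logb 2 (ε i ^ q + (1 - ε i) ^ q))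
            * ((1/(q:ℝ)) * Real.log ((1:ℝ)/2))
          + (1 - (1 + 1 / ((q : ℝ) - 1) * Real.logb 2 (ε i ^ q + (1 - ε i) ^ q)))
            * Real.log ((1:ℝ)/2)) := by
        rw [Finset.mul_sum]
        refine Finset.sum_congr rfl fun i _ => ?_
        rw [Real.log_div (ne_of_gt (hspos i)) two_ne_zero, hlhalf]
        simp only [Real.logb]
        field_simp
        ring
    _ = ∑ T : Finset (Fin n),
          (∏ i ∈ T, (1 + 1 / ((q : ℝ) - 1) * Real.logb 2 (ε i ^ q + (1 - ε i) ^ q))) *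
          (∏ j ∈ Tᶜ, (1 - (1 + 1 / ((q : ℝ) - 1) * Real.logb 2 (ε j ^ q + (1 - ε j) ^ q)))) *
          (∑ i ∈ K, if i ∈ T then (1/(q:ℝ)) * Real.log ((1:ℝ)/2) else Real.log ((1:ℝ)/2)) :=
        (weighted_sum
          (fun i => 1 + 1 / ((q : ℝ) - 1) * Real.logb 2 (ε i ^ q + (1 - ε i) ^ q))
          ((1/(q:ℝ)) * Real.log ((1:ℝ)/2)) (Real.log ((1:ℝ)/2)) K).symm
    _ = ∑ T : Finset (Fin n),
          (∏ i ∈ T, (1 + 1 / ((q : ℝ) - 1) * Real.logb 2 (ε i ^ q + (1 - ε i) ^ q))) *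
          (∏ j ∈ Tᶜ, (1 - (1 + 1 / ((q : ℝ) - 1) * Real.logb 2 (ε j ^ q + (1 - ε j) ^ q)))) *
          Real.log (lqNorm q (condExp f T)) := by
        refine Finset.sum_congr rfl fun T _ => ?_
        rw [hCnorm T]
end

section
/- Let 0 ≤ ε ≤ 1/2 and set λ = 1 + log₂(1-ε). Then for every nonnegative function f on {0,1} (the one-dimensional cube), ‖T_ε f‖_∞ ≤ ‖f‖_1^{1-λ} · ‖f‖_∞^{λ}. -/
lemma one_dim_key (ε : ℝ) (hε0 : 0 ≤ ε) (hε1 : ε ≤ 1 / 2)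
    (a M : ℝ) (ha : 0 ≤ a) (haM : a ≤ M) :
    ε * a + (1 - ε) * M ≤
      ((a + M) / 2) ^ (-(Real.logb 2 (1 - ε))) * M ^ (1 + Real.logb 2 (1 - ε)) := by
  have h1ε : (0:ℝ) < 1 - ε := by linarith
  set L := Real.logb 2 (1 - ε) with hL
  set μ := -L with hμ
  have hμ0 : 0 ≤ μ := by
    have : L ≤ 0 := Real.logb_nonpos (by norm_num) (by linarith) (by linarith)
    linarith
  have hμ1 : μ ≤ 1 := by
    have h2 : (2:ℝ) ^ (-1:ℝ) ≤ 1 - ε := by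
      rw [Real.rpow_neg (by norm_num), Real.rpow_one]; norm_num; linarith
    have := (Real.le_logb_iff_rpow_le (by norm_num) h1ε).2 h2
    rw [← hL] at this; linarith
  have hhalf : ((1:ℝ)/2) ^ μ = 1 - ε := by
    have : ((1:ℝ)/2) ^ μ = (2:ℝ) ^ L := by
      rw [one_div, Real.inv_rpow (by norm_num), ← Real.rpow_neg (by norm_num), hμ,
        neg_neg]
    rw [this, hL, Real.rpow_logb (by norm_num) (by norm_num) h1ε]
  have hM0 : 0 ≤ M := le_trans ha haM
  rcases eq_or_lt_of_le hM0 with hM | hM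
  · -- M = 0, hence a = 0
    have haz : a = 0 := le_antisymm (by linarith) ha
    have : ε * a + (1 - ε) * M = 0 := by rw [haz, ← hM]; ring
    rw [this]
    positivity
  · -- M > 0
    set t := a / M with ht
    have ht0 : 0 ≤ t := div_nonneg ha hM0
    have ht1 : t ≤ 1 := (div_le_one hM).2 haM
    have hc := (Real.concaveOn_rpow hμ0 hμ1).2 (x := 1/2) (y := 1)
      (by norm_num : (1:ℝ)/2 ∈ Set.Ici (0:ℝ)) (by norm_num : (1:ℝ) ∈ Set.Ici (0:ℝ))
      (by linarith : 0 ≤ 1 - t) ht0 (by ring)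
    simp only [smul_eq_mul, Real.one_rpow] at hc
    rw [hhalf] at hc
    have hkey : 1 - ε + ε * t ≤ ((1 + t) / 2) ^ μ := by
      have he : (1 - t) * (1/2) + t * 1 = (1 + t) / 2 := by ring
      rw [he] at hc
      nlinarith [hc]
    -- assemble
    have hsplit : ((a + M) / 2) ^ μ * M ^ (1 + L) = ((1 + t) / 2) ^ μ * M := by
      have hA : (a + M) / 2 = ((1 + t) / 2) * M := by
        field_simp [ht]
        have hMt : M * t = a := by rw [ht]; field_simp
        linear_combination -hMt
      rw [hA, Real.mul_rpow (by positivity) hM0, mul_assoc, ← Real.rpow_add hM]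
      have : μ + (1 + L) = 1 := by rw [hμ]; ring
      rw [this, Real.rpow_one]
    rw [hsplit]
    have : ε * a + (1 - ε) * M = (1 - ε + ε * t) * M := by
      field_simp [ht]
      have hMt : M * t = a := by rw [ht]; field_simp
      linear_combination (-ε) * hMt
    rw [this]
    exact mul_le_mul_of_nonneg_right hkey hM0

/-- **Proposition (one-dimensional inequality, `ℓ_∞`).** Let `0 ≤ ε ≤ 1/2` and
`λ = 1 + log₂(1-ε)`. For every nonnegative function `f` on `{0,1}`
(identifying `0 ↔ false`, `1 ↔ true`), `‖T_ε f‖_∞ ≤ ‖f‖_1^{1-λ} · ‖f‖_∞^{λ}`, where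
`(T_ε f)(0) = (1-ε)f(0) + εf(1)`, `(T_ε f)(1) = εf(0) + (1-ε)f(1)`,
`‖f‖_1 = (f(0)+f(1))/2` and `‖f‖_∞ = max(f(0), f(1))` (for nonnegative `f`). -/
theorem one_dim_sup_inequality (ε : ℝ) (hε0 : 0 ≤ ε) (hε1 : ε ≤ 1 / 2)
    (f : Bool → ℝ) (hf : ∀ b, 0 ≤ f b) :
    max ((1 - ε) * f false + ε * f true) (ε * f false + (1 - ε) * f true) ≤
      ((f false + f true) / 2) ^ (1 - (1 + Real.logb 2 (1 - ε))) *
        (max (f false) (f true)) ^ (1 + Real.logb 2 (1 - ε)) := by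
  have hexp : 1 - (1 + Real.logb 2 (1 - ε)) = -(Real.logb 2 (1 - ε)) := by ring
  rw [hexp]
  rcases le_total (f false) (f true) with h | h
  · rw [max_eq_right h]
    have key := one_dim_key ε hε0 hε1 (f false) (f true) (hf false) h
    refine max_le (le_trans ?_ key) (le_of_eq ?_ |>.trans key)
    · nlinarith [hf false, hf true]
    · ring
  · rw [max_eq_left h]
    have key := one_dim_key ε hε0 hε1 (f true) (f false) (hf true) h
    have hsum : (f false + f true) = (f true + f false) := by ring
    rw [hsum]
    refine max_le (le_of_eq ?_ |>.trans key) (le_trans ?_ key)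
    · ring
    · nlinarith [hf false, hf true]
end

section
/- The function G : ℝ → ℝ defined by G(z) = ln(ln(1 + e^{2z})) is concave on all of ℝ. -/
open Real

/-- **Lemma (q = 2 case).** The function `G(z) = ln(ln(1 + e^{2z}))` is concave on all of `ℝ`. -/
theorem concave_log_log_one_add_exp :
    ConcaveOn ℝ Set.univ (fun z : ℝ => Real.log (Real.log (1 + Real.exp (2 * z)))) := by
  -- basic positivity facts
  have hA : ∀ x : ℝ, (0:ℝ) < 1 + Real.exp (2 * x) := fun x => by positivity
  have hL : ∀ x : ℝ, (0:ℝ) < Real.log (1 + Real.exp (2 * x)) := fun x => by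
    apply Real.log_pos
    have := Real.exp_pos (2 * x); linarith
  -- first derivative
  set g' : ℝ → ℝ := fun x =>
    (2 * Real.exp (2 * x) / (1 + Real.exp (2 * x))) / Real.log (1 + Real.exp (2 * x)) with hg'
  -- second derivative
  set g'' : ℝ → ℝ := fun x =>
    (((2 * (2 * Real.exp (2 * x)) * (1 + Real.exp (2 * x)) -
        2 * Real.exp (2 * x) * (2 * Real.exp (2 * x))) / (1 + Real.exp (2 * x)) ^ 2) *
        Real.log (1 + Real.exp (2 * x)) -
      (2 * Real.exp (2 * x) / (1 + Real.exp (2 * x))) *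
        (2 * Real.exp (2 * x) / (1 + Real.exp (2 * x)))) /
      (Real.log (1 + Real.exp (2 * x))) ^ 2 with hg''
  have hexp : ∀ x : ℝ, HasDerivAt (fun z : ℝ => Real.exp (2 * z)) (2 * Real.exp (2 * x)) x := by
    intro x
    have h1 : HasDerivAt (fun z : ℝ => 2 * z) 2 x := by
      simpa using (hasDerivAt_id x).const_mul (2:ℝ)
    simpa [mul_comm] using h1.exp
  have hAd : ∀ x : ℝ, HasDerivAt (fun z : ℝ => 1 + Real.exp (2 * z)) (2 * Real.exp (2 * x)) x :=
    fun x => (hexp x).const_add 1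
  have hLd : ∀ x : ℝ, HasDerivAt (fun z : ℝ => Real.log (1 + Real.exp (2 * z)))
      (2 * Real.exp (2 * x) / (1 + Real.exp (2 * x))) x :=
    fun x => (hAd x).log (hA x).ne'
  have hGd : ∀ x : ℝ, HasDerivAt (fun z : ℝ => Real.log (Real.log (1 + Real.exp (2 * z))))
      (g' x) x := fun x => (hLd x).log (hL x).ne'
  have hNd : ∀ x : ℝ, HasDerivAt (fun z : ℝ => 2 * Real.exp (2 * z))
      (2 * (2 * Real.exp (2 * x))) x := fun x => (hexp x).const_mul 2
  have hQd : ∀ x : ℝ, HasDerivAt (fun z : ℝ => 2 * Real.exp (2 * z) / (1 + Real.exp (2 * z)))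
      ((2 * (2 * Real.exp (2 * x)) * (1 + Real.exp (2 * x)) -
        2 * Real.exp (2 * x) * (2 * Real.exp (2 * x))) / (1 + Real.exp (2 * x)) ^ 2) x :=
    fun x => (hNd x).div (hAd x) (hA x).ne'
  have hGd2 : ∀ x : ℝ, HasDerivAt g' (g'' x) x := fun x => (hQd x).div (hLd x) (hL x).ne'
  refine concaveOn_of_hasDerivWithinAt2_nonpos (f' := g') (f'' := g'') convex_univ
    (fun x _ => (hGd x).continuousAt.continuousWithinAt) ?_ ?_ ?_
  · intro x _
    exact (hGd x).hasDerivWithinAt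
  · intro x _
    exact (hGd2 x).hasDerivWithinAt
  · intro x _
    set u := Real.exp (2 * x) with hu
    set L := Real.log (1 + u) with hLdef
    have hu0 : 0 < u := Real.exp_pos _
    have hA0 : 0 < 1 + u := hA x
    have hL0 : 0 < L := hL x
    have hLu : L ≤ u := by
      have := Real.log_le_sub_one_of_pos hA0
      simpa using this
    have key : g'' x = 4 * u * (L - u) / ((1 + u) ^ 2 * L ^ 2) := by
      rw [hg'']
      simp only [← hu, ← hLdef]
      field_simp
      ring
    rw [key]
    apply div_nonpos_of_nonpos_of_nonneg
    · nlinarith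
    · positivity
end
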